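/- arXiv:1507.04046 — 9 statements merged into one kernel-verified Lean document; each statement's English description precedes it below -/
import Mathlib

section
/- There exists a constant C > 0 such that for all integers n ≥ 2 and k ≥ 2 there is a distance labeling scheme, with labels of length at most ((k−1)/k)·log₂ n + log₂ k + C·log₂(1 + log₂ k), for paths with k nodes, positive integer edge weights, and total weight (diameter) less than n. Precisely: there exists a decoder d : List Bool → List Bool → ℕ such that for every weight function w : Fin (k−1) → ℕ with w t ≥ 1 for all t and Σ_t w t < n, there exists an encoder e : Fin k → List Bool with d (e i) (e j) = dist_w(i,j) for all i, j, and (e i).length ≤ ((k−1)/k)·log₂ n + log₂ k + C·log₂(1 + log₂ k) for all i. -/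
/-- The distance from node 0 to node `i` on a weighted path with `k` nodes and
edge weights `w`. -/
def pathD {k : ℕ} (w : Fin (k - 1) → ℕ) (i : Fin k) : ℕ :=
  ∑ t : Fin (k - 1), if (t : ℕ) < (i : ℕ) then w t else 0

/-- The distance between nodes `i` and `j` on a weighted path. -/
def pathDist {k : ℕ} (w : Fin (k - 1) → ℕ) (i j : Fin k) : ℕ :=
  ((pathD w j : ℤ) - (pathD w i : ℤ)).natAbs

/-!
Put `M = ⌊n ^ (1 / k)⌋` and let `D i` be the distance from node `0` to node `i`. Node `i` stores
`i` and `H i = ⌊D i / M⌋ + σ`, where the shift `σ < M ^ (k - 1)` is common to all nodes. The dropped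
residue `D i % M` is not lost: `σ` is chosen so that the base-`M` digit `i - 1` of `H i` equals it.
Such a `σ` is found digit by digit from the bottom, since adding a multiple of `M ^ (j + 1)` does not
change digit `j`. The decoder then recovers `M * H i + D i % M = D i + M * σ`, and differences of
these are the distances. Since `H i < n / M + M ^ (k - 1) ≤ 3 n ^ ((k - 1) / k)`, a label costs
`(k - 1) / k * log₂ n + log₂ k + O(1)` bits.
-/

open Real

def toBits (v : ℕ) : List Bool := (Nat.digits 2 v).map (· == 1)

def ofBits (l : List Bool) : ℕ := Nat.ofDigits 2 (l.map Bool.toNat)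

theorem ofBits_toBits (v : ℕ) : ofBits (toBits v) = v := by
  conv_rhs => rw [← Nat.ofDigits_digits 2 v]
  rw [ofBits, toBits, List.map_map]
  congr 1
  conv_rhs => rw [← List.map_id (Nat.digits 2 v)]
  refine List.map_congr_left fun d hd => ?_
  have : d < 2 := Nat.digits_lt_base (by norm_num) hd
  interval_cases d <;> rfl

theorem length_toBits_le_logb {v : ℕ} {B : ℝ} (hB : 1 ≤ B) (hv : (v : ℝ) ≤ B) :
    ((toBits v).length : ℝ) ≤ logb 2 B + 1 := by
  rcases eq_or_ne v 0 with rfl | hv0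
  · rw [toBits, Nat.digits_zero, List.map_nil, List.length_nil, Nat.cast_zero]
    linarith [logb_nonneg one_lt_two hB]
  · rw [toBits, List.length_map, Nat.length_digits 2 v one_lt_two hv0]
    have hlog : logb 2 v ≤ logb 2 B :=
      logb_le_logb_of_le one_lt_two (by positivity) hv
    have hnat := natLog_le_logb v 2
    push_cast at hnat ⊢
    linarith

theorem exists_shift_digit_eq {M : ℕ} (hM : 0 < M) (a b : ℕ → ℕ) (m : ℕ) :
    ∃ σ < M ^ m, ∀ j < m, (a j + σ) / M ^ j % M = b j % M := by
  induction m with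
  | zero => exact ⟨0, by simp, by simp⟩
  | succ m ih =>
    obtain ⟨σ, hσ, hdigit⟩ := ih
    set d := (a m + σ) / M ^ m % M
    set c := (b m % M + (M - d)) % M
    have hc : c < M := Nat.mod_lt _ hM
    refine ⟨σ + c * M ^ m, ?_, fun j hj => ?_⟩
    · calc σ + c * M ^ m < (c + 1) * M ^ m := by linarith
        _ ≤ M ^ (m + 1) := by rw [pow_succ']; exact Nat.mul_le_mul_right _ hc
    rw [← add_assoc]
    rcases (Nat.lt_succ_iff.1 hj).lt_or_eq with hj | rfl
    · have hmul : c * M ^ m = c * M ^ (m - j - 1) * M * M ^ j := by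
        rw [mul_assoc, mul_assoc, ← pow_succ', ← pow_add]; congr 2; omega
      rw [hmul, Nat.add_mul_div_right _ _ (pow_pos hM j), Nat.add_mul_mod_self_right,
        hdigit j hj]
    · have hd : d < M := Nat.mod_lt _ hM
      have hb : b j % M < M := Nat.mod_lt _ hM
      rw [Nat.add_mul_div_right _ _ (pow_pos hM j), Nat.add_mod, Nat.mod_mod]
      change (d + c) % M = b j % M
      rw [Nat.add_mod_mod, show d + (b j % M + (M - d)) = b j % M + M by omega,
        Nat.add_mod_right, Nat.mod_eq_of_lt hb]

def restoreResidue (M i H : ℕ) : ℕ := M * H + if i = 0 then 0 else H / M ^ (i - 1) % M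

def decodeLabel (M k : ℕ) (l : List Bool) : ℕ := restoreResidue M (ofBits l % k) (ofBits l / k)

def pathDecoder (M k : ℕ) (l l' : List Bool) : ℕ :=
  ((decodeLabel M k l' : ℤ) - decodeLabel M k l).natAbs

def pathLabel (M k σ i D : ℕ) : List Bool := toBits (i + k * (D / M + σ))

theorem exists_shift_decodeLabel_pathLabel {M : ℕ} (hM : 0 < M) (k : ℕ) {D : ℕ → ℕ}
    (hD : D 0 = 0) :
    ∃ σ < M ^ (k - 1), ∀ i < k, decodeLabel M k (pathLabel M k σ i (D i)) = D i + M * σ := by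
  obtain ⟨σ, hσ, hdigit⟩ :=
    exists_shift_digit_eq hM (fun j => D (j + 1) / M) (fun j => D (j + 1)) (k - 1)
  refine ⟨σ, hσ, fun i hi => ?_⟩
  rw [decodeLabel, pathLabel, ofBits_toBits, Nat.add_mul_mod_self_left, Nat.mod_eq_of_lt hi,
    Nat.add_mul_div_left _ _ (by omega), Nat.div_eq_of_lt hi, zero_add, restoreResidue]
  rcases i with _ | j
  · simp [hD]
  · rw [if_neg j.succ_ne_zero, Nat.add_sub_cancel, hdigit j (by omega), mul_add,
      add_right_comm, Nat.div_add_mod]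

theorem length_pathLabel_le {M k σ i D n : ℕ} (hM : 0 < M) (hi : i < k) (hD : D ≤ n)
    (hσ : σ < M ^ (k - 1)) :
    ((pathLabel M k σ i D).length : ℝ) ≤ logb 2 (k * ((n : ℝ) / M + (M : ℝ) ^ (k - 1))) + 1 := by
  have hlt : i + k * (D / M + σ) < k * (n / M + M ^ (k - 1)) := by
    have := Nat.div_le_div_right (c := M) hD
    nlinarith
  have hk : (1 : ℝ) ≤ k := by exact_mod_cast (show 1 ≤ k by omega)
  have hMpow : (1 : ℝ) ≤ (M : ℝ) ^ (k - 1) := one_le_pow₀ (by exact_mod_cast hM)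
  have hdiv : ((n / M : ℕ) : ℝ) ≤ (n : ℝ) / M := Nat.cast_div_le
  apply length_toBits_le_logb
  · nlinarith [show (0 : ℝ) ≤ n / M by positivity]
  · calc ((i + k * (D / M + σ) : ℕ) : ℝ) ≤ ((k * (n / M + M ^ (k - 1)) : ℕ) : ℝ) := by
          exact_mod_cast hlt.le
      _ ≤ k * ((n : ℝ) / M + (M : ℝ) ^ (k - 1)) := by
          push_cast; gcongr

theorem one_le_floor_rpow_inv {n : ℕ} (hn : 1 ≤ n) (k : ℕ) : 1 ≤ ⌊(n : ℝ) ^ (k : ℝ)⁻¹⌋₊ :=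
  Nat.one_le_floor_iff _ |>.2 <| one_le_rpow (by exact_mod_cast hn) (by positivity)

theorem logb_mul_div_floor_rpow_inv_add_pow_le {n k : ℕ} (hn : 1 ≤ n) (hk : k ≠ 0) :
    let M := ⌊(n : ℝ) ^ (k : ℝ)⁻¹⌋₊
    logb 2 (k * ((n : ℝ) / M + (M : ℝ) ^ (k - 1))) ≤
      ((k : ℝ) - 1) / k * logb 2 n + logb 2 k + 2 := by
  intro M
  set x := (n : ℝ) ^ (k : ℝ)⁻¹
  have hxk : x ^ k = n := rpow_inv_natCast_pow (Nat.cast_nonneg n) hk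
  have hM : (1 : ℝ) ≤ M := by exact_mod_cast one_le_floor_rpow_inv hn k
  have hMx : (M : ℝ) ≤ x := Nat.floor_le (by positivity)
  have hxM : x ≤ 2 * M := by linarith [Nat.lt_floor_add_one x]
  have hx : 0 < x := by linarith
  have hsum : (n : ℝ) / M + (M : ℝ) ^ (k - 1) ≤ 3 * x ^ (k - 1) := by
    have hdiv : (n : ℝ) / M ≤ 2 * x ^ (k - 1) := by
      have hsplit : x ^ k = x ^ (k - 1) * x := by
        rw [← pow_succ, Nat.sub_add_cancel (Nat.one_le_iff_ne_zero.2 hk)]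
      rw [div_le_iff₀ (by positivity), ← hxk, hsplit]
      nlinarith [pow_nonneg hx.le (k - 1)]
    linarith [pow_le_pow_left₀ (by positivity) hMx (k - 1)]
  have hlogn : logb 2 n = k * logb 2 x := by rw [← hxk, logb_pow]
  have hlog3 : logb 2 3 < 2 := by
    rw [logb_lt_iff_lt_rpow one_lt_two (by norm_num)]; norm_num
  calc logb 2 (k * ((n : ℝ) / M + (M : ℝ) ^ (k - 1)))
      ≤ logb 2 (k * (3 * x ^ (k - 1))) := by
        apply logb_le_logb_of_le one_lt_two (by positivity); gcongr
    _ = logb 2 k + logb 2 3 + ((k : ℝ) - 1) / k * logb 2 n := by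
        rw [logb_mul (by positivity) (by positivity), logb_mul (by positivity) (by positivity),
          logb_pow, hlogn, Nat.cast_pred (Nat.pos_of_ne_zero hk)]
        field_simp
        ring
    _ ≤ ((k : ℝ) - 1) / k * logb 2 n + logb 2 k + 2 := by linarith

theorem one_le_logb_one_add_logb {k : ℕ} (hk : 2 ≤ k) : 1 ≤ logb 2 (1 + logb 2 k) := by
  have hlogk : 1 ≤ logb 2 k := by
    rw [le_logb_iff_rpow_le one_lt_two (by positivity), rpow_one]
    exact_mod_cast hk
  rw [le_logb_iff_rpow_le one_lt_two (by positivity), rpow_one]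
  linarith

theorem pathD_le_sum {k : ℕ} (w : Fin (k - 1) → ℕ) (i : Fin k) : pathD w i ≤ ∑ t, w t :=
  Finset.sum_le_sum fun t _ => by split_ifs <;> simp

theorem weighted_path_bounded_diameter_upper_bound :
    ∃ C : ℝ, 0 < C ∧ ∀ n k : ℕ, 2 ≤ n → 2 ≤ k →
      ∃ d : List Bool → List Bool → ℕ,
        ∀ w : Fin (k - 1) → ℕ,
          (∀ t, 1 ≤ w t) → (∑ t : Fin (k - 1), w t) < n →
          ∃ e : Fin k → List Bool,
            (∀ i j : Fin k, d (e i) (e j) = pathDist w i j) ∧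
            ∀ i : Fin k, ((e i).length : ℝ) ≤
              ((k : ℝ) - 1) / (k : ℝ) * Real.logb 2 n + Real.logb 2 k +
                C * Real.logb 2 (1 + Real.logb 2 k) := by
  refine ⟨3, by norm_num, fun n k hn hk => ?_⟩
  set M := ⌊(n : ℝ) ^ (k : ℝ)⁻¹⌋₊
  have hM : 0 < M := one_le_floor_rpow_inv (by omega) k
  refine ⟨pathDecoder M k, fun w _ hsum => ?_⟩
  set D : ℕ → ℕ := fun j => if h : j < k then pathD w ⟨j, h⟩ else 0
  have hD : ∀ i : Fin k, D i = pathD w i := fun i => dif_pos i.2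
  obtain ⟨σ, hσ, hpos⟩ := exists_shift_decodeLabel_pathLabel hM k (D := D) (by simp [D, pathD])
  refine ⟨fun i => pathLabel M k σ i (D i), fun i j => ?_, fun i => ?_⟩
  · rw [pathDecoder, hpos i i.2, hpos j j.2, pathDist, ← hD, ← hD]
    push_cast
    congr 1
    ring
  · have hDn : D i ≤ n := by rw [hD]; exact (pathD_le_sum w i).trans hsum.le
    calc _ ≤ logb 2 (k * ((n : ℝ) / M + (M : ℝ) ^ (k - 1))) + 1 :=
          length_pathLabel_le hM i.2 hDn hσ
      _ ≤ ((k : ℝ) - 1) / k * logb 2 n + logb 2 k + 3 := by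
          linarith [logb_mul_div_floor_rpow_inv_add_pow_le (k := k) (by omega : 1 ≤ n) (by omega)]
      _ ≤ _ := by linarith [one_le_logb_one_add_logb hk]
end

section
/- Let k ≥ 1 and ℓ ≥ 1 be integers. For every function d : Fin k → ℕ there exists a natural number x with 2^ℓ ∣ x and x < 2^(k·ℓ) such that for every i with 1 ≤ i < k, the i-th block of ℓ binary digits of d i + x is all zeros, i.e. (⌊(d i + x) / 2^(i·ℓ)⌋) % 2^ℓ = 0. -/
/-!
Work in base `b = 2 ^ ℓ`, where the `i`-th segment of `y` is its `i`-th digit `y / b ^ i % b`.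
Build `x` digit by digit, from position `1` upwards: at position `n` add `c * b ^ n`, where
`c < b` is chosen so that digit `n` of `d n + x` becomes `0`. Adding a multiple of `b ^ n`
leaves the digits below position `n` unchanged, so the digits already cleared stay zero, and the
zeroth digit of `x` is never touched, so `b ∣ x`.
-/

namespace Nat

theorem add_sub_mod_mod_mod_self (a : ℕ) {b : ℕ} (hb : 0 < b) : (a + (b - a % b) % b) % b = 0 := by
  rw [add_mod_mod, ← mod_add_mod, Nat.add_sub_cancel' (mod_lt a hb).le, mod_self]

theorem add_mul_pow_div_pow_mod_of_lt (y c : ℕ) {b i j : ℕ} (hb : 0 < b) (hij : i < j) :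
    (y + c * b ^ j) / b ^ i % b = y / b ^ i % b := by
  obtain ⟨t, rfl⟩ := exists_add_of_le (succ_le_of_lt hij)
  have hpow : c * b ^ (i + 1 + t) = (c * b ^ t) * b * b ^ i := by ring
  rw [hpow, add_mul_div_right _ _ (pow_pos hb i), add_mul_mod_self_right]

theorem exists_dvd_lt_pow_add_div_pow_mod_eq_zero {b : ℕ} (hb : 0 < b) (f : ℕ → ℕ) (n : ℕ) :
    ∃ x, b ∣ x ∧ x < b ^ (n + 1) ∧ ∀ i, 1 ≤ i → i ≤ n → (f i + x) / b ^ i % b = 0 := by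
  induction n with
  | zero => exact ⟨0, dvd_zero b, by simpa using hb, fun i hi hi0 => by omega⟩
  | succ n ih =>
    obtain ⟨x, hdvd, hlt, hdigit⟩ := ih
    set c := (b - (f (n + 1) + x) / b ^ (n + 1) % b) % b
    have hc : c < b := mod_lt _ hb
    refine ⟨x + c * b ^ (n + 1), ?_, ?_, fun i hi hin => ?_⟩
    · exact dvd_add hdvd (Dvd.dvd.mul_left (dvd_pow_self b n.succ_ne_zero) c)
    · calc x + c * b ^ (n + 1) < (c + 1) * b ^ (n + 1) := by linarith
        _ ≤ b * b ^ (n + 1) := Nat.mul_le_mul_right _ hc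
        _ = b ^ (n + 1 + 1) := by ring
    · rcases Nat.lt_or_eq_of_le hin with hin | rfl
      · rw [← add_assoc, add_mul_pow_div_pow_mod_of_lt _ _ hb hin]
        exact hdigit i hi (by omega)
      · rw [← add_assoc, add_mul_div_right _ _ (pow_pos hb _)]
        exact add_sub_mod_mod_mod_self _ hb

end Nat

theorem exists_shift_zeroing_segments_general (k ℓ : ℕ)
    (d : Fin k → ℕ) :
    ∃ x : ℕ, 2 ^ ℓ ∣ x ∧ x < 2 ^ (k * ℓ) ∧
      ∀ i : Fin k, 1 ≤ (i : ℕ) →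
        ((d i + x) / 2 ^ ((i : ℕ) * ℓ)) % 2 ^ ℓ = 0 := by
  rcases k with _ | n
  · exact ⟨0, dvd_zero _, by simp, fun i => i.elim0⟩
  · obtain ⟨x, hdvd, hlt, hdigit⟩ := Nat.exists_dvd_lt_pow_add_div_pow_mod_eq_zero
      (Nat.two_pow_pos ℓ) (fun i => if h : i < n + 1 then d ⟨i, h⟩ else 0) n
    refine ⟨x, hdvd, by rwa [pow_mul'], fun i hi => ?_⟩
    simpa [pow_mul', i.is_le] using hdigit i hi i.is_le

theorem exists_shift_zeroing_segments (k ℓ : ℕ) (hk : 1 ≤ k) (hℓ : 1 ≤ ℓ)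
    (d : Fin k → ℕ) :
    ∃ x : ℕ, 2 ^ ℓ ∣ x ∧ x < 2 ^ (k * ℓ) ∧
      ∀ i : Fin k, 1 ≤ (i : ℕ) →
        ((d i + x) / 2 ^ ((i : ℕ) * ℓ)) % 2 ^ ℓ = 0 :=
  exists_shift_zeroing_segments_general k ℓ d
end

section
/- There exists a constant C > 0 such that for all integers n ≥ 2 and k ≥ 2 the following holds: for every decoder d : List Bool → List Bool → ℕ and every family of encoders assigning to each weight function w : Fin (k−1) → ℕ with 1 ≤ w t ≤ n an encoder e_w : Fin k → List Bool satisfying d (e_w i) (e_w j) = dist_w(i,j) for all i, j, there exist a weight function w and a node i such that (e_w i).length ≥ ((k−1)/k)·log₂ n + log₂ k − C. -/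
/-!
Distinct nodes get distinct labels, and the set of labels of a path together with the label of
its first node determines the weights: decoding distances from the first node yields the set of
node positions, whose increasing enumeration is `pathD w`. So if no label is longer than `m`, the
`n ^ (k - 1)` admissible weight functions inject into pairs (a `k`-subset of the fewer than
`2 ^ (m + 1)` strings of length at most `m`, one of its elements), whence
`n ^ (k - 1) ≤ k * (exp 1 * 2 ^ (m + 1) / k) ^ k`; taking logarithms gives the bound with `C = 4`.
-/

open Finset Function

section PathMetric

variable {k : ℕ} {w : Fin (k - 1) → ℕ} {i j : Fin k}

lemma pathD_of_val_eq_zero (hi : (i : ℕ) = 0) : pathD w i = 0 :=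
  Finset.sum_eq_zero fun t _ => by simp [hi]

lemma pathD_eq_add_of_val_eq_succ {t : Fin (k - 1)} (hi : (i : ℕ) = t)
    (hj : (j : ℕ) = t + 1) : pathD w j = pathD w i + w t := by
  have split : ∀ s : Fin (k - 1), (if (s : ℕ) < j then w s else 0) =
      (if (s : ℕ) < i then w s else 0) + if s = t then w s else 0 := by
    intro s
    split_ifs <;> simp only [Fin.ext_iff] at * <;> omega
  simp only [pathD, split, sum_add_distrib, sum_ite_eq', mem_univ, if_true]

lemma pathD_strictMono (hw : ∀ t, 1 ≤ w t) : StrictMono (pathD w) := by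
  intro i j hij
  refine sum_lt_sum (fun t _ => ?_) ⟨⟨i, by omega⟩, mem_univ _, ?_⟩
  · split_ifs <;> omega
  · simp only [lt_irrefl, if_false, Fin.lt_def.mp hij, if_true]
    exact hw _

lemma pathD_injective : Injective (pathD (k := k)) := by
  intro w w' h
  funext t
  have step (v : Fin (k - 1) → ℕ) :=
    pathD_eq_add_of_val_eq_succ (w := v) (i := ⟨t, by omega⟩) (j := ⟨t + 1, by omega⟩) rfl rfl
  have := step w
  rw [h, step w'] at this
  omega

lemma pathDist_self : pathDist w i i = 0 := by
  simp [pathDist]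

lemma pathDist_eq_zero_iff : pathDist w i j = 0 ↔ pathD w i = pathD w j := by
  simp [pathDist, sub_eq_zero, eq_comm]

lemma pathDist_of_val_eq_zero (hi : (i : ℕ) = 0) : pathDist w i j = pathD w j := by
  simp [pathDist, pathD_of_val_eq_zero hi]

end PathMetric

def IsPathLabeling {L : Type*} {k : ℕ} (d : L → L → ℕ) (w : Fin (k - 1) → ℕ)
    (e : Fin k → L) : Prop :=
  ∀ i j, d (e i) (e j) = pathDist w i j

namespace IsPathLabeling

variable {L : Type*} {k : ℕ} {d : L → L → ℕ} {w w' : Fin (k - 1) → ℕ} {e e' : Fin k → L}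

lemma injective (he : IsPathLabeling d w e) (hw : ∀ t, 1 ≤ w t) : Injective e := by
  intro i j hij
  have hdist : pathDist w i j = 0 := by rw [← he, hij, he, pathDist_self]
  exact (pathD_strictMono hw).injective (pathDist_eq_zero_iff.mp hdist)

lemma range_pathD_eq (he : IsPathLabeling d w e) {i₀ : Fin k} (hi₀ : (i₀ : ℕ) = 0) :
    Set.range (pathD w) = d (e i₀) '' Set.range e := by
  rw [← Set.range_comp]
  congr 1
  funext i
  rw [comp_apply, he, pathDist_of_val_eq_zero hi₀]

lemma weights_eq (he : IsPathLabeling d w e) (he' : IsPathLabeling d w' e')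
    (hw : ∀ t, 1 ≤ w t) (hw' : ∀ t, 1 ≤ w' t) (hrange : Set.range e = Set.range e')
    {i₀ : Fin k} (hi₀ : (i₀ : ℕ) = 0) (h₀ : e i₀ = e' i₀) : w = w' := by
  apply pathD_injective
  rw [← (pathD_strictMono hw).range_inj (pathD_strictMono hw'), he.range_pathD_eq hi₀,
    he'.range_pathD_eq hi₀, hrange, h₀]

end IsPathLabeling

theorem Finset.card_le_mul_choose_of_injective_labels {α β : Type*} [DecidableEq β] {k : ℕ}
    {A : Finset α} {U : Finset β} (f : α → Fin k → β) (hf : ∀ a ∈ A, Injective (f a))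
    (hU : ∀ a ∈ A, ∀ i, f a i ∈ U) (i₀ : Fin k)
    (hA : ∀ a ∈ A, ∀ b ∈ A, Set.range (f a) = Set.range (f b) → f a i₀ = f b i₀ → a = b) :
    #A ≤ k * (#U).choose k := by
  let T := (U.powersetCard k).sigma fun S => S
  have hT : #T = k * (#U).choose k := by
    rw [card_sigma, sum_congr rfl fun S hS => (mem_powersetCard.mp hS).2, sum_const,
      card_powersetCard, smul_eq_mul, mul_comm]
  rw [← hT]
  refine card_le_card_of_injOn (fun a => ⟨univ.image (f a), f a i₀⟩) (fun a ha => ?_) ?_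
  · simp only [T, coe_sigma, Set.mem_sigma_iff, mem_coe, mem_powersetCard]
    refine ⟨⟨fun x hx => ?_, ?_⟩, mem_image_of_mem _ (mem_univ i₀)⟩
    · obtain ⟨i, -, rfl⟩ := mem_image.mp hx
      exact hU a ha i
    · rw [card_image_of_injective _ (hf a ha), card_univ, Fintype.card_fin]
  · intro a ha b hb hab
    simp only [Sigma.mk.inj_iff, heq_eq_eq] at hab
    refine hA a ha b hb ?_ hab.2
    simpa [Set.image_univ] using congrArg (fun S : Finset β => (S : Set β)) hab.1

lemma exists_finset_bool_lists_length_le (m : ℕ) :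
    ∃ U : Finset (List Bool), (∀ l : List Bool, l.length ≤ m → l ∈ U) ∧
      #U < 2 ^ (m + 1) := by
  refine ⟨(range (m + 1)).biUnion fun i => univ.image fun v : List.Vector Bool i => v.toList,
    fun l hl => ?_, ?_⟩
  · simp only [mem_biUnion, mem_range, mem_image, mem_univ, true_and]
    exact ⟨l.length, by omega, ⟨l, rfl⟩, rfl⟩
  · calc _ ≤ ∑ i ∈ range (m + 1), 2 ^ i := by
          refine card_biUnion_le.trans (sum_le_sum fun i _ => card_image_le.trans ?_)
          simp [card_vector]
      _ < 2 ^ (m + 1) := Nat.geomSum_lt le_rfl (by simp)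

open Real in
lemma Nat.choose_le_exp_one_mul_div_pow (N k : ℕ) :
    (N.choose k : ℝ) ≤ (exp 1 * N / k) ^ k := by
  rcases Nat.eq_zero_or_pos k with rfl | hk
  · simp
  have hfact : (k : ℝ) ^ k / k.factorial ≤ exp 1 ^ k := by
    simpa [← exp_nat_mul] using Real.pow_div_factorial_le_exp _ (Nat.cast_nonneg k) k
  calc (N.choose k : ℝ) ≤ N ^ k / k.factorial := Nat.choose_le_pow_div k N
    _ = N ^ k / k ^ k * (k ^ k / k.factorial) := by field_simp
    _ ≤ N ^ k / k ^ k * exp 1 ^ k := by gcongr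
    _ = (exp 1 * N / k) ^ k := by rw [div_pow, mul_pow]; ring

open Real in
lemma logb_le_of_pow_le_mul_choose {n k N : ℕ} (hn : 0 < n) (hk : 0 < k)
    (h : n ^ (k - 1) ≤ k * N.choose k) :
    ((k : ℝ) - 1) / k * logb 2 n + logb 2 k ≤ logb 2 N + 3 := by
  have hN : 0 < N := Nat.pos_of_ne_zero fun hN => by
    rw [hN, Nat.choose_eq_zero_of_lt hk, mul_zero] at h
    exact (pow_pos hn _).ne' (Nat.le_zero.mp h)
  have hreal : (n : ℝ) ^ (k - 1) ≤ k * (exp 1 * N / k) ^ k :=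
    calc (n : ℝ) ^ (k - 1) ≤ k * N.choose k := by exact_mod_cast h
      _ ≤ k * (exp 1 * N / k) ^ k := by gcongr; exact Nat.choose_le_exp_one_mul_div_pow N k
  have hlog := logb_le_logb_of_le one_lt_two (by positivity) hreal
  rw [logb_mul (by positivity) (by positivity), logb_pow, logb_pow,
    logb_div (by positivity) (by positivity), logb_mul (by positivity) (by positivity),
    Nat.cast_sub hk, Nat.cast_one] at hlog
  -- hlog : (k - 1) * logb 2 n ≤ logb 2 k + k * (logb 2 (exp 1) + logb 2 N - logb 2 k)
  have hexp : logb 2 (exp 1) ≤ 2 := by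
    rw [logb_le_iff_le_rpow one_lt_two (exp_pos 1), show (2 : ℝ) ^ (2 : ℝ) = 4 by norm_num]
    linarith [exp_one_lt_d9]
  have hlogk : logb 2 k ≤ k := by
    rw [logb_le_iff_le_rpow one_lt_two (by positivity), rpow_natCast]
    exact_mod_cast (Nat.lt_two_pow_self).le
  have hkR : (0 : ℝ) < k := by exact_mod_cast hk
  rw [div_mul_eq_mul_div, div_add' _ _ _ hkR.ne', div_le_iff₀ hkR]
  nlinarith

theorem weighted_path_lower_bound :
    ∃ C : ℝ, 0 < C ∧ ∀ n k : ℕ, 2 ≤ n → 2 ≤ k →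
      ∀ d : List Bool → List Bool → ℕ,
      ∀ e : (Fin (k - 1) → ℕ) → Fin k → List Bool,
        (∀ w : Fin (k - 1) → ℕ, (∀ t, 1 ≤ w t ∧ w t ≤ n) →
          ∀ i j : Fin k, d (e w i) (e w j) = pathDist w i j) →
        ∃ w : Fin (k - 1) → ℕ, (∀ t, 1 ≤ w t ∧ w t ≤ n) ∧
          ∃ i : Fin k, ((e w i).length : ℝ) ≥
            ((k : ℝ) - 1) / (k : ℝ) * Real.logb 2 n + Real.logb 2 k - C := by
  refine ⟨4, by norm_num, fun n k hn hk d e he => ?_⟩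
  let A := Fintype.piFinset fun _ : Fin (k - 1) => Icc 1 n
  have mem_A {w} : w ∈ A ↔ ∀ t, 1 ≤ w t ∧ w t ≤ n := by simp [A]
  have labeling {w} (hw : w ∈ A) : IsPathLabeling d w (e w) := he w (mem_A.mp hw)
  have pos {w} (hw : w ∈ A) t : 1 ≤ w t := (mem_A.mp hw t).1
  obtain ⟨⟨w, i⟩, hwi, longest⟩ :=
    (A ×ˢ univ).exists_max_image (fun p => (e p.1 p.2).length)
      ⟨(fun _ => 1, ⟨0, by omega⟩),
        mem_product.mpr ⟨mem_A.mpr fun _ => ⟨le_rfl, one_le_two.trans hn⟩, mem_univ _⟩⟩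
  refine ⟨w, mem_A.mp (mem_product.mp hwi).1, i, ?_⟩
  obtain ⟨U, hU, hUcard⟩ := exists_finset_bool_lists_length_le (e w i).length
  have hcount : n ^ (k - 1) ≤ k * (2 ^ ((e w i).length + 1)).choose k :=
    calc n ^ (k - 1) = #A := by simp [A]
      _ ≤ k * (#U).choose k :=
        card_le_mul_choose_of_injective_labels e (fun v hv => (labeling hv).injective (pos hv))
          (fun v hv j => hU _ (longest (v, j) (mem_product.mpr ⟨hv, mem_univ j⟩)))
          ⟨0, by omega⟩ fun v hv v' hv' hrange h₀ =>
            (labeling hv).weights_eq (labeling hv') (pos hv) (pos hv') hrange rfl h₀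
      _ ≤ _ := Nat.mul_le_mul_left _ (Nat.choose_le_choose _ hUcard.le)
  have hlog := logb_le_of_pow_le_mul_choose (by omega) (by omega) hcount
  rw [Nat.cast_pow, Nat.cast_ofNat, Real.logb_pow, Real.logb_self_eq_one one_lt_two] at hlog
  push_cast at hlog
  linarith
end

section
/- There exists a constant C > 0 such that for every integer n ≥ 16 there is a distance labeling scheme for caterpillars on n vertices with all labels of length at most 2·log₂ n − log₂ log₂ n + C·log₂ log₂ log₂ n. Precisely: there exists a decoder d : List Bool → List Bool → ℕ such that for every caterpillar G on Fin n there exists an encoder e : Fin n → List Bool with d (e u) (e v) = G.dist u v for all u, v, and (e u).length ≤ 2·log₂ n − log₂ log₂ n + C·log₂ log₂ log₂ n for all u. -/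
/-!
In a caterpillar every vertex `u` sits at a spine position `i u` (its own, or that of its unique
neighbour) and `dist u v = |i u - i v| + [u is a leaf] + [v is a leaf]` for `u ≠ v`. A label stores
`i u` in `log n + 2` bits, the leaf bit, and the index of `u` among the vertices at position `i u`,
which costs the logarithm of the size of that fiber. Only fibers of size more than about
`n (log log n)^6 / log n` need a longer index, and there are at most about
`log n / (log log n)^6` of them. All positions are shifted by a common `t`, invisible to a decoder
that compares positions modulo `2 ^ (log n + 2)`; `t` is chosen so that the position of the `j`-th
heavy fiber has `2 I` zero bits at level `j`, where `I ≈ log log n - 6 log log log n`. Cutting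
these out and writing `j` in `I` bits instead saves `I` bits, which pays for the longer index.
-/

/-- A caterpillar on `Fin n`: a tree in which the non-leaf vertices form a path
(the spine). Formally: a tree together with an injective path `p : Fin m → Fin n`
(`m ≥ 1`) of consecutively adjacent vertices such that every vertex outside the
range of `p` has degree 1. -/
def IsCaterpillar {n : ℕ} (G : SimpleGraph (Fin n)) : Prop :=
  G.IsTree ∧ ∃ m : ℕ, 1 ≤ m ∧ ∃ p : Fin m → Fin n, Function.Injective p ∧
    (∀ i : Fin m, ∀ h : (i : ℕ) + 1 < m, G.Adj (p i) (p ⟨(i : ℕ) + 1, h⟩)) ∧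
    ∀ v : Fin n, v ∉ Set.range p → (G.neighborSet v).ncard = 1

namespace SimpleGraph

variable {V : Type*} {G : SimpleGraph V}

lemma IsAcyclic.dist_eq_length_of_isPath (hG : G.IsAcyclic) {u v : V} {w : G.Walk u v}
    (hw : w.IsPath) : G.dist u v = w.length := by
  obtain ⟨q, hq, hql⟩ := w.reachable.exists_path_of_dist
  have hqw : q = w := congrArg Subtype.val ((hG.subsingleton_path u v).elim ⟨q, hq⟩ ⟨w, hw⟩)
  rw [← hql, hqw]

lemma dist_eq_dist_add_one_of_neighborSet_eq_singleton (hG : G.Connected) {v b x : V}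
    (hv : G.neighborSet v = {b}) (hx : x ≠ v) : G.dist v x = G.dist b x + 1 := by
  have hvb : G.Adj v b := (Set.ext_iff.1 hv b).2 rfl
  obtain ⟨w, hw⟩ := hG.exists_walk_length_eq_dist v x
  cases w with
  | nil => exact absurd rfl hx
  | cons hvc w' =>
    obtain rfl := (Set.ext_iff.1 hv _).1 hvc
    refine le_antisymm ?_ ?_
    · calc G.dist v x ≤ G.dist v _ + G.dist _ x := hG.dist_triangle
        _ = _ := by rw [dist_eq_one_iff_adj.2 hvb, add_comm]
    · rw [← hw, Walk.length_cons]
      exact Nat.succ_le_succ (dist_le w')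

section Spine

variable {m : ℕ} {p : Fin m → V}

lemma exists_isPath_of_adj_succ (hp : p.Injective)
    (hadj : ∀ i : Fin m, ∀ h : (i : ℕ) + 1 < m, G.Adj (p i) (p ⟨(i : ℕ) + 1, h⟩)) (i : Fin m) :
    ∀ (d : ℕ) (j : Fin m), (j : ℕ) = i + d →
      ∃ w : G.Walk (p i) (p j), w.IsPath ∧ w.length = d ∧ ∀ x ∈ w.support, ∃ k ≤ j, p k = x := by
  intro d
  induction d with
  | zero =>
    intro j hj
    obtain rfl : j = i := Fin.ext hj
    exact ⟨.nil, .nil, rfl, fun x hx => ⟨j, le_rfl, (List.mem_singleton.1 hx).symm⟩⟩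
  | succ d ih =>
    intro j hj
    obtain ⟨w, hw, hlen, hsupp⟩ := ih ⟨i + d, by omega⟩ rfl
    have hlast : G.Adj (p ⟨i + d, by omega⟩) (p j) := by
      convert hadj ⟨i + d, by omega⟩ (by simp only; omega) using 2
      exact Fin.ext (by simp only; omega)
    refine ⟨w.concat hlast, hw.concat ?_ hlast, by simp [hlen], ?_⟩
    · intro hmem
      obtain ⟨k, hk, hpk⟩ := hsupp _ hmem
      have := congrArg Fin.val (hp hpk)
      simp only [Fin.le_def] at hk
      omega
    · intro x hx
      rw [Walk.support_concat, List.mem_append, List.mem_singleton] at hx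
      rcases hx with hx | rfl
      · obtain ⟨k, hk, rfl⟩ := hsupp x hx
        exact ⟨k, le_trans hk (by simp only [Fin.le_def]; omega), rfl⟩
      · exact ⟨j, le_rfl, rfl⟩

lemma IsAcyclic.dist_eq_natAbs_sub_of_adj_succ (hG : G.IsAcyclic) (hp : p.Injective)
    (hadj : ∀ i : Fin m, ∀ h : (i : ℕ) + 1 < m, G.Adj (p i) (p ⟨(i : ℕ) + 1, h⟩)) (i j : Fin m) :
    G.dist (p i) (p j) = ((i : ℤ) - j).natAbs := by
  wlog hij : i ≤ j generalizing i j
  · rw [dist_comm, this j i (le_of_not_ge hij)]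
    omega
  obtain ⟨w, hw, hlen, -⟩ :=
    exists_isPath_of_adj_succ hp hadj i (j - i : ℕ) j (by simp only [Fin.le_def] at hij; omega)
  rw [hG.dist_eq_length_of_isPath hw, hlen]
  omega

lemma exists_neighborSet_eq_singleton_of_notMem_range (hG : G.Connected) (i₀ : Fin m)
    (hleaf : ∀ v, v ∉ Set.range p → (G.neighborSet v).ncard = 1) {v : V}
    (hv : v ∉ Set.range p) : ∃ i, G.neighborSet v = {p i} := by
  obtain ⟨b, hb⟩ := Set.ncard_eq_one.1 (hleaf v hv)
  by_contra! hne
  have hbp : b ∉ Set.range p := by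
    rintro ⟨i, rfl⟩
    exact hne i hb
  obtain ⟨c, hc⟩ := Set.ncard_eq_one.1 (hleaf b hbp)
  obtain rfl : v = c := (Set.ext_iff.1 hc v).1 (G.adj_symm ((Set.ext_iff.1 hb b).2 rfl))
  -- `{v, b}` is closed under adjacency, so it would contain the spine
  have hclosed : ∀ w, Relation.ReflTransGen G.Adj v w → w = v ∨ w = b := by
    intro w hw
    induction hw with
    | refl => exact .inl rfl
    | tail _ hxy ih =>
      rcases ih with rfl | rfl
      · exact .inr ((Set.ext_iff.1 hb _).1 hxy)
      · exact .inl ((Set.ext_iff.1 hc _).1 hxy)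
  rcases hclosed _ ((reachable_iff_reflTransGen _ _).1 (hG v (p i₀))) with h | h
  · exact hv ⟨i₀, h⟩
  · exact hbp ⟨i₀, h⟩

end Spine

end SimpleGraph

open SimpleGraph in
lemma IsCaterpillar.exists_dist_eq {n : ℕ} {G : SimpleGraph (Fin n)} (hG : IsCaterpillar G) :
    ∃ (pos : Fin n → ℕ) (leaf : Fin n → Bool), (∀ u, pos u < n) ∧ ∀ u v, u ≠ v →
      G.dist u v = ((pos u : ℤ) - pos v).natAbs + (leaf u).toNat + (leaf v).toNat := by
  classical
  obtain ⟨hT, m, hm, p, hp, hadj, hleaf⟩ := hG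
  have hanchor : ∀ v, ∃ i : Fin m,
      (v ∈ Set.range p → p i = v) ∧ (v ∉ Set.range p → G.neighborSet v = {p i}) := by
    intro v
    by_cases hv : v ∈ Set.range p
    · obtain ⟨i, rfl⟩ := hv
      exact ⟨i, fun _ => rfl, fun h => absurd ⟨i, rfl⟩ h⟩
    · obtain ⟨i, hi⟩ :=
        exists_neighborSet_eq_singleton_of_notMem_range hT.connected ⟨0, hm⟩ hleaf hv
      exact ⟨i, fun h => absurd h hv, fun _ => hi⟩
  choose a ha using hanchor
  let leaf v := decide (v ∉ Set.range p)
  have hstep : ∀ v x, (x ≠ v ∨ x ∈ Set.range p) →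
      G.dist v x = (leaf v).toNat + G.dist (p (a v)) x := by
    intro v x hx
    by_cases hv : v ∈ Set.range p
    · rw [show leaf v = false from decide_eq_false (not_not.2 hv), (ha v).1 hv,
        Bool.toNat_false, zero_add]
    · have hxv : x ≠ v := hx.elim id fun hx' h => hv (h ▸ hx')
      rw [dist_eq_dist_add_one_of_neighborSet_eq_singleton hT.connected ((ha v).2 hv) hxv,
        show leaf v = true from decide_eq_true hv, Bool.toNat_true, add_comm]
  have hmn : m ≤ n := by simpa using Fintype.card_le_of_injective p hp
  refine ⟨fun u => a u, leaf, fun u => (a u).isLt.trans_le hmn, fun u v huv => ?_⟩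
  rw [hstep u v (.inl huv.symm), G.dist_comm, hstep v _ (.inr ⟨a u, rfl⟩),
    hT.isAcyclic.dist_eq_natAbs_sub_of_adj_succ hp hadj]
  dsimp only
  omega

namespace CaterpillarLabeling

open Finset

def toBits : ℕ → ℕ → List Bool
  | 0, _ => []
  | w + 1, x => decide (x % 2 = 1) :: toBits w (x / 2)

def ofBits : List Bool → ℕ
  | [] => 0
  | b :: r => b.toNat + 2 * ofBits r

@[simp] lemma length_toBits (w x : ℕ) : (toBits w x).length = w := by
  induction w generalizing x with
  | zero => rfl
  | succ w ih => simp [toBits, ih]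

lemma ofBits_toBits {w x : ℕ} (hx : x < 2 ^ w) : ofBits (toBits w x) = x := by
  induction w generalizing x with
  | zero => simp_all [toBits, ofBits]
  | succ w ih =>
    rw [toBits, ofBits, ih (by rw [pow_succ] at hx; omega)]
    rcases Nat.mod_two_eq_zero_or_one x with h | h <;> simp [h] <;> omega

lemma ofBits_take_toBits_append {w x : ℕ} (hx : x < 2 ^ w) (r : List Bool) :
    ofBits ((toBits w x ++ r).take w) = x := by
  rw [List.take_left' (length_toBits w x), ofBits_toBits hx]

lemma drop_toBits_append (w x : ℕ) (r : List Bool) : (toBits w x ++ r).drop w = r :=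
  List.drop_left' (length_toBits w x)

/-- Removes from `s` its digits between the place values `P` and `P * B`. -/
def cutBand (s P B : ℕ) : ℕ := s % P + P * (s / (P * B))

def fillBand (v P B : ℕ) : ℕ := v % P + P * B * (v / P)

lemma fillBand_cutBand {s P B : ℕ} (hP : 0 < P) (hs : s % (P * B) < P) :
    fillBand (cutBand s P B) P B = s := by
  have hmod : s % (P * B) = s % P := by
    rw [← Nat.mod_eq_of_lt hs, Nat.mod_mod_of_dvd _ (dvd_mul_right P B)]
  have hlo : s % P < P := Nat.mod_lt _ hP
  rw [fillBand, cutBand, Nat.add_mul_div_left _ _ hP, Nat.div_eq_of_lt hlo, zero_add,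
    Nat.add_mul_mod_self_left, Nat.mod_eq_of_lt hlo, ← hmod, Nat.mod_add_div]

lemma cutBand_lt {s P B R : ℕ} (hs : s < P * B * R) : cutBand s P B < P * R := by
  have hP : 0 < P := Nat.pos_of_ne_zero (by rintro rfl; simp at hs)
  have hq : s / (P * B) < R := Nat.div_lt_of_lt_mul hs
  calc cutBand s P B < P + P * (s / (P * B)) := by
        unfold cutBand; exact Nat.add_lt_add_right (Nat.mod_lt _ hP) _
    _ ≤ P * R := by nlinarith

lemma exists_add_mul_mod_lt {P B : ℕ} (hP : 0 < P) (hB : 0 < B) (a : ℕ) :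
    ∃ c, (a + P * c) % (P * B) < P := by
  refine ⟨(B - 1) * (a / P), ?_⟩
  obtain ⟨B, rfl⟩ := Nat.exists_eq_add_one.2 hB
  have h : a + P * ((B + 1 - 1) * (a / P)) = a % P + P * (B + 1) * (a / P) := by
    nth_rewrite 1 [← Nat.mod_add_div a P]
    simp only [Nat.add_sub_cancel]
    ring
  rw [h, Nat.add_mul_mod_self_left, Nat.mod_eq_of_lt (by nlinarith [Nat.mod_lt a hP])]
  exact Nat.mod_lt a hP

/-- The correction made for level `j` is a multiple of `B ^ j`, so it leaves the lower levels
alone. -/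
lemma exists_shift_mod_pow_lt {B : ℕ} (hB : 0 < B) (x : ℕ → ℕ) (K : ℕ) :
    ∃ t, ∀ j < K, (x j + t) % B ^ (j + 1) < B ^ j := by
  induction K with
  | zero => exact ⟨0, by simp⟩
  | succ K ih =>
    obtain ⟨t, ht⟩ := ih
    obtain ⟨c, hc⟩ := exists_add_mul_mod_lt (pow_pos hB K) hB (x K + t)
    refine ⟨t + B ^ K * c, fun j hj => ?_⟩
    rw [← add_assoc]
    rcases Nat.lt_succ_iff_lt_or_eq.1 hj with hj | rfl
    · obtain ⟨r, hr⟩ := pow_dvd_pow B (Nat.succ_le_of_lt hj)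
      rw [hr, mul_assoc, Nat.add_mul_mod_self_left]
      exact ht j hj
    · rwa [pow_succ]

lemma exists_shift_levels (H : Finset ℕ) {B : ℕ} (hB : 0 < B) :
    ∃ (t : ℕ) (lev : ℕ → ℕ), ∀ i ∈ H, lev i < #H ∧ (i + t) % B ^ (lev i + 1) < B ^ lev i := by
  obtain ⟨t, ht⟩ := exists_shift_mod_pow_lt hB (fun j => H.toList.getD j 0) #H
  refine ⟨t, H.toList.idxOf, fun i hi => ?_⟩
  have hlt : H.toList.idxOf i < #H := by
    rw [← H.length_toList]
    exact List.idxOf_lt_length_of_mem (H.mem_toList.2 hi)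
  have hx : H.toList.getD (H.toList.idxOf i) 0 = i := by
    rw [List.getD_eq_getElem _ _ (H.length_toList ▸ hlt), List.getElem_idxOf]
  have h := ht _ hlt
  rw [hx] at h
  exact ⟨hlt, h⟩

def cycDist (M a b : ℕ) : ℕ := ((a : ZMod M) - b).valMinAbs.natAbs

lemma cycDist_add_mod (t : ℕ) {M i j : ℕ} (hi : 2 * i < M) (hj : 2 * j < M) :
    cycDist M ((i + t) % M) ((j + t) % M) = ((i : ℤ) - j).natAbs := by
  have : NeZero M := ⟨by omega⟩
  have hsub : ((((i + t) % M : ℕ) : ZMod M) - (((j + t) % M : ℕ) : ZMod M))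
      = (((i : ℤ) - j : ℤ) : ZMod M) := by
    push_cast [ZMod.natCast_mod]
    ring
  rw [cycDist, hsub, (ZMod.valMinAbs_spec _ _).2 ⟨rfl, by constructor <;> omega⟩]

def lightLabel (Λ : ℕ) (leaf : Bool) (s k : ℕ) : List Bool :=
  false :: leaf :: (toBits Λ s ++ toBits k.size k)

/-- The band of width `2 * I` at level `j` of `s` is zero and is cut out, and `j` is stored in `I`
bits instead. The `I` bits saved pay for the index `k`, which is up to `I` bits longer than in a
light fiber. -/
def heavyLabel (Λ I : ℕ) (leaf : Bool) (j s k : ℕ) : List Bool :=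
  true :: leaf ::
    (toBits I j ++ (toBits (Λ - 2 * I) (cutBand s ((2 ^ (2 * I)) ^ j) (2 ^ (2 * I))) ++
      toBits k.size k))

def readPos (Λ I : ℕ) : List Bool → ℕ
  | false :: _ :: r => ofBits (r.take Λ)
  | true :: _ :: r =>
    fillBand (ofBits ((r.drop I).take (Λ - 2 * I))) ((2 ^ (2 * I)) ^ ofBits (r.take I))
      (2 ^ (2 * I))
  | _ => 0

def readIndex (Λ I : ℕ) : List Bool → ℕ
  | false :: _ :: r => ofBits (r.drop Λ)
  | true :: _ :: r => ofBits ((r.drop I).drop (Λ - 2 * I))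
  | _ => 0

def readLeaf : List Bool → Bool
  | _ :: b :: _ => b
  | _ => false

/-- Positions are compared cyclically, so the shift chosen by the encoder cancels. -/
def decode (Λ I : ℕ) (x y : List Bool) : ℕ :=
  if x = y then 0
  else cycDist (2 ^ Λ) (readPos Λ I x) (readPos Λ I y) + (readLeaf x).toNat + (readLeaf y).toNat

section Labels

variable {Λ I : ℕ} {b : Bool} {j s k : ℕ}

lemma readPos_lightLabel (hs : s < 2 ^ Λ) : readPos Λ I (lightLabel Λ b s k) = s :=
  ofBits_take_toBits_append hs _

lemma readIndex_lightLabel : readIndex Λ I (lightLabel Λ b s k) = k := by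
  rw [lightLabel, readIndex, drop_toBits_append, ofBits_toBits k.lt_size_self]

lemma readPos_heavyLabel (hj : j < 2 ^ I) (hjΛ : 2 * I * (j + 1) ≤ Λ) (hs : s < 2 ^ Λ)
    (hband : s % (2 ^ (2 * I)) ^ (j + 1) < (2 ^ (2 * I)) ^ j) :
    readPos Λ I (heavyLabel Λ I b j s k) = s := by
  have hexp : 2 * I * (j + 1) = 2 * I * j + 2 * I := by ring
  have hcut : cutBand s ((2 ^ (2 * I)) ^ j) (2 ^ (2 * I)) < 2 ^ (Λ - 2 * I) := by
    have h := cutBand_lt (P := (2 ^ (2 * I)) ^ j) (B := 2 ^ (2 * I))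
      (R := 2 ^ (Λ - 2 * I * (j + 1))) (s := s)
    simp only [← pow_mul, ← pow_add] at h
    rw [show 2 * I * j + 2 * I + (Λ - 2 * I * (j + 1)) = Λ by omega,
      show 2 * I * j + (Λ - 2 * I * (j + 1)) = Λ - 2 * I by omega] at h
    rw [← pow_mul]
    exact h hs
  rw [heavyLabel, readPos, ofBits_take_toBits_append hj, drop_toBits_append,
    ofBits_take_toBits_append hcut]
  exact fillBand_cutBand (by positivity) (by rwa [← pow_succ])

lemma readIndex_heavyLabel : readIndex Λ I (heavyLabel Λ I b j s k) = k := by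
  rw [heavyLabel, readIndex, drop_toBits_append, drop_toBits_append, ofBits_toBits k.lt_size_self]

end Labels

lemma exists_index_in_fiber {α β : Type*} [Fintype α] [LinearOrder α] [DecidableEq β]
    (f : α → β) : ∃ k : α → ℕ,
      (∀ u v, f u = f v → k u = k v → u = v) ∧ ∀ u, k u < #{x | f x = f u} := by
  refine ⟨fun u => #{x | f x = f u ∧ x < u}, fun u v huv hk => ?_, fun u => card_lt_card ?_⟩
  · by_contra hne
    wlog h : u < v generalizing u v
    · exact this v u huv.symm hk.symm (Ne.symm hne) (lt_of_le_of_ne (not_lt.1 h) (Ne.symm hne))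
    refine (card_lt_card ((ssubset_iff_of_subset fun x hx => ?_).2 ⟨u, ?_, ?_⟩)).ne hk
    · simp only [mem_filter, mem_univ, true_and] at hx ⊢
      exact ⟨hx.1.trans huv, hx.2.trans h⟩
    · simp [huv, h]
    · simp
  · refine (ssubset_iff_of_subset fun x hx => ?_).2 ⟨u, by simp, by simp⟩
    simp only [mem_filter, mem_univ, true_and] at hx ⊢
    exact hx.1

lemma card_filter_lt_card_fiber_mul_le {α β : Type*} [Fintype α] [DecidableEq β] (f : α → β)
    (T : ℕ) : #{b ∈ univ.image f | T < #{a | f a = b}} * T ≤ Fintype.card α := by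
  calc #{b ∈ univ.image f | T < #{a | f a = b}} * T
      = ∑ b ∈ univ.image f with T < #{a | f a = b}, T := by rw [sum_const, smul_eq_mul]
    _ ≤ ∑ b ∈ univ.image f with T < #{a | f a = b}, #{a | f a = b} :=
        sum_le_sum fun b hb => (mem_filter.1 hb).2.le
    _ ≤ ∑ b ∈ univ.image f, #{a | f a = b} := sum_le_sum_of_subset (filter_subset _ _)
    _ = Fintype.card α := (card_eq_sum_card_image f univ).symm

/-- Fibers of size more than `2 ^ θ` are heavy; there are at most `2 ^ I` of them, and each gets
its own band level for the shift. -/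
theorem exists_encoding {n Λ θ I : ℕ} (pos : Fin n → ℕ) (leaf : Fin n → Bool)
    (hn : n ≤ 2 ^ (θ + I)) (hband : 2 ^ I * (2 * I) ≤ Λ) :
    ∃ (e : Fin n → List Bool) (t : ℕ) (k : Fin n → ℕ),
      (∀ u v, pos u = pos v → k u = k v → u = v) ∧
      (∀ u, readPos Λ I (e u) = (pos u + t) % 2 ^ Λ ∧ readIndex Λ I (e u) = k u ∧
        readLeaf (e u) = leaf u) ∧
      ∀ u, (e u).length ≤ 2 + Λ + θ := by
  obtain ⟨k, hk_inj, hk_lt⟩ := exists_index_in_fiber pos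
  set H := {i ∈ univ.image pos | 2 ^ θ < #{u | pos u = i}}
  have hH : #H ≤ 2 ^ I := by
    have h := card_filter_lt_card_fiber_mul_le pos (2 ^ θ)
    rw [Fintype.card_fin] at h
    exact le_of_mul_le_mul_right (h.trans (hn.trans (by rw [pow_add, mul_comm]))) (by positivity)
  obtain ⟨t, lev, hlev⟩ := exists_shift_levels H (B := 2 ^ (2 * I)) (by positivity)
  let s u := (pos u + t) % 2 ^ Λ
  have hs u : s u < 2 ^ Λ := Nat.mod_lt _ (by positivity)
  let e u := if pos u ∈ H then heavyLabel Λ I (leaf u) (lev (pos u)) (s u) (k u)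
    else lightLabel Λ (leaf u) (s u) (k u)
  refine ⟨e, t, k, hk_inj, fun u => ?_, fun u => ?_⟩
  · by_cases hu : pos u ∈ H
    · obtain ⟨hlt, hzero⟩ := hlev _ hu
      have hjΛ : 2 * I * (lev (pos u) + 1) ≤ Λ := by
        rw [mul_comm]; exact (Nat.mul_le_mul_right _ (hlt.trans_le hH)).trans hband
      have hdvd : (2 ^ (2 * I)) ^ (lev (pos u) + 1) ∣ 2 ^ Λ := by
        rw [← pow_mul]; exact pow_dvd_pow 2 hjΛ
      simp only [e, if_pos hu]
      refine ⟨readPos_heavyLabel (hlt.trans_le hH) hjΛ (hs u) ?_, readIndex_heavyLabel, rfl⟩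
      rwa [Nat.mod_mod_of_dvd _ hdvd]
    · simp only [e, if_neg hu]
      exact ⟨readPos_lightLabel (hs u), readIndex_lightLabel, rfl⟩
  · have hkn : k u < 2 ^ (θ + I) :=
      (hk_lt u).trans_le ((card_filter_le _ _).trans (by simpa using hn))
    by_cases hu : pos u ∈ H
    · have hIΛ : 2 * I ≤ Λ := le_trans (Nat.le_mul_of_pos_left _ (by positivity)) hband
      have hsize := Nat.size_le.2 hkn
      simp only [e, if_pos hu, heavyLabel, List.length_cons, List.length_append, length_toBits]
      omega
    · have hlight : #{x | pos x = pos u} ≤ 2 ^ θ := by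
        simpa [H, mem_filter, mem_image] using hu
      have hsize := Nat.size_le.2 ((hk_lt u).trans_le hlight)
      simp only [e, if_neg hu, lightLabel, List.length_cons, List.length_append, length_toBits]
      omega

theorem exists_labeling {n Λ θ I : ℕ} (pos : Fin n → ℕ) (leaf : Fin n → Bool)
    (hpos : ∀ u, 2 * pos u < 2 ^ Λ) (hn : n ≤ 2 ^ (θ + I)) (hband : 2 ^ I * (2 * I) ≤ Λ) :
    ∃ e : Fin n → List Bool,
      (∀ u v, u ≠ v →
        decode Λ I (e u) (e v) = ((pos u : ℤ) - pos v).natAbs + (leaf u).toNat + (leaf v).toNat) ∧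
      ∀ u, (e u).length ≤ 2 + Λ + θ := by
  obtain ⟨e, t, k, hk_inj, hread, hlen⟩ := exists_encoding (Λ := Λ) pos leaf hn hband
  refine ⟨e, fun u v huv => ?_, hlen⟩
  have he : e u ≠ e v := by
    intro h
    have hposuv : (pos u + t) % 2 ^ Λ = (pos v + t) % 2 ^ Λ := by
      rw [← (hread u).1, ← (hread v).1, h]
    have hmod := Nat.ModEq.add_right_cancel' t hposuv
    rw [Nat.ModEq, Nat.mod_eq_of_lt (by linarith [hpos u]),
      Nat.mod_eq_of_lt (by linarith [hpos v])] at hmod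
    exact huv (hk_inj u v hmod (by rw [← (hread u).2.1, ← (hread v).2.1, h]))
  rw [decode, if_neg he, (hread u).1, (hread v).1, (hread u).2.2, (hread v).2.2,
    cycDist_add_mod t (hpos u) (hpos v)]

lemma natLog_le_logb_of_le {m : ℕ} {x : ℝ} (hm : 0 < m) (h : (m : ℝ) ≤ x) :
    (Nat.log 2 m : ℝ) ≤ Real.logb 2 x :=
  (show (Nat.log 2 m : ℝ) ≤ Real.logb 2 m by exact_mod_cast Real.natLog_le_logb m 2).trans
    (Real.logb_le_logb_of_le one_lt_two (by exact_mod_cast hm) h)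

lemma logb_lt_natLog_add_one {m : ℕ} {x : ℝ} (hx : 0 < x) (h : x < m + 1) :
    Real.logb 2 x < Nat.log 2 m + 1 := by
  rw [Real.logb_lt_iff_lt_rpow one_lt_two hx]
  calc x < m + 1 := h
    _ ≤ ((2 ^ (Nat.log 2 m + 1) : ℕ) : ℝ) := by
        exact_mod_cast Nat.lt_pow_succ_log_self one_lt_two m
    _ = (2 : ℝ) ^ ((Nat.log 2 m : ℝ) + 1) := by
        rw [show (Nat.log 2 m : ℝ) + 1 = ((Nat.log 2 m + 1 : ℕ) : ℝ) by push_cast; ring,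
          Real.rpow_natCast]
        push_cast
        rfl

def heavyIndexBits (n : ℕ) : ℕ :=
  Nat.log 2 (Nat.log 2 n) + 2 - 6 * Nat.log 2 (Nat.log 2 (Nat.log 2 n))

lemma heavyIndexBits_le (n : ℕ) : heavyIndexBits n ≤ Nat.log 2 n + 2 := by
  have := Nat.log_le_self 2 (Nat.log 2 n)
  unfold heavyIndexBits
  omega

lemma le_log_of_sixteen_le {n : ℕ} (hn : 16 ≤ n) :
    1 ≤ Nat.log 2 (Nat.log 2 (Nat.log 2 n)) ∧ 2 ≤ Nat.log 2 (Nat.log 2 n) ∧ 4 ≤ Nat.log 2 n := by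
  have hL : 4 ≤ Nat.log 2 n := Nat.le_log_of_pow_le one_lt_two hn
  have ha : 2 ≤ Nat.log 2 (Nat.log 2 n) := Nat.le_log_of_pow_le one_lt_two (by simpa using hL)
  exact ⟨Nat.le_log_of_pow_le one_lt_two (by simpa using ha), ha, hL⟩

/-- The bands of all heavy fibers fit into the `log n + 2` bits of a position. -/
lemma pow_heavyIndexBits_mul_le {n : ℕ} (hn : 16 ≤ n) :
    2 ^ heavyIndexBits n * (2 * heavyIndexBits n) ≤ Nat.log 2 n + 2 := by
  obtain ⟨hc, ha, hL⟩ := le_log_of_sixteen_le hn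
  set L := Nat.log 2 n
  set a := Nat.log 2 L
  set c := Nat.log 2 a
  set d := heavyIndexBits n
  have hd : d = a + 2 - 6 * c := rfl
  rcases Nat.eq_zero_or_pos d with h0 | hpos
  · simp [h0]
  have hac : a < 2 ^ (c + 1) := Nat.lt_pow_succ_log_self one_lt_two a
  have haL : 2 ^ a ≤ L := Nat.pow_log_le_self 2 (by omega)
  have hc3 : 2 ^ (c + 3) = 4 * 2 ^ (c + 1) := by ring
  calc 2 ^ d * (2 * d) ≤ 2 ^ d * 2 ^ (c + 3) := by
        gcongr
        omega
    _ = 2 ^ (d + (c + 3)) := (pow_add _ _ _).symm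
    _ ≤ 2 ^ a := Nat.pow_le_pow_right two_pos (by omega)
    _ ≤ L + 2 := by omega

lemma label_length_le_logb {n : ℕ} (hn : 16 ≤ n) :
    ((2 + (Nat.log 2 n + 2) + (Nat.log 2 n + 2 - heavyIndexBits n) : ℕ) : ℝ) ≤
      2 * Real.logb 2 n - Real.logb 2 (Real.logb 2 n) +
        13 * Real.logb 2 (Real.logb 2 (Real.logb 2 n)) := by
  obtain ⟨hc, ha, hL⟩ := le_log_of_sixteen_le hn
  set L := Nat.log 2 n
  set a := Nat.log 2 L
  set c := Nat.log 2 a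
  have hd : heavyIndexBits n = a + 2 - 6 * c := rfl
  have haL : a ≤ L := Nat.log_le_self 2 L
  have hnat : 2 + (L + 2) + (L + 2 - heavyIndexBits n) + a ≤ 2 * L + 6 + 6 * c := by
    omega
  have hx : (L : ℝ) ≤ Real.logb 2 n := by exact_mod_cast Real.natLog_le_logb n 2
  have hy : Real.logb 2 (Real.logb 2 n) < a + 1 :=
    logb_lt_natLog_add_one (by linarith [show (4 : ℝ) ≤ L by exact_mod_cast hL])
      (logb_lt_natLog_add_one (by exact_mod_cast (show 0 < n by omega)) (by linarith))
  have hz : (c : ℝ) ≤ Real.logb 2 (Real.logb 2 (Real.logb 2 n)) :=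
    natLog_le_logb_of_le (by omega) (natLog_le_logb_of_le (by omega) hx)
  have hc' : (1 : ℝ) ≤ c := by exact_mod_cast hc
  have hnat' : ((2 + (L + 2) + (L + 2 - heavyIndexBits n) : ℕ) : ℝ) + a ≤ 2 * L + 6 + 6 * c := by
    exact_mod_cast hnat
  linarith

end CaterpillarLabeling

open CaterpillarLabeling in
theorem caterpillar_upper_bound :
    ∃ C : ℝ, 0 < C ∧ ∀ n : ℕ, 16 ≤ n →
      ∃ d : List Bool → List Bool → ℕ,
        ∀ G : SimpleGraph (Fin n), IsCaterpillar G →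
          ∃ e : Fin n → List Bool,
            (∀ u v : Fin n, d (e u) (e v) = G.dist u v) ∧
            ∀ u : Fin n, ((e u).length : ℝ) ≤
              2 * Real.logb 2 n - Real.logb 2 (Real.logb 2 n) +
                C * Real.logb 2 (Real.logb 2 (Real.logb 2 n)) := by
  refine ⟨13, by norm_num, fun n hn =>
    ⟨decode (Nat.log 2 n + 2) (heavyIndexBits n), fun G hG => ?_⟩⟩
  obtain ⟨pos, leaf, hpos, hdist⟩ := hG.exists_dist_eq
  have hn_lt : n < 2 ^ (Nat.log 2 n + 1) := Nat.lt_pow_succ_log_self one_lt_two n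
  obtain ⟨e, hdec, hlen⟩ := exists_labeling (θ := Nat.log 2 n + 2 - heavyIndexBits n) pos leaf
    (fun u => by have := hpos u; rw [pow_succ] at hn_lt ⊢; omega)
    (by rw [Nat.sub_add_cancel (heavyIndexBits_le n)]; exact hn_lt.le.trans (by gcongr <;> omega))
    (pow_heavyIndexBits_mul_le hn)
  refine ⟨e, fun u v => ?_, fun u => (Nat.cast_le.2 (hlen u)).trans (label_length_le_logb hn)⟩
  by_cases huv : u = v
  · rw [huv, decode, if_pos rfl, SimpleGraph.dist_self]
  · rw [hdec u v huv, hdist u v huv]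
end

section
/- There exists a constant C > 0 such that for every integer n ≥ 2 there is a distance labeling scheme for trees on n vertices with all labels of length at most (1/2)·(log₂ n)² + C·log₂ n. Precisely: there exists a decoder d : List Bool → List Bool → ℕ such that for every simple graph G : SimpleGraph (Fin n) with G.IsTree there exists an encoder e : Fin n → List Bool with d (e u) (e v) = G.dist u v for all u, v, and (e u).length ≤ (1/2)·(log₂ n)² + C·log₂ n for all u. -/
/-!
Centroid decomposition. Let `c` be a vertex of the subtree `S` minimising the total distance to
`S`; moving from `c` to a neighbour `a` changes that total by `#S - 2 * (size of a's branch)`, so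
every branch of `S - c` has at most `#S / 2` vertices. Ranking the branches by decreasing size,
the branch of rank `j` moreover has at most `#S / j` vertices. The label of `u` lists, level by
level, the rank of the branch containing `u` and the distance from `u` to the centroid. Two labels
agree up to the first level whose ranks differ; the centroid there separates `u` from `v`, so
their distance is the sum of the two recorded distances.

At a level whose subtree has at most `B` vertices, the rank `j` costs `2 log₂ j + 1` bits (Elias'
gamma code) and the distance `log₂ B + 1` bits, while the next bound `B / max 2 j` has a
logarithm smaller by at least `max 1 (log₂ j)`. Summing `log₂ B` over a sequence that drops by at
least one at each step gives the leading term `(log₂ n)² / 2`.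
-/

open Finset

section FiberRank

variable {α κ : Type*} [LinearOrder κ] (s : Finset α) (f : α → κ) {x y : α}

/-- Larger fibres come first, ties broken by the value of `f`. -/
def fiberKey (k : κ) : ℕᵒᵈ ×ₗ κ := toLex (OrderDual.toDual #{x ∈ s | f x = k}, k)

def fiberRank (x : α) : ℕ := #{k ∈ s.image f | fiberKey s f k < fiberKey s f (f x)} + 1

variable {s f}

lemma fiberRank_lt_fiberRank (hx : x ∈ s) (h : fiberKey s f (f x) < fiberKey s f (f y)) :
    fiberRank s f x < fiberRank s f y := by
  unfold fiberRank
  gcongr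
  refine ssubset_iff_of_subset (fun k hk => ?_) |>.mpr ⟨f x, ?_, ?_⟩
  · rw [mem_filter] at hk ⊢
    exact ⟨hk.1, hk.2.trans h⟩
  · exact mem_filter.mpr ⟨mem_image_of_mem f hx, h⟩
  · simp

lemma fiberRank_eq_fiberRank_iff (hx : x ∈ s) (hy : y ∈ s) :
    fiberRank s f x = fiberRank s f y ↔ f x = f y := by
  refine ⟨fun h => ?_, fun h => by rw [fiberRank, fiberRank, h]⟩
  rcases lt_trichotomy (fiberKey s f (f x)) (fiberKey s f (f y)) with hlt | heq | hgt
  · exact absurd h (fiberRank_lt_fiberRank hx hlt).ne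
  · exact congrArg (fun p => (ofLex p).2) heq
  · exact absurd h (fiberRank_lt_fiberRank hy hgt).ne'

lemma fiberRank_mul_card_fiber_le (hx : x ∈ s) :
    fiberRank s f x * #{y ∈ s | f y = f x} ≤ #s := by
  set T := insert (f x) {k ∈ s.image f | fiberKey s f k < fiberKey s f (f x)}
  have hT : #T = fiberRank s f x := card_insert_of_notMem (by simp)
  have hle : ∀ k ∈ T, #{y ∈ s | f y = f x} ≤ #{y ∈ s | f y = k} := by
    intro k hk
    rcases mem_insert.mp hk with rfl | hk
    · rfl
    · exact Prod.Lex.monotone_fst _ _ (mem_filter.mp hk).2.le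
  have hTs : T ⊆ s.image f := insert_subset (mem_image_of_mem f hx) (filter_subset _ _)
  calc fiberRank s f x * #{y ∈ s | f y = f x}
      = #T • #{y ∈ s | f y = f x} := by rw [hT, smul_eq_mul]
    _ ≤ ∑ k ∈ T, #{y ∈ s | f y = k} := card_nsmul_le_sum _ _ _ hle
    _ ≤ ∑ k ∈ s.image f, #{y ∈ s | f y = k} := sum_le_sum_of_subset hTs
    _ = #s := (card_eq_sum_card_image f s).symm

end FiberRank

namespace SimpleGraph

variable {V : Type*} {G : SimpleGraph V} {S : Finset V} {a b c u v w x y : V}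

def Between (G : SimpleGraph V) (c u v : V) : Prop :=
  G.dist u c + G.dist c v = G.dist u v

def IsConvex (G : SimpleGraph V) (S : Finset V) : Prop :=
  ∀ x ∈ S, ∀ y ∈ S, ∀ w, G.Between w x y → w ∈ S

lemma Between.symm (h : G.Between c u v) : G.Between c v u := by
  rwa [Between, dist_comm, add_comm, dist_comm (u := c), dist_comm (u := v)]

lemma Connected.between_trans (hG : G.Connected) (hc : G.Between c x w) (hw : G.Between w x y) :
    G.Between c x y := by
  unfold Between at *
  have := hG.dist_triangle (u := x) (v := c) (w := y)
  have := hG.dist_triangle (u := c) (v := w) (w := y)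
  omega

lemma between_iff_dist_eq_add_one (ha : G.Adj c a) :
    G.Between c a u ↔ G.dist a u = G.dist c u + 1 := by
  rw [Between, dist_eq_one_iff_adj.mpr ha.symm, add_comm, eq_comm]

lemma IsTree.not_between_iff_dist_eq_add_one (hG : G.IsTree) (ha : G.Adj c a) :
    ¬ G.Between c a u ↔ G.dist c u = G.dist a u + 1 := by
  rw [between_iff_dist_eq_add_one ha, dist_comm (u := a), dist_comm (u := c)]
  have := hG.dist_eq_dist_add_one_of_adj u ha
  omega

lemma IsAcyclic.length_eq_dist (hG : G.IsAcyclic) {p : G.Walk u v} (hp : p.IsPath) :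
    p.length = G.dist u v := by
  obtain ⟨q, hq, hql⟩ := p.reachable.exists_path_of_dist
  have hpq : p = q := congrArg Subtype.val ((hG.subsingleton_path u v).elim ⟨p, hp⟩ ⟨q, hq⟩)
  rw [hpq, hql]

lemma IsTree.between_iff_mem_support [DecidableEq V] (hG : G.IsTree) {p : G.Walk u v}
    (hp : p.IsPath) : G.Between c u v ↔ c ∈ p.support := by
  constructor
  · intro h
    obtain ⟨q₁, hq₁⟩ := hG.connected.exists_walk_length_eq_dist u c
    obtain ⟨q₂, hq₂⟩ := hG.connected.exists_walk_length_eq_dist c v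
    have hq : (q₁.append q₂).IsPath :=
      Walk.isPath_of_length_eq_dist _ (by rw [Walk.length_append, hq₁, hq₂]; exact h)
    have hpq : p = q₁.append q₂ :=
      congrArg Subtype.val ((hG.isAcyclic.subsingleton_path u v).elim ⟨p, hp⟩ ⟨_, hq⟩)
    rw [hpq, Walk.mem_support_append_iff]
    exact Or.inl q₁.end_mem_support
  · intro hc
    have hsplit := congrArg Walk.length (p.take_spec hc)
    rw [Walk.length_append, hG.isAcyclic.length_eq_dist (hp.takeUntil hc),
      hG.isAcyclic.length_eq_dist (hp.dropUntil hc), hG.isAcyclic.length_eq_dist hp] at hsplit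
    exact hsplit

/-- The path from `u` to `w` runs inside the union of the paths from `u` to `v` and `v` to `w`. -/
lemma IsTree.between_or_between (hG : G.IsTree) (h : G.Between c u w) (v : V) :
    G.Between c u v ∨ G.Between c v w := by
  classical
  obtain ⟨p, hp, -⟩ := hG.connected.exists_path_of_dist u v
  obtain ⟨q, hq, -⟩ := hG.connected.exists_path_of_dist v w
  have hc := (p.append q).support_bypass_subset_support
    ((hG.between_iff_mem_support (p.append q).bypass_isPath).mp h)
  rw [Walk.mem_support_append_iff] at hc
  rw [hG.between_iff_mem_support hp, hG.between_iff_mem_support hq]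
  exact hc

lemma IsTree.between_of_adj_of_adj (hG : G.IsTree) (ha : G.Adj c a) (hb : G.Adj c b)
    (hab : a ≠ b) : G.Between c a b := by
  classical
  have hp : (Walk.cons ha.symm (Walk.cons hb Walk.nil)).IsPath := by
    simp [Walk.cons_isPath_iff, ha.ne', hb.ne, hab]
  exact (hG.between_iff_mem_support hp).mpr (by simp)

lemma IsTree.dist_lt_card [DecidableEq V] (hG : G.IsTree) {S : Finset V}
    (hS : ∀ w, G.Between w u v → w ∈ S) : G.dist u v < #S := by
  obtain ⟨p, hp, hpl⟩ := hG.connected.exists_path_of_dist u v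
  have hsub : p.support.toFinset ⊆ S := fun w hw =>
    hS w ((hG.between_iff_mem_support hp).mpr (List.mem_toFinset.mp hw))
  have := card_le_card hsub
  rw [List.toFinset_card_of_nodup hp.support_nodup, Walk.length_support, hpl] at this
  omega

lemma Connected.exists_adj_dist_eq_add_one (hG : G.Connected) (hu : u ≠ c) :
    ∃ a, G.Adj c a ∧ G.dist c u = G.dist a u + 1 := by
  obtain ⟨p, hp⟩ := hG.exists_walk_length_eq_dist c u
  cases p with
  | nil => exact absurd rfl hu
  | @cons _ a _ ha q =>
    refine ⟨a, ha, le_antisymm ?_ ?_⟩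
    · have := hG.dist_triangle (u := c) (v := a) (w := u)
      rwa [dist_eq_one_iff_adj.mpr ha, add_comm] at this
    · rw [← hp, Walk.length_cons]
      exact Nat.succ_le_succ (dist_le q)

open Classical in
noncomputable def towards (G : SimpleGraph V) (c u : V) : V :=
  if h : ∃ a, G.Adj c a ∧ G.dist c u = G.dist a u + 1 then h.choose else u

lemma Connected.adj_towards (hG : G.Connected) (hu : u ≠ c) : G.Adj c (G.towards c u) := by
  rw [towards, dif_pos (hG.exists_adj_dist_eq_add_one hu)]
  exact (hG.exists_adj_dist_eq_add_one hu).choose_spec.1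

lemma IsTree.not_between_towards (hG : G.IsTree) (hu : u ≠ c) :
    ¬ G.Between c (G.towards c u) u := by
  rw [hG.not_between_iff_dist_eq_add_one (hG.connected.adj_towards hu), towards,
    dif_pos (hG.connected.exists_adj_dist_eq_add_one hu)]
  exact (hG.connected.exists_adj_dist_eq_add_one hu).choose_spec.2

lemma IsTree.towards_eq (hG : G.IsTree) (ha : G.Adj c a) (h : ¬ G.Between c a u) :
    G.towards c u = a := by
  have hu : u ≠ c := by
    rintro rfl
    exact h (by simp [Between])
  by_contra hne
  rcases hG.between_or_between (hG.between_of_adj_of_adj ha (hG.connected.adj_towards hu)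
    (Ne.symm hne)) u with h' | h'
  · exact h h'
  · exact hG.not_between_towards hu h'.symm

lemma IsTree.towards_eq_towards_iff (hG : G.IsTree) (hu : u ≠ c) (hv : v ≠ c) :
    G.towards c u = G.towards c v ↔ ¬ G.Between c u v := by
  constructor
  · intro h huv
    rcases hG.between_or_between huv (G.towards c u) with h' | h'
    · exact hG.not_between_towards hu h'.symm
    · exact hG.not_between_towards hv (h ▸ h')
  · intro h
    refine (hG.towards_eq (hG.connected.adj_towards hu) fun h' => ?_).symm
    rcases hG.between_or_between h' u with h'' | h''
    · exact hG.not_between_towards hu h''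
    · exact h h''

section Branch

variable [DecidableEq V]

noncomputable def branch (G : SimpleGraph V) (S : Finset V) (c u : V) : Finset V :=
  {x ∈ S.erase c | G.towards c x = G.towards c u}

lemma mem_branch_self (hu : u ∈ S) (hne : u ≠ c) : u ∈ G.branch S c u :=
  mem_filter.mpr ⟨mem_erase.mpr ⟨hne, hu⟩, rfl⟩

lemma branch_ssubset (hc : c ∈ S) : G.branch S c u ⊂ S :=
  (filter_subset _ _).trans_ssubset (erase_ssubset hc)

lemma IsTree.isConvex_branch (hG : G.IsTree) (hS : G.IsConvex S) :
    G.IsConvex (G.branch S c u) := by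
  intro x hx y hy w hw
  simp only [branch, mem_filter, mem_erase] at hx hy ⊢
  have hxy : ¬ G.Between c x y :=
    (hG.towards_eq_towards_iff hx.1.1 hy.1.1).mp (hx.2.trans hy.2.symm)
  have hwc : w ≠ c := by rintro rfl; exact hxy hw
  have hxw : ¬ G.Between c x w := fun h => hxy (hG.connected.between_trans h hw)
  exact ⟨⟨hwc, hS x hx.1.2 y hy.1.2 w hw⟩,
    ((hG.towards_eq_towards_iff hx.1.1 hwc).mpr hxw).symm.trans hx.2⟩

/-- Stepping from `c` towards `u` brings the vertices of `u`'s branch one closer and all others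
one further away. -/
lemma IsTree.sum_dist_towards_add_two_mul_card_branch (hG : G.IsTree) (hu : u ≠ c) :
    ∑ v ∈ S, G.dist (G.towards c u) v + 2 * #(G.branch S c u) =
      ∑ v ∈ S, G.dist c v + #S := by
  set a := G.towards c u
  set A := G.branch S c u
  have ha : G.Adj c a := hG.connected.adj_towards hu
  have hin : ∀ v ∈ A, G.dist c v = G.dist a v + 1 := by
    intro v hv
    simp only [A, branch, mem_filter, mem_erase] at hv
    rw [← hG.not_between_iff_dist_eq_add_one ha]
    simpa only [hv.2] using hG.not_between_towards hv.1.1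
  have hout : ∀ v ∈ S \ A, G.dist a v = G.dist c v + 1 := by
    intro v hv
    by_cases hvc : v = c
    · rw [hvc, dist_self, dist_eq_one_iff_adj.mpr ha.symm]
    · rw [← between_iff_dist_eq_add_one ha]
      by_contra h
      rw [mem_sdiff] at hv
      exact hv.2 (mem_filter.mpr ⟨mem_erase.mpr ⟨hvc, hv.1⟩, hG.towards_eq ha h⟩)
  have hAS : A ⊆ S := (filter_subset _ _).trans (erase_subset _ _)
  rw [← sum_sdiff hAS, ← sum_sdiff hAS (f := G.dist c), sum_congr rfl hin, sum_congr rfl hout,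
    sum_add_distrib, sum_add_distrib, ← card_sdiff_add_card_eq_card hAS]
  simp only [sum_const, smul_eq_mul, mul_one]
  omega

end Branch

section Median

variable [Nonempty V]

/-- In a tree, a centroid of `S` (see `IsTree.two_mul_card_branch_median_le`). -/
noncomputable def median (G : SimpleGraph V) (S : Finset V) : V :=
  if h : S.Nonempty then (S.exists_min_image (fun c => ∑ v ∈ S, G.dist c v) h).choose
  else Classical.arbitrary V

lemma median_mem (h : S.Nonempty) : G.median S ∈ S := by
  rw [median, dif_pos h]
  exact (S.exists_min_image (fun c => ∑ v ∈ S, G.dist c v) h).choose_spec.1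

lemma sum_dist_median_le (ha : a ∈ S) :
    ∑ v ∈ S, G.dist (G.median S) v ≤ ∑ v ∈ S, G.dist a v := by
  rw [median, dif_pos ⟨a, ha⟩]
  exact (S.exists_min_image (fun c => ∑ v ∈ S, G.dist c v) ⟨a, ha⟩).choose_spec.2 a ha

lemma IsTree.two_mul_card_branch_median_le [DecidableEq V] (hG : G.IsTree) (hS : G.IsConvex S)
    (hu : u ∈ S) (hne : u ≠ G.median S) : 2 * #(G.branch S (G.median S) u) ≤ #S := by
  set c := G.median S
  have hc : c ∈ S := median_mem ⟨u, hu⟩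
  have ha : G.Between (G.towards c u) c u := by
    rw [Between, dist_eq_one_iff_adj.mpr (hG.connected.adj_towards hne), add_comm,
      ← (hG.not_between_iff_dist_eq_add_one (hG.connected.adj_towards hne)).mp
        (hG.not_between_towards hne)]
  have hsum := hG.sum_dist_towards_add_two_mul_card_branch (S := S) hne
  have hmin : ∑ v ∈ S, G.dist c v ≤ ∑ v ∈ S, G.dist (G.towards c u) v :=
    sum_dist_median_le (hS c hc u hu _ ha)
  omega

end Median

end SimpleGraph

namespace TreeLabel

def bits (w x : ℕ) : List Bool := (List.range w).map x.testBit

@[simp] lemma length_bits (w x : ℕ) : (bits w x).length = w := by simp [bits]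

lemma bits_eq_bits_iff {w x y : ℕ} : bits w x = bits w y ↔ x % 2 ^ w = y % 2 ^ w := by
  rw [bits, bits, List.map_inj_left]
  refine ⟨fun h => Nat.eq_of_testBit_eq fun i => ?_, fun h i hi => ?_⟩
  · by_cases hi : i < w
    · simpa [Nat.testBit_mod_two_pow, hi] using h i (List.mem_range.mpr hi)
    · simp [Nat.testBit_mod_two_pow, hi]
  · have := congrArg (Nat.testBit · i) h
    simpa [Nat.testBit_mod_two_pow, List.mem_range.mp hi] using this

lemma two_pow_log_add_mod {j : ℕ} (hj : j ≠ 0) : 2 ^ Nat.log 2 j + j % 2 ^ Nat.log 2 j = j := by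
  have hdiv : j / 2 ^ Nat.log 2 j = 1 := Nat.div_eq_of_lt_le
    (by simpa using Nat.pow_log_le_self 2 hj)
    (by simpa [pow_succ, mul_comm] using Nat.lt_pow_succ_log_self Nat.one_lt_two j)
  have := Nat.div_add_mod j (2 ^ Nat.log 2 j)
  rwa [hdiv, mul_one] at this

lemma replicate_append_cons_inj {α : Type*} {a b : α} (hab : a ≠ b) :
    ∀ {k k' : ℕ} {t t' : List α},
      List.replicate k a ++ b :: t = List.replicate k' a ++ b :: t' → k = k' ∧ t = t'
  | 0, 0, _, _, h => by simpa using h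
  | 0, _ + 1, _, _, h => by simp [List.replicate_succ, hab.symm] at h
  | _ + 1, 0, _, _, h => by simp [List.replicate_succ, hab] at h
  | _ + 1, _ + 1, _, _, h => by
    simp only [List.replicate_succ, List.cons_append, List.cons.injEq, true_and] at h
    simpa using replicate_append_cons_inj hab h

/-- Elias' gamma code: `⌊log₂ j⌋` in unary, then the digits of `j` below its leading one. -/
def gamma (j : ℕ) : List Bool :=
  List.replicate (Nat.log 2 j) false ++ true :: bits (Nat.log 2 j) j

@[simp] lemma length_gamma (j : ℕ) : (gamma j).length = 2 * Nat.log 2 j + 1 := by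
  simp [gamma]; ring

lemma gamma_append_inj {j j' : ℕ} {r r' : List Bool} (hj : j ≠ 0) (hj' : j' ≠ 0)
    (h : gamma j ++ r = gamma j' ++ r') : j = j' ∧ r = r' := by
  simp only [gamma, List.append_assoc, List.cons_append] at h
  obtain ⟨hlog, h⟩ := replicate_append_cons_inj (by decide) h
  obtain ⟨hbits, hr⟩ := List.append_inj h (by simp [hlog])
  rw [hlog, bits_eq_bits_iff] at hbits
  refine ⟨?_, hr⟩
  rw [← two_pow_log_add_mod hj, ← two_pow_log_add_mod hj', hlog, hbits]

/-- `B` bounds the size of the current subtree; the branch of rank `j` has at most `B / max 2 j`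
vertices, and `δ < B` is a distance inside the subtree. -/
def Admissible : ℕ → List (ℕ × ℕ) → Prop
  | _, [] => True
  | B, (j, δ) :: r => j ≠ 0 ∧ max 2 j ≤ B ∧ δ < B ∧ Admissible (B / max 2 j) r

def encode : ℕ → List (ℕ × ℕ) → List Bool
  | _, [] => []
  | B, (j, δ) :: r => gamma j ++ bits (Nat.log 2 B + 1) δ ++ encode (B / max 2 j) r

lemma encode_inj : ∀ {B : ℕ} {l l' : List (ℕ × ℕ)}, Admissible B l → Admissible B l' →
    encode B l = encode B l' → l = l'
  | _, [], [], _, _, _ => rfl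
  | _, [], _ :: _, _, _, h => by simp [encode, gamma] at h
  | _, _ :: _, [], _, _, h => by simp [encode, gamma] at h
  | B, (j, δ) :: r, (j', δ') :: r', ⟨hj, _, hδ, hr⟩, ⟨hj', _, hδ', hr'⟩, h => by
    simp only [encode, List.append_assoc] at h
    obtain ⟨rfl, h⟩ := gamma_append_inj hj hj' h
    obtain ⟨hbits, h⟩ := List.append_inj h (by simp)
    have hpow : B < 2 ^ (Nat.log 2 B + 1) := Nat.lt_pow_succ_log_self (by norm_num) B
    rw [bits_eq_bits_iff, Nat.mod_eq_of_lt (hδ.trans hpow),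
      Nat.mod_eq_of_lt (hδ'.trans hpow)] at hbits
    rw [hbits, encode_inj hr hr' h]

lemma log_div_add_log_le {b B m : ℕ} (hb : 1 < b) (hm : m ≠ 0) (hmB : m ≤ B) :
    Nat.log b (B / m) + Nat.log b m ≤ Nat.log b B := by
  have hBm : B / m ≠ 0 := (Nat.div_pos hmB (Nat.pos_of_ne_zero hm)).ne'
  refine Nat.le_log_of_pow_le hb ?_
  calc b ^ (Nat.log b (B / m) + Nat.log b m)
      = b ^ Nat.log b (B / m) * b ^ Nat.log b m := pow_add ..
    _ ≤ B / m * m := Nat.mul_le_mul (Nat.pow_log_le_self b hBm) (Nat.pow_log_le_self b hm)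
    _ ≤ B := Nat.div_mul_le_self B m

lemma two_mul_length_encode_le : ∀ {B : ℕ} {l : List (ℕ × ℕ)}, Admissible B l →
    2 * (encode B l).length ≤ Nat.log 2 B * (Nat.log 2 B + 9)
  | _, [], _ => by simp [encode]
  | B, (j, _) :: r, ⟨_, hjB, _, hr⟩ => by
    have ih := two_mul_length_encode_le hr
    have hμ : 1 ≤ Nat.log 2 (max 2 j) :=
      Nat.le_log_of_pow_le (by norm_num) (by simp)
    have hk : Nat.log 2 j ≤ Nat.log 2 (max 2 j) := Nat.log_mono_right (le_max_right 2 j)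
    have hb := log_div_add_log_le Nat.one_lt_two (by positivity) hjB
    simp only [encode, List.length_append, length_gamma, length_bits]
    nlinarith

lemma length_encode_le {B : ℕ} {l : List (ℕ × ℕ)} (hl : Admissible B l) :
    ((encode B l).length : ℝ) ≤ 1 / 2 * Real.logb 2 B ^ 2 + 5 * Real.logb 2 B := by
  have h : (2 * (encode B l).length : ℝ) ≤ Nat.log 2 B * (Nat.log 2 B + 9) := by
    exact_mod_cast two_mul_length_encode_le hl
  have hb := Real.natLog_le_logb B 2
  have hb0 : (0 : ℝ) ≤ Nat.log 2 B := Nat.cast_nonneg _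
  push_cast at hb
  nlinarith

def labelDist : List (ℕ × ℕ) → List (ℕ × ℕ) → ℕ
  | (j, δ) :: r, (j', δ') :: r' => if j = j' then labelDist r r' else δ + δ'
  | (_, δ) :: _, [] => δ
  | [], (_, δ) :: _ => δ
  | [], [] => 0

end TreeLabel

namespace SimpleGraph

open TreeLabel

variable {V : Type*} [LinearOrder V] [Nonempty V] {G : SimpleGraph V} {S : Finset V} {u v : V}

noncomputable def centroidLabel (G : SimpleGraph V) (S : Finset V) (u : V) : List (ℕ × ℕ) :=
  if _ : u ∈ S ∧ u ≠ G.median S then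
    (fiberRank (S.erase (G.median S)) (G.towards (G.median S)) u, G.dist u (G.median S)) ::
      G.centroidLabel (G.branch S (G.median S) u) u
  else []
termination_by #S
decreasing_by exact card_lt_card (branch_ssubset (median_mem ⟨u, ‹u ∈ S ∧ _›.1⟩))

lemma centroidLabel_median : G.centroidLabel S (G.median S) = [] := by
  rw [centroidLabel, dif_neg (fun h => h.2 rfl)]

lemma centroidLabel_of_ne (hu : u ∈ S) (hne : u ≠ G.median S) :
    G.centroidLabel S u =
      (fiberRank (S.erase (G.median S)) (G.towards (G.median S)) u, G.dist u (G.median S)) ::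
        G.centroidLabel (G.branch S (G.median S) u) u := by
  rw [centroidLabel, dif_pos ⟨hu, hne⟩]

theorem IsTree.labelDist_centroidLabel (hG : G.IsTree) (hS : G.IsConvex S) (hu : u ∈ S)
    (hv : v ∈ S) : labelDist (G.centroidLabel S u) (G.centroidLabel S v) = G.dist u v := by
  induction S using Finset.strongInduction generalizing u v with
  | H S ih =>
  set c := G.median S
  by_cases huc : u = c <;> by_cases hvc : v = c
  · rw [huc, hvc, centroidLabel_median, dist_self, labelDist]
  · rw [huc, centroidLabel_median, centroidLabel_of_ne hv hvc, labelDist, dist_comm]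
  · rw [hvc, centroidLabel_median, centroidLabel_of_ne hu huc, labelDist]
  have hue : u ∈ S.erase c := mem_erase.mpr ⟨huc, hu⟩
  have hve : v ∈ S.erase c := mem_erase.mpr ⟨hvc, hv⟩
  rw [centroidLabel_of_ne hu huc, centroidLabel_of_ne hv hvc, labelDist]
  split_ifs with hrank
  · have hbranch : G.branch S c v = G.branch S c u := by
      rw [branch, branch, (fiberRank_eq_fiberRank_iff hue hve).mp hrank]
    rw [hbranch]
    exact ih _ (branch_ssubset (median_mem ⟨u, hu⟩)) (hG.isConvex_branch hS)
      (mem_branch_self hu huc) (hbranch ▸ mem_branch_self hv hvc)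
  · have hsep : G.Between c u v := by
      rw [fiberRank_eq_fiberRank_iff hue hve, hG.towards_eq_towards_iff huc hvc] at hrank
      exact not_not.mp hrank
    rw [← hsep, dist_comm (u := v)]

theorem IsTree.admissible_centroidLabel (hG : G.IsTree) (hS : G.IsConvex S) (hu : u ∈ S)
    {B : ℕ} (hB : #S ≤ B) : Admissible B (G.centroidLabel S u) := by
  induction S using Finset.strongInduction generalizing u B with
  | H S ih =>
  by_cases huc : u = G.median S
  · rw [huc, centroidLabel_median]
    trivial
  rw [centroidLabel_of_ne hu huc]
  have hhalf := hG.two_mul_card_branch_median_le hS hu huc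
  set c := G.median S
  set j := fiberRank (S.erase c) (G.towards c) u
  have hc : c ∈ S := median_mem ⟨u, hu⟩
  have hrank : j * #(G.branch S c u) ≤ #(S.erase c) :=
    fiberRank_mul_card_fiber_le (mem_erase.mpr ⟨huc, hu⟩)
  have hA : 0 < #(G.branch S c u) := card_pos.mpr ⟨u, mem_branch_self hu huc⟩
  have herase := card_erase_of_mem hc
  have hj : j ≤ j * #(G.branch S c u) := Nat.le_mul_of_pos_right j hA
  refine ⟨by simp [j, fiberRank], max_le (by omega) (by omega), ?_, ?_⟩
  · exact (hG.dist_lt_card fun w hw => hS u hu c hc w hw).trans_le hB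
  · refine ih _ (branch_ssubset hc) (hG.isConvex_branch hS) (mem_branch_self hu huc) ?_
    rw [Nat.le_div_iff_mul_le (by positivity), mul_comm]
    rcases max_cases 2 j with ⟨h, -⟩ | ⟨h, -⟩ <;> rw [h] <;> omega

end SimpleGraph

theorem tree_distance_upper_bound :
    ∃ C : ℝ, 0 < C ∧ ∀ n : ℕ, 2 ≤ n →
      ∃ d : List Bool → List Bool → ℕ,
        ∀ G : SimpleGraph (Fin n), G.IsTree →
          ∃ e : Fin n → List Bool,
            (∀ u v : Fin n, d (e u) (e v) = G.dist u v) ∧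
            ∀ u : Fin n, ((e u).length : ℝ) ≤
              (1 / 2) * (Real.logb 2 n) ^ 2 + C * Real.logb 2 n := by
  refine ⟨5, by norm_num, fun n hn => ?_⟩
  have : Nonempty (Fin n) := ⟨⟨0, by omega⟩⟩
  let decode := Function.invFunOn (TreeLabel.encode n) {l | TreeLabel.Admissible n l}
  refine ⟨fun x y => TreeLabel.labelDist (decode x) (decode y), fun G hG => ?_⟩
  have hconv : G.IsConvex Finset.univ := fun _ _ _ _ w _ => Finset.mem_univ w
  have hadm (u : Fin n) : TreeLabel.Admissible n (G.centroidLabel Finset.univ u) :=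
    hG.admissible_centroidLabel hconv (Finset.mem_univ u) (by simp)
  have hinj : Set.InjOn (TreeLabel.encode n) {l | TreeLabel.Admissible n l} :=
    fun _ hl _ hl' => TreeLabel.encode_inj hl hl'
  have hdecode (u : Fin n) : decode (TreeLabel.encode n (G.centroidLabel Finset.univ u)) =
      G.centroidLabel Finset.univ u :=
    hinj.leftInvOn_invFunOn (hadm u)
  refine ⟨fun u => TreeLabel.encode n (G.centroidLabel Finset.univ u), fun u v => ?_,
    fun u => TreeLabel.length_encode_le (hadm u)⟩
  simp only [hdecode]
  exact hG.labelDist_centroidLabel hconv (Finset.mem_univ u) (Finset.mem_univ v)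
end

section
/- Let G be a simple graph on a finite vertex type with G.IsTree, and let r, u, v be vertices. Then there exists a vertex w (the nearest common ancestor of u and v with respect to root r) such that G.dist r u = G.dist r w + G.dist w u, G.dist r v = G.dist r w + G.dist w v, and G.dist u v = G.dist u w + G.dist w v. -/
/-!
Let `P` be the path from `u` to `v` and let `w` be a vertex of `P` closest to `r`. A shortest
path from `r` to `w` meets each half of `P` only at `w` (a common vertex `x ≠ w` would be a vertex
of `P` strictly closer to `r`), so joining them gives paths from `r` to `u` and to `v` through
`w`. In a tree every path is a shortest path, which yields the three distance identities.
-/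

namespace SimpleGraph

variable {V : Type*} {G : SimpleGraph V}

theorem Walk.IsPath.append {u v w : V} {p : G.Walk u v} {q : G.Walk v w} (hp : p.IsPath)
    (hq : q.IsPath) (hpq : ∀ x ∈ p.support, x ∈ q.support → x = v) : (p.append q).IsPath := by
  have hq' : (v :: q.support.tail).Nodup := q.cons_tail_support ▸ hq.support_nodup
  rw [Walk.isPath_def, Walk.support_append]
  refine List.Nodup.append hp.support_nodup hq'.of_cons fun x hxp hxq => ?_
  obtain rfl := hpq x hxp (List.mem_of_mem_tail hxq)
  exact (List.nodup_cons.mp hq').1 hxq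

theorem IsAcyclic.length_eq_dist_of_isPath (hG : G.IsAcyclic) {u v : V} {p : G.Walk u v}
    (hp : p.IsPath) : p.length = G.dist u v := by
  obtain ⟨q, hq, hqlen⟩ := p.reachable.exists_path_of_dist
  have hpq : (⟨p, hp⟩ : G.Path u v) = ⟨q, hq⟩ := (hG.subsingleton_path u v).elim _ _
  rw [← hqlen, show p = q from congrArg Subtype.val hpq]

theorem IsAcyclic.dist_eq_dist_add_length_of_forall_dist_le [DecidableEq V] (hG : G.IsAcyclic)
    {r w y : V} (hrw : G.Reachable r w) {t : G.Walk w y} (ht : t.IsPath)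
    (hmin : ∀ x ∈ t.support, G.dist r w ≤ G.dist r x) : G.dist r y = G.dist r w + t.length := by
  obtain ⟨s, hs, hslen⟩ := hrw.exists_path_of_dist
  have hmeet : ∀ x ∈ s.support, x ∈ t.support → x = w := by
    intro x hxs hxt
    have hsplit := congrArg Walk.length (s.take_spec hxs)
    rw [Walk.length_append] at hsplit
    have hrx : G.dist r x ≤ (s.takeUntil x hxs).length := G.dist_le _
    have hwx := hmin x hxt
    exact Walk.eq_of_length_eq_zero (p := s.dropUntil x hxs) (by omega)
  rw [← hG.length_eq_dist_of_isPath (hs.append ht hmeet), Walk.length_append, hslen]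

end SimpleGraph

open SimpleGraph in
theorem exists_nca_general {V : Type*} (G : SimpleGraph V) (hG : G.IsTree)
    (r u v : V) :
    ∃ w : V,
      G.dist r u = G.dist r w + G.dist w u ∧
      G.dist r v = G.dist r w + G.dist w v ∧
      G.dist u v = G.dist u w + G.dist w v := by
  classical
  have hacyc := hG.isAcyclic
  obtain ⟨P, hP, -⟩ := hG.existsUnique_path u v
  obtain ⟨w, hwP, hmin⟩ := P.support.toFinset.exists_min_image (G.dist r) ⟨u, by simp⟩
  simp only [List.mem_toFinset] at hwP hmin
  have hsplit := congrArg Walk.length (P.take_spec hwP)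
  rw [Walk.length_append] at hsplit
  have hwu := hacyc.length_eq_dist_of_isPath (hP.takeUntil hwP)
  have hwv := hacyc.length_eq_dist_of_isPath (hP.dropUntil hwP)
  have hru := hacyc.dist_eq_dist_add_length_of_forall_dist_le (hG.connected r w)
    (hP.takeUntil hwP).reverse fun x hx =>
      hmin x <| P.support_takeUntil_subset_support hwP <| by simpa using hx
  have hrv := hacyc.dist_eq_dist_add_length_of_forall_dist_le (hG.connected r w)
    (hP.dropUntil hwP) fun x hx => hmin x (P.support_dropUntil_subset_support hwP hx)
  rw [Walk.length_reverse, hwu, dist_comm (u := u)] at hru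
  refine ⟨w, hru, hwv ▸ hrv, ?_⟩
  rw [← hacyc.length_eq_dist_of_isPath hP, ← hsplit, hwu, hwv]

theorem exists_nca {V : Type*} [Fintype V] (G : SimpleGraph V) (hG : G.IsTree)
    (r u v : V) :
    ∃ w : V,
      G.dist r u = G.dist r w + G.dist w u ∧
      G.dist r v = G.dist r w + G.dist w v ∧
      G.dist u v = G.dist u w + G.dist w v :=
  exists_nca_general G hG r u v
end

section
/- Let h ≥ 1, W ≥ 2 and a ≥ 1 be integers with a^h ∣ W. If the (h,W,a)-family admits a leaf distance labeling scheme with N labels, then the (h−1, W²/a², a²)-family admits a leaf distance labeling scheme with M labels for some natural number M with W·M ≤ N². -/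
/-- Longest common prefix of two binary strings. -/
def lcp : List Bool → List Bool → List Bool
  | [], _ => []
  | _, [] => []
  | a :: u, b :: v => if a = b then a :: lcp u v else []

/-- An `(h,W,a)`-configuration: it assigns to each binary string `s` of length
`j < h` a natural number `x s < W / a ^ j`. -/
def IsConfig (h W a : ℕ) (x : List Bool → ℕ) : Prop :=
  ∀ s : List Bool, s.length < h → x s < W / a ^ s.length

/-- The leaf distance induced by an `(h,W,a)`-configuration `x` on binary
strings of length `h`. -/
def leafDist (h W a : ℕ) (x : List Bool → ℕ) (u v : List Bool) : ℕ :=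
  if u = v then 0
  else 2 * x (lcp u v) + 2 * ∑ i ∈ Finset.Ico ((lcp u v).length + 1) h, W / a ^ i

/-!
Fix a root value `c < W` and embed a configuration `x'` of the squared family into the two
subtrees of the root: since `x' s < (W / a ^ (|s| + 1)) ^ 2`, its quotient and remainder modulo
`W / a ^ (|s| + 1)` are admissible values at `false :: s` and `true :: s`. A leaf `w` gets the pair
of labels of `false :: w` and `true :: w`; the two distances between such leaves reveal the depth
of the common ancestor, the quotient and the remainder, hence `D_{x'}`. All these pairs are at
distance `2 * (c + ∑_{0 < i < h} W / a ^ i)`, and by pigeonhole some `c < W` leaves at most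
`N² / W` pairs at that distance.
-/

open Finset Function

lemma lcp_cons_self (b : Bool) (u v : List Bool) : lcp (b :: u) (b :: v) = b :: lcp u v := by
  simp [lcp]

lemma lcp_cons_of_ne {b c : Bool} (hbc : b ≠ c) (u v : List Bool) :
    lcp (b :: u) (c :: v) = [] := by
  simp [lcp, hbc]

lemma length_lcp_lt : ∀ {u v : List Bool}, u.length = v.length → u ≠ v →
    (lcp u v).length < u.length
  | [], [], _, hne => absurd rfl hne
  | a :: u, b :: v, hl, hne => by
    by_cases hab : a = b
    · subst hab
      rw [lcp_cons_self, List.length_cons, List.length_cons]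
      exact Nat.succ_lt_succ (length_lcp_lt (by simpa using hl) (by simpa using hne))
    · simp [lcp_cons_of_ne hab]

lemma exists_lt_mul_card_fiber_le {β : Type*} [Fintype β] (f : β → ℕ) {g : ℕ → ℕ}
    (hg : Injective g) {W : ℕ} (hW : 0 < W) :
    ∃ c < W, W * #{p | f p = g c} ≤ Fintype.card β := by
  have hcard : #((range W).image g) = W := by rw [card_image_of_injective _ hg, card_range]
  obtain ⟨y, hy, hfiber⟩ := exists_card_fiber_le_of_card_le_nsmul (s := univ) (f := f)
    (b := (Fintype.card β : ℚ) / W) ((nonempty_range_iff.mpr hW.ne').image g)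
    (by rw [hcard, nsmul_eq_mul, mul_div_cancel₀ _ (by positivity), card_univ])
  obtain ⟨c, hc, rfl⟩ := mem_image.mp hy
  refine ⟨c, mem_range.mp hc, ?_⟩
  rw [le_div_iff₀ (by positivity)] at hfiber
  exact_mod_cast (mul_comm _ _).trans_le hfiber

namespace LeafDist

variable {h W a : ℕ}

def tailSum (h W a k : ℕ) : ℕ := ∑ i ∈ Ico k h, W / a ^ i

lemma tailSum_succ {k : ℕ} (hk : k < h) :
    tailSum h W a k = W / a ^ k + tailSum h W a (k + 1) :=
  sum_eq_sum_Ico_succ_bot hk _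

lemma tailSum_antitone : Antitone (tailSum h W a) :=
  fun _ _ hkl => sum_le_sum_of_subset (Ico_subset_Ico hkl le_rfl)

lemma tailSum_of_le {k : ℕ} (hk : h ≤ k) : tailSum h W a k = 0 := by
  simp [tailSum, Ico_eq_empty_of_le hk]

lemma div_pow_pos (hW : 0 < W) (hdvd : a ^ h ∣ W) {i : ℕ} (hi : i ≤ h) : 0 < W / a ^ i := by
  have hdvd_i : a ^ i ∣ W := (pow_dvd_pow a hi).trans hdvd
  exact Nat.div_pos (Nat.le_of_dvd hW hdvd_i) (Nat.pos_of_dvd_of_pos hdvd_i hW)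

lemma tailSum_pos (hW : 0 < W) (hdvd : a ^ h ∣ W) {k : ℕ} (hk : k < h) :
    0 < tailSum h W a k := by
  rw [tailSum_succ hk]
  exact Nat.add_pos_left (div_pow_pos hW hdvd hk.le) _

lemma sq_div_sq_div_pow {j : ℕ} (hdvd : a ^ (j + 1) ∣ W) :
    W ^ 2 / a ^ 2 / (a ^ 2) ^ j = (W / a ^ (j + 1)) ^ 2 := by
  rw [Nat.div_div_eq_div_mul, Nat.div_pow hdvd]
  ring_nf

lemma leafDist_self (x : List Bool → ℕ) (u : List Bool) : leafDist h W a x u u = 0 := by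
  simp [leafDist]

lemma leafDist_of_ne {x : List Bool → ℕ} {u v : List Bool} (huv : u ≠ v) :
    leafDist h W a x u v = 2 * (x (lcp u v) + tailSum h W a ((lcp u v).length + 1)) := by
  rw [leafDist, if_neg huv, tailSum, mul_add]

lemma leafDist_cons_cons {x : List Bool → ℕ} (b : Bool) {u v : List Bool} (huv : u ≠ v) :
    leafDist h W a x (b :: u) (b :: v)
      = 2 * (x (b :: lcp u v) + tailSum h W a ((lcp u v).length + 2)) := by
  rw [leafDist_of_ne (by simpa using huv), lcp_cons_self, List.length_cons]

lemma leafDist_false_true (x : List Bool → ℕ) (u v : List Bool) :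
    leafDist h W a x (false :: u) (true :: v) = 2 * (x [] + tailSum h W a 1) := by
  rw [leafDist_of_ne (by simp), lcp_cons_of_ne (by decide), List.length_nil]

lemma exists_tailSum_le (h W a n : ℕ) : ∃ j, tailSum h W a (j + 2) ≤ n :=
  ⟨h, (tailSum_of_le (by omega)).trans_le n.zero_le⟩

/-- The depth `j` of the common ancestor of two leaves in the same subtree of the root, read off
their half distance `tailSum h W a (j + 2) + α` with `α < W / a ^ (j + 1)`. -/
noncomputable def ancestorDepth (h W a n : ℕ) : ℕ := Nat.find (exists_tailSum_le h W a n)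

lemma ancestorDepth_eq {j α : ℕ} (hj : j + 2 ≤ h) (hα : α < W / a ^ (j + 1)) :
    ancestorDepth h W a (tailSum h W a (j + 2) + α) = j := by
  rw [ancestorDepth, Nat.find_eq_iff]
  refine ⟨Nat.le_add_right _ _, fun j' hj' hle => ?_⟩
  have hsplit : tailSum h W a (j + 1) = W / a ^ (j + 1) + tailSum h W a (j + 2) :=
    tailSum_succ (by omega)
  have hanti := tailSum_antitone (h := h) (W := W) (a := a) (show j' + 2 ≤ j + 1 by omega)
  omega

lemma le_ancestorDepth_zero_add_two (hW : 0 < W) (hdvd : a ^ h ∣ W) :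
    h ≤ ancestorDepth h W a 0 + 2 := by
  by_contra! hlt
  have hzero := Nat.find_spec (exists_tailSum_le h W a 0)
  have hpos := tailSum_pos hW hdvd hlt
  rw [ancestorDepth] at hpos
  omega

/-- Decodes the half distances `m₁`, `m₂` of the pairs `(false :: u, false :: v)` and
`(true :: u, true :: v)` into the half distance of `u`, `v` in the squared family. -/
noncomputable def liftHalfDist (h W a m₁ m₂ : ℕ) : ℕ :=
  let j := ancestorDepth h W a m₁
  let t := tailSum h W a (j + 2)
  (m₁ - t) * (W / a ^ (j + 1)) + (m₂ - t) + tailSum (h - 1) (W ^ 2 / a ^ 2) (a ^ 2) (j + 1)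

lemma liftHalfDist_eq {j α β : ℕ} (hj : j + 2 ≤ h) (hα : α < W / a ^ (j + 1)) :
    liftHalfDist h W a (tailSum h W a (j + 2) + α) (tailSum h W a (j + 2) + β)
      = α * (W / a ^ (j + 1)) + β + tailSum (h - 1) (W ^ 2 / a ^ 2) (a ^ 2) (j + 1) := by
  simp only [liftHalfDist, ancestorDepth_eq hj hα, Nat.add_sub_cancel_left]

lemma liftHalfDist_zero (hW : 0 < W) (hdvd : a ^ h ∣ W) : liftHalfDist h W a 0 0 = 0 := by
  have hdepth := le_ancestorDepth_zero_add_two hW hdvd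
  simp only [liftHalfDist, Nat.zero_sub, zero_mul, add_zero, zero_add]
  exact tailSum_of_le (by omega)

lemma div_lt_of_isConfig {x' : List Bool → ℕ}
    (hx' : IsConfig (h - 1) (W ^ 2 / a ^ 2) (a ^ 2) x') (hdvd : a ^ h ∣ W) {s : List Bool}
    (hs : s.length + 1 < h) :
    x' s / (W / a ^ (s.length + 1)) < W / a ^ (s.length + 1) := by
  refine Nat.div_lt_of_lt_mul ?_
  rw [← sq, ← sq_div_sq_div_pow ((pow_dvd_pow a hs.le).trans hdvd)]
  exact hx' s (by omega)

def splitConfig (W a c : ℕ) (x' : List Bool → ℕ) : List Bool → ℕ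
  | [] => c
  | false :: s => x' s / (W / a ^ (s.length + 1))
  | true :: s => x' s % (W / a ^ (s.length + 1))

lemma isConfig_splitConfig (hW : 0 < W) (hdvd : a ^ h ∣ W) {c : ℕ} (hc : c < W)
    {x' : List Bool → ℕ} (hx' : IsConfig (h - 1) (W ^ 2 / a ^ 2) (a ^ 2) x') :
    IsConfig h W a (splitConfig W a c x') := by
  rintro (_ | ⟨_ | _, s⟩) hs
  · simpa [splitConfig] using hc
  · exact div_lt_of_isConfig hx' hdvd hs
  · exact Nat.mod_lt _ (div_pow_pos hW hdvd hs.le)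

lemma liftHalfDist_splitConfig (hW : 0 < W) (hdvd : a ^ h ∣ W) (c : ℕ)
    {x' : List Bool → ℕ} (hx' : IsConfig (h - 1) (W ^ 2 / a ^ 2) (a ^ 2) x')
    {u v : List Bool} (hu : u.length = h - 1) (hv : v.length = h - 1) :
    2 * liftHalfDist h W a (leafDist h W a (splitConfig W a c x') (false :: u) (false :: v) / 2)
        (leafDist h W a (splitConfig W a c x') (true :: u) (true :: v) / 2)
      = leafDist (h - 1) (W ^ 2 / a ^ 2) (a ^ 2) x' u v := by
  by_cases huv : u = v
  · subst huv
    simp only [leafDist_self, Nat.zero_div, liftHalfDist_zero hW hdvd]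
  set s := lcp u v
  have hs : s.length + 2 ≤ h := by
    have : s.length < u.length := length_lcp_lt (hu.trans hv.symm) huv
    omega
  rw [leafDist_cons_cons _ huv, leafDist_cons_cons _ huv, Nat.mul_div_cancel_left _ two_pos,
    Nat.mul_div_cancel_left _ two_pos, add_comm, add_comm (splitConfig _ _ _ _ _),
    splitConfig, splitConfig, liftHalfDist_eq hs (div_lt_of_isConfig hx' hdvd (by omega)),
    Nat.div_add_mod', leafDist_of_ne huv]

def padTo (n : ℕ) (w : List Bool) : List Bool :=
  if w.length = n then w else List.replicate n false

lemma length_padTo (n : ℕ) (w : List Bool) : (padTo n w).length = n := by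
  unfold padTo
  split_ifs with hw <;> simp [hw]

lemma padTo_of_length {n : ℕ} {w : List Bool} (hw : w.length = n) : padTo n w = w :=
  if_pos hw

end LeafDist

open LeafDist

theorem hWa_scheme_step_general (h W a : ℕ) (hh : 1 ≤ h) (hW : 2 ≤ W)
    (hdvd : a ^ h ∣ W) (N : ℕ)
    (hscheme : ∃ d : Fin N → Fin N → ℕ,
      ∀ x : List Bool → ℕ, IsConfig h W a x →
        ∃ e : List Bool → Fin N,
          ∀ u v : List Bool, u.length = h → v.length = h →
            d (e u) (e v) = leafDist h W a x u v) :
    ∃ M : ℕ, W * M ≤ N ^ 2 ∧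
      ∃ d' : Fin M → Fin M → ℕ,
        ∀ x : List Bool → ℕ, IsConfig (h - 1) (W ^ 2 / a ^ 2) (a ^ 2) x →
          ∃ e' : List Bool → Fin M,
            ∀ u v : List Bool, u.length = h - 1 → v.length = h - 1 →
              d' (e' u) (e' v) = leafDist (h - 1) (W ^ 2 / a ^ 2) (a ^ 2) x u v := by
  obtain ⟨d, hd⟩ := hscheme
  replace hW : 0 < W := by omega
  obtain ⟨c, hcW, hcard⟩ := exists_lt_mul_card_fiber_le (fun p : Fin N × Fin N => d p.1 p.2)
    (g := fun c => 2 * (c + tailSum h W a 1)) (fun c c' hcc' => by simpa using hcc') hW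
  set S : Finset (Fin N × Fin N) := {p | d p.1 p.2 = 2 * (c + tailSum h W a 1)}
  refine ⟨#S, by simpa [sq] using hcard, fun l l' =>
    2 * liftHalfDist h W a (d (S.equivFin.symm l).1.1 (S.equivFin.symm l').1.1 / 2)
      (d (S.equivFin.symm l).1.2 (S.equivFin.symm l').1.2 / 2), fun x' hx' => ?_⟩
  obtain ⟨e, he⟩ := hd _ (isConfig_splitConfig hW hdvd hcW hx')
  have hlen : ∀ b w, (b :: padTo (h - 1) w).length = h := by
    simp only [List.length_cons, length_padTo]
    omega
  have hmem : ∀ w, (e (false :: padTo (h - 1) w), e (true :: padTo (h - 1) w)) ∈ S := by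
    intro w
    simp [S, he _ _ (hlen _ _) (hlen _ _), leafDist_false_true, splitConfig]
  refine ⟨fun w => S.equivFin ⟨_, hmem w⟩, fun u v hu hv => ?_⟩
  simp only [Equiv.symm_apply_apply]
  rw [he _ _ (hlen _ _) (hlen _ _), he _ _ (hlen _ _) (hlen _ _), padTo_of_length hu,
    padTo_of_length hv, liftHalfDist_splitConfig hW hdvd c hx' hu hv]

theorem hWa_scheme_step (h W a : ℕ) (hh : 1 ≤ h) (hW : 2 ≤ W) (ha : 1 ≤ a)
    (hdvd : a ^ h ∣ W) (N : ℕ)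
    (hscheme : ∃ d : Fin N → Fin N → ℕ,
      ∀ x : List Bool → ℕ, IsConfig h W a x →
        ∃ e : List Bool → Fin N,
          ∀ u v : List Bool, u.length = h → v.length = h →
            d (e u) (e v) = leafDist h W a x u v) :
    ∃ M : ℕ, W * M ≤ N ^ 2 ∧
      ∃ d' : Fin M → Fin M → ℕ,
        ∀ x : List Bool → ℕ, IsConfig (h - 1) (W ^ 2 / a ^ 2) (a ^ 2) x →
          ∃ e' : List Bool → Fin M,
            ∀ u v : List Bool, u.length = h - 1 → v.length = h - 1 →
              d' (e' u) (e' v) = leafDist (h - 1) (W ^ 2 / a ^ 2) (a ^ 2) x u v :=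
  hWa_scheme_step_general h W a hh hW hdvd N hscheme
end

section
/- Let h ≥ 1, W ≥ 2 and a ≥ 1 be integers with a^h ∣ W. For every decoder d : List Bool → List Bool → ℕ and every family of encoders assigning to each (h,W,a)-configuration x an encoder e_x from length-h binary strings to List Bool satisfying d (e_x u) (e_x v) = D_x(u,v) for all u, v, there exist a configuration x and a length-h string u such that (e_x u).length ≥ (h/2)·log₂ W − (h·(h−1)/4)·log₂ a − 1. -/
/-!
Restrict to the configurations `x` with `x s < V |s| := W / a ^ |s|` that vanish below depth
`h`, and let `N w` count the labels that leaf `w` receives over them. Two leaf labels determine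
the value at the branching node of the two leaves. Fixing the root value `m` and packing the two
values at `false :: s` and `true :: s` into one value below `V (|s| + 1) ^ 2` turns the pairs of
labels of sibling leaves `false :: w`, `true :: w` into a labelling of the tree of depth `h - 1`,
one for each `m`; the root value separates these. Induction together with the superadditivity of
the geometric mean gives `(∏_{j<h} V j) ^ 2 ^ h ≤ (∏_w N w) ^ 2`. Fewer than `2 ^ (t + 1)` strings
have length at most `t`, so if all labels are that short then `∏_{j<h} V j ≤ 4 ^ (t + 1)`; taking
`log₂` gives the bound.
-/

namespace LeafLabeling

open Finset

theorem card_mul_le_rpow_inv_prod_sum {ι κ : Type*} {L : Finset ι} (hL : L.Nonempty)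
    (M : Finset κ) (c : κ → ι → ℝ) (hc : ∀ m ∈ M, ∀ w ∈ L, 0 ≤ c m w)
    (hS : ∀ w ∈ L, 0 < ∑ m ∈ M, c m w) {P : ℝ} (hP : 0 ≤ P)
    (h : ∀ m ∈ M, P ^ #L ≤ ∏ w ∈ L, c m w) :
    #M * P ≤ (∏ w ∈ L, ∑ m ∈ M, c m w) ^ (#L : ℝ)⁻¹ := by
  set n := #L
  set S : ι → ℝ := fun w => ∑ m ∈ M, c m w
  set Q := ∏ w ∈ L, S w
  have hn : n ≠ 0 := hL.card_pos.ne'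
  have hQ : 0 < Q := prod_pos hS
  -- AM-GM for the normalized values `c m w / S w`, whose sums over `m` are all `1`
  have hamgm : ∀ m ∈ M, P / Q ^ (n⁻¹ : ℝ) ≤ ∑ w ∈ L, (n : ℝ)⁻¹ * (c m w / S w) := by
    intro m hm
    have hcS : ∀ w ∈ L, 0 ≤ c m w / S w := fun w hw => div_nonneg (hc m hm w hw) (hS w hw).le
    calc P / Q ^ (n⁻¹ : ℝ) ≤ (∏ w ∈ L, c m w) ^ (n⁻¹ : ℝ) / Q ^ (n⁻¹ : ℝ) := by
          gcongr
          calc P = (P ^ n) ^ (n⁻¹ : ℝ) := (Real.pow_rpow_inv_natCast hP hn).symm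
            _ ≤ _ := Real.rpow_le_rpow (by positivity) (h m hm) (by positivity)
      _ = ∏ w ∈ L, (c m w / S w) ^ (n⁻¹ : ℝ) := by
          rw [← Real.div_rpow (prod_nonneg (hc m hm)) hQ.le, ← prod_div_distrib,
            Real.finsetProd_rpow _ _ hcS]
      _ ≤ _ := Real.geom_mean_le_arith_mean_weighted L _ _ (fun _ _ => by positivity)
          (by simp [n, hn]) hcS
  rw [← div_le_one (by positivity)]
  calc #M * P / Q ^ (n⁻¹ : ℝ) = ∑ m ∈ M, P / Q ^ (n⁻¹ : ℝ) := by
        rw [sum_const, nsmul_eq_mul, mul_div_assoc]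
    _ ≤ ∑ m ∈ M, ∑ w ∈ L, (n : ℝ)⁻¹ * (c m w / S w) := sum_le_sum hamgm
    _ = ∑ w ∈ L, (n : ℝ)⁻¹ * (S w / S w) := by
        rw [sum_comm]
        simp only [← mul_sum, ← sum_div, S]
    _ = 1 := by
        rw [sum_congr rfl fun w hw => by rw [div_self (hS w hw).ne', mul_one]]
        simp [n, hn]

theorem pow_card_mul_le_prod_sum {ι κ : Type*} (L : Finset ι) (M : Finset κ) (c : κ → ι → ℝ)
    (hc : ∀ m ∈ M, ∀ w ∈ L, 0 ≤ c m w) {P : ℝ} (hP : 0 ≤ P)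
    (h : ∀ m ∈ M, P ^ #L ≤ ∏ w ∈ L, c m w) :
    (#M * P) ^ #L ≤ ∏ w ∈ L, ∑ m ∈ M, c m w := by
  rcases L.eq_empty_or_nonempty with rfl | hL
  · simp
  have hS : ∀ w ∈ L, 0 ≤ ∑ m ∈ M, c m w := fun w hw => sum_nonneg fun m hm => hc m hm w hw
  by_cases hSpos : ∀ w ∈ L, 0 < ∑ m ∈ M, c m w
  · calc (#M * P) ^ #L ≤ ((∏ w ∈ L, ∑ m ∈ M, c m w) ^ (#L : ℝ)⁻¹) ^ #L :=
          pow_le_pow_left₀ (by positivity) (card_mul_le_rpow_inv_prod_sum hL M c hc hSpos hP h) _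
      _ = ∏ w ∈ L, ∑ m ∈ M, c m w := Real.rpow_inv_natCast_pow (prod_nonneg hS) hL.card_pos.ne'
  obtain ⟨w, hw, hw0⟩ : ∃ w ∈ L, ∑ m ∈ M, c m w ≤ 0 := by simpa using hSpos
  have hzero : #M * P = 0 := by
    rcases M.eq_empty_or_nonempty with rfl | ⟨m₀, hm₀⟩
    · simp
    have hc0 : c m₀ w = 0 :=
      le_antisymm ((single_le_sum (fun m hm => hc m hm w hw) hm₀).trans hw0) (hc m₀ hm₀ w hw)
    have hP0 : P ^ #L ≤ 0 := (h m₀ hm₀).trans_eq (prod_eq_zero hw hc0)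
    rw [(pow_eq_zero_iff hL.card_pos.ne').1 (le_antisymm hP0 (by positivity)), mul_zero]
  rw [hzero, zero_pow hL.card_pos.ne']
  exact prod_nonneg hS

@[simp] lemma lcp_cons_self (b : Bool) (u v : List Bool) :
    lcp (b :: u) (b :: v) = b :: lcp u v := by
  simp [lcp]

def leaves : ℕ → Finset (List Bool)
  | 0 => {[]}
  | g + 1 => (univ ×ˢ leaves g).image fun p => p.1 :: p.2

lemma cons_uncurry_injective : Function.Injective fun p : Bool × List Bool => p.1 :: p.2 :=
  fun _ _ h => Prod.ext (List.head_eq_of_cons_eq h) (List.tail_eq_of_cons_eq h)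

@[simp] lemma mem_leaves {g : ℕ} {w : List Bool} : w ∈ leaves g ↔ w.length = g := by
  induction g generalizing w with
  | zero => simp [leaves]
  | succ g ih => cases w <;> simp [leaves, ih]

lemma card_leaves (g : ℕ) : #(leaves g) = 2 ^ g := by
  induction g with
  | zero => rfl
  | succ g ih => simp [leaves, card_image_of_injective _ cons_uncurry_injective, ih, pow_succ']

lemma prod_leaves_succ {M : Type*} [CommMonoid M] (g : ℕ) (F : List Bool → M) :
    ∏ w ∈ leaves (g + 1), F w = ∏ w ∈ leaves g, F (false :: w) * F (true :: w) := by
  rw [leaves, prod_image cons_uncurry_injective.injOn, prod_product_right]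
  simp [mul_comm]

def nodes (g : ℕ) : Finset (List Bool) := (range g).biUnion leaves

@[simp] lemma mem_nodes {g : ℕ} {s : List Bool} : s ∈ nodes g ↔ s.length < g := by
  simp [nodes]

lemma card_nodes_lt (g : ℕ) : #(nodes g) < 2 ^ g :=
  card_biUnion_le.trans_lt <| by
    simpa [card_leaves] using Nat.geomSum_lt le_rfl (s := range g) (n := g) (by simp)

open Classical in
noncomputable def configs (g : ℕ) (V : ℕ → ℕ) : Finset (List Bool → ℕ) :=
  (Fintype.piFinset fun s : nodes g => range (V s.1.length)).image
    fun f s => if hs : s ∈ nodes g then f ⟨s, hs⟩ else 0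

lemma mem_configs {g : ℕ} {V : ℕ → ℕ} {x : List Bool → ℕ} :
    x ∈ configs g V ↔ (∀ s : List Bool, s.length < g → x s < V s.length) ∧
      ∀ s : List Bool, g ≤ s.length → x s = 0 := by
  classical
  constructor
  · intro hx
    obtain ⟨f, hf, rfl⟩ := mem_image.1 hx
    refine ⟨fun s hs => ?_, fun s hs => by simp [hs]⟩
    simpa [hs] using Fintype.mem_piFinset.1 hf ⟨s, mem_nodes.2 hs⟩
  · rintro ⟨hlt, hzero⟩
    refine mem_image.2 ⟨fun s => x s.1, Fintype.mem_piFinset.2 fun s => ?_, funext fun s => ?_⟩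
    · simpa using hlt s.1 (mem_nodes.1 s.2)
    · by_cases hs : s.length < g
      · simp [hs]
      · simp [hs, hzero s (not_lt.1 hs)]

lemma zero_mem_configs {g : ℕ} {V : ℕ → ℕ} (hV : ∀ j < g, 0 < V j) : 0 ∈ configs g V :=
  mem_configs.2 ⟨fun _ hs => hV _ hs, fun _ _ => rfl⟩

section Counting

variable {Λ : Type*}

noncomputable def labelCount [DecidableEq Λ] (g : ℕ) (V : ℕ → ℕ)
    (E : (List Bool → ℕ) → List Bool → Λ) (w : List Bool) : ℕ :=
  #((configs g V).image (E · w))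

lemma labelCount_pos [DecidableEq Λ] {g : ℕ} {V : ℕ → ℕ} (hV : ∀ j < g, 0 < V j)
    (E : (List Bool → ℕ) → List Bool → Λ) (w : List Bool) : 0 < labelCount g V E w :=
  card_pos.2 ⟨_, mem_image_of_mem _ (zero_mem_configs hV)⟩

def DeterminesBranchValues (g : ℕ) (V : ℕ → ℕ) (E : (List Bool → ℕ) → List Bool → Λ) : Prop :=
  ∀ u ∈ leaves g, ∀ v ∈ leaves g, u ≠ v → ∀ x ∈ configs g V, ∀ y ∈ configs g V,
    E x u = E y u → E x v = E y v → x (lcp u v) = y (lcp u v)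

def merge (V : ℕ → ℕ) (m : ℕ) (ν : List Bool → ℕ) : List Bool → ℕ
  | [] => m
  | false :: s => ν s % V (s.length + 1)
  | true :: s => ν s / V (s.length + 1)

lemma merge_mem_configs {k m : ℕ} {V : ℕ → ℕ} {ν : List Bool → ℕ} (hm : m < V 0)
    (hν : ν ∈ configs k fun j => V (j + 1) ^ 2) : merge V m ν ∈ configs (k + 1) V := by
  obtain ⟨hlt, hzero⟩ := mem_configs.1 hν
  refine mem_configs.2 ⟨?_, ?_⟩
  · rintro (_ | ⟨_ | _, s⟩) hs
    · exact hm
    all_goals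
      have hνs := hlt s (by simpa using hs)
      have hV : 0 < V (s.length + 1) := Nat.pos_of_ne_zero fun h0 => by simp [h0] at hνs
    · exact Nat.mod_lt _ hV
    · exact Nat.div_lt_of_lt_mul (by simpa [sq] using hνs)
  · rintro (_ | ⟨_ | _, s⟩) hs <;> simp_all [merge]

lemma eq_of_merge_cons_eq {V : ℕ → ℕ} {m m' : ℕ} {ν μ : List Bool → ℕ} {s : List Bool}
    (hf : merge V m ν (false :: s) = merge V m' μ (false :: s))
    (ht : merge V m ν (true :: s) = merge V m' μ (true :: s)) : ν s = μ s := by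
  simp only [merge] at hf ht
  rw [← Nat.div_add_mod (ν s) (V (s.length + 1)), ht, hf, Nat.div_add_mod]

def pairLabel (V : ℕ → ℕ) (E : (List Bool → ℕ) → List Bool → Λ) (m : ℕ) (ν : List Bool → ℕ)
    (w : List Bool) : Λ × Λ :=
  (E (merge V m ν) (false :: w), E (merge V m ν) (true :: w))

variable {k : ℕ} {V : ℕ → ℕ} {E : (List Bool → ℕ) → List Bool → Λ}

lemma DeterminesBranchValues.pairLabel (hE : DeterminesBranchValues (k + 1) V E) {m : ℕ}
    (hm : m < V 0) : DeterminesBranchValues k (fun j => V (j + 1) ^ 2) (pairLabel V E m) := by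
  intro u hu v hv huv ν hν μ hμ hlu hlv
  simp only [LeafLabeling.pairLabel, Prod.mk.injEq] at hlu hlv
  have hcons (b : Bool) : merge V m ν (b :: lcp u v) = merge V m μ (b :: lcp u v) := by
    simpa using hE (b :: u) (by simpa using hu) (b :: v) (by simpa using hv) (by simpa using huv)
      _ (merge_mem_configs hm hν) _ (merge_mem_configs hm hμ)
      (by cases b <;> simp [hlu]) (by cases b <;> simp [hlv])
  exact eq_of_merge_cons_eq (hcons false) (hcons true)

lemma sum_labelCount_pairLabel_le [DecidableEq Λ] (hE : DeterminesBranchValues (k + 1) V E)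
    {w : List Bool} (hw : w ∈ leaves k) :
    ∑ m ∈ range (V 0), labelCount k (fun j => V (j + 1) ^ 2) (pairLabel V E m) w ≤
      labelCount (k + 1) V E (false :: w) * labelCount (k + 1) V E (true :: w) := by
  classical
  simp only [labelCount]
  rw [← card_product, ← card_biUnion]
  · refine card_le_card <| biUnion_subset.2 fun m hm => image_subset_iff.2 fun ν hν => ?_
    have hx := merge_mem_configs (mem_range.1 hm) hν
    exact mem_product.2 ⟨mem_image_of_mem _ hx, mem_image_of_mem _ hx⟩
  -- `false :: w` and `true :: w` branch at the root, so their labels determine the root value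
  · intro m₁ hm₁ m₂ hm₂ hne
    refine disjoint_left.2 fun p hp₁ hp₂ => hne ?_
    obtain ⟨ν, hν, rfl⟩ := mem_image.1 hp₁
    obtain ⟨μ, hμ, hνμ⟩ := mem_image.1 hp₂
    simp only [pairLabel, Prod.mk.injEq] at hνμ
    simpa [merge, lcp] using hE (false :: w) (by simpa using hw) (true :: w) (by simpa using hw)
      (by simp) _ (merge_mem_configs (mem_range.1 hm₁) hν) _
      (merge_mem_configs (mem_range.1 hm₂) hμ) hνμ.1.symm hνμ.2.symm

theorem prod_pow_le_prod_labelCount_sq [DecidableEq Λ] (g : ℕ) (V : ℕ → ℕ)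
    (hV : ∀ j < g, 0 < V j) (E : (List Bool → ℕ) → List Bool → Λ)
    (hE : DeterminesBranchValues g V E) :
    (∏ j ∈ range g, V j) ^ 2 ^ g ≤ (∏ w ∈ leaves g, labelCount g V E w) ^ 2 := by
  induction g generalizing Λ V with
  | zero => simpa [leaves, Nat.one_le_iff_ne_zero] using (labelCount_pos hV E []).ne'
  | succ k ih =>
    set P := ∏ j ∈ range k, V (j + 1)
    set N : ℕ → List Bool → ℕ := fun m => labelCount k (fun j => V (j + 1) ^ 2) (pairLabel V E m)
    have hV' : ∀ j < k, 0 < V (j + 1) ^ 2 := fun j hj => pow_pos (hV _ (by omega)) 2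
    have hIH : ∀ m ∈ range (V 0), P ^ 2 ^ k ≤ ∏ w ∈ leaves k, N m w := by
      intro m hm
      have := ih _ hV' _ (hE.pairLabel (mem_range.1 hm))
      rw [prod_pow, ← pow_mul, mul_comm, pow_mul] at this
      exact (pow_le_pow_iff_left₀ (by positivity) (by positivity) two_ne_zero).1 this
    have hsuper : (V 0 * P) ^ 2 ^ k ≤ ∏ w ∈ leaves k, ∑ m ∈ range (V 0), N m w := by
      have := pow_card_mul_le_prod_sum (leaves k) (range (V 0)) (fun m w => (N m w : ℝ))
        (fun _ _ _ _ => by positivity) (P := P) (by positivity)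
        fun m hm => by exact_mod_cast card_leaves k ▸ hIH m hm
      rw [card_range, card_leaves] at this
      exact_mod_cast this
    calc (∏ j ∈ range (k + 1), V j) ^ 2 ^ (k + 1) = ((V 0 * P) ^ 2 ^ k) ^ 2 := by
          rw [prod_range_succ', mul_comm, pow_succ, pow_mul]
      _ ≤ (∏ w ∈ leaves k,
            labelCount (k + 1) V E (false :: w) * labelCount (k + 1) V E (true :: w)) ^ 2 := by
          gcongr
          exact hsuper.trans <| prod_le_prod' fun w hw => sum_labelCount_pairLabel_le hE hw
      _ = (∏ w ∈ leaves (k + 1), labelCount (k + 1) V E w) ^ 2 := by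
          rw [prod_leaves_succ]

lemma labelCount_le_two_pow {g t : ℕ} {E : (List Bool → ℕ) → List Bool → List Bool}
    {w : List Bool} (ht : ∀ x ∈ configs g V, (E x w).length ≤ t) :
    labelCount g V E w ≤ 2 ^ (t + 1) :=
  (card_le_card <| image_subset_iff.2 fun x hx => mem_nodes.2 (Nat.lt_succ_of_le (ht x hx))).trans
    (card_nodes_lt _).le

theorem prod_le_two_pow_of_length_le {g t : ℕ} (hV : ∀ j < g, 0 < V j)
    {E : (List Bool → ℕ) → List Bool → List Bool} (hE : DeterminesBranchValues g V E)
    (ht : ∀ x ∈ configs g V, ∀ w ∈ leaves g, (E x w).length ≤ t) :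
    ∏ j ∈ range g, V j ≤ 2 ^ (2 * (t + 1)) := by
  refine (pow_le_pow_iff_left₀ (by positivity) (by positivity) (pow_ne_zero g two_ne_zero)).1 ?_
  calc (∏ j ∈ range g, V j) ^ 2 ^ g ≤ (∏ w ∈ leaves g, labelCount g V E w) ^ 2 :=
        prod_pow_le_prod_labelCount_sq g V hV E hE
    _ ≤ (∏ _w ∈ leaves g, 2 ^ (t + 1)) ^ 2 := by
        gcongr with w hw
        exact labelCount_le_two_pow fun x hx => ht x hx w hw
    _ = (2 ^ (2 * (t + 1))) ^ 2 ^ g := by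
        rw [prod_const, card_leaves, ← pow_mul, ← pow_mul, ← pow_mul]
        ring_nf

theorem exists_prod_le_two_pow_length {g : ℕ} (hV : ∀ j < g, 0 < V j)
    {E : (List Bool → ℕ) → List Bool → List Bool} (hE : DeterminesBranchValues g V E) :
    ∃ x ∈ configs g V, ∃ w ∈ leaves g, ∏ j ∈ range g, V j ≤ 2 ^ (2 * ((E x w).length + 1)) := by
  set f : (List Bool → ℕ) × List Bool → ℕ := fun p => (E p.1 p.2).length
  obtain ⟨⟨x, w⟩, hxw, hmax⟩ := exists_mem_eq_sup (configs g V ×ˢ leaves g)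
    ⟨(0, List.replicate g false), mem_product.2 ⟨zero_mem_configs hV, by simp⟩⟩ f
  obtain ⟨hx, hw⟩ := mem_product.1 hxw
  have hprod := prod_le_two_pow_of_length_le hV hE
    fun y hy v hv => le_sup (f := f) (b := (y, v)) (mem_product.2 ⟨hy, hv⟩)
  rw [hmax] at hprod
  exact ⟨x, hx, w, hw, hprod⟩

end Counting

lemma determinesBranchValues_of_leafDist {h W a : ℕ} {d : List Bool → List Bool → ℕ}
    {e : (List Bool → ℕ) → List Bool → List Bool}
    (he : ∀ x : List Bool → ℕ, IsConfig h W a x → ∀ u v : List Bool,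
      u.length = h → v.length = h → d (e x u) (e x v) = leafDist h W a x u v) :
    DeterminesBranchValues h (fun j => W / a ^ j) e := by
  intro u hu v hv huv x hx y hy hxu hxv
  have hdist := (he x (mem_configs.1 hx).1 u v (mem_leaves.1 hu) (mem_leaves.1 hv)).symm.trans <|
    hxu ▸ hxv ▸ he y (mem_configs.1 hy).1 u v (mem_leaves.1 hu) (mem_leaves.1 hv)
  simpa [leafDist, huv] using hdist

lemma div_pow_pos_of_dvd {W a j : ℕ} (hW : W ≠ 0) (hdvd : a ^ j ∣ W) : 0 < W / a ^ j :=
  Nat.div_pos (Nat.le_of_dvd (Nat.pos_of_ne_zero hW) hdvd)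
    (Nat.pos_of_ne_zero (ne_zero_of_dvd_ne_zero hW hdvd))

lemma logb_prod_div_pow {h W a : ℕ} (hW : W ≠ 0) (hdvd : a ^ h ∣ W) :
    Real.logb 2 (∏ j ∈ range h, ((W / a ^ j : ℕ) : ℝ)) =
      h * Real.logb 2 W - h * (h - 1) / 2 * Real.logb 2 a := by
  have hdvd' : ∀ j ∈ range h, a ^ j ∣ W := fun j hj =>
    (pow_dvd_pow a (mem_range.1 hj).le).trans hdvd
  have hterm : ∀ j ∈ range h,
      Real.logb 2 ((W / a ^ j : ℕ) : ℝ) = Real.logb 2 W - j * Real.logb 2 a := fun j hj => by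
    have ha : (a : ℝ) ^ j ≠ 0 := by exact_mod_cast ne_zero_of_dvd_ne_zero hW (hdvd' j hj)
    rw [Nat.cast_div (hdvd' j hj) (by exact_mod_cast ha), Nat.cast_pow,
      Real.logb_div (by exact_mod_cast hW) ha, Real.logb_pow]
  have hgauss (n : ℕ) : ∑ j ∈ range n, (j : ℝ) = n * (n - 1) / 2 := by
    induction n with
    | zero => simp
    | succ n ih => rw [sum_range_succ, ih]; push_cast; ring
  rw [Real.logb_prod _ _ fun j hj => ?_, sum_congr rfl hterm, sum_sub_distrib, ← sum_mul, hgauss]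
  · simp
  · exact_mod_cast (div_pow_pos_of_dvd hW (hdvd' j hj)).ne'

end LeafLabeling

open LeafLabeling Finset

theorem hWa_label_length_lower_bound_general (h W a : ℕ) (hW : 2 ≤ W)
    (hdvd : a ^ h ∣ W)
    (d : List Bool → List Bool → ℕ)
    (e : (List Bool → ℕ) → List Bool → List Bool)
    (he : ∀ x : List Bool → ℕ, IsConfig h W a x →
      ∀ u v : List Bool, u.length = h → v.length = h →
        d (e x u) (e x v) = leafDist h W a x u v) :
    ∃ x : List Bool → ℕ, IsConfig h W a x ∧
      ∃ u : List Bool, u.length = h ∧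
        ((e x u).length : ℝ) ≥
          (h : ℝ) / 2 * Real.logb 2 W -
            (h : ℝ) * ((h : ℝ) - 1) / 4 * Real.logb 2 a - 1 := by
  have hW0 : W ≠ 0 := by omega
  have hV : ∀ j < h, 0 < W / a ^ j := fun j hj =>
    div_pow_pos_of_dvd hW0 ((pow_dvd_pow a hj.le).trans hdvd)
  obtain ⟨x, hx, u, hu, hprod⟩ :=
    exists_prod_le_two_pow_length hV (determinesBranchValues_of_leafDist he)
  refine ⟨x, (mem_configs.1 hx).1, u, mem_leaves.1 hu, ?_⟩
  have hlog : Real.logb 2 (∏ j ∈ range h, ((W / a ^ j : ℕ) : ℝ)) ≤ 2 * ((e x u).length + 1) :=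
    calc Real.logb 2 (∏ j ∈ range h, ((W / a ^ j : ℕ) : ℝ))
        ≤ Real.logb 2 ((2 : ℝ) ^ (2 * ((e x u).length + 1))) :=
          Real.logb_le_logb_of_le one_lt_two
            (prod_pos fun j hj => by exact_mod_cast hV j (mem_range.1 hj))
            (by exact_mod_cast hprod)
      _ = 2 * ((e x u).length + 1) := by simp [Real.logb_pow]
  rw [logb_prod_div_pow hW0 hdvd] at hlog
  linarith

theorem hWa_label_length_lower_bound (h W a : ℕ) (hh : 1 ≤ h) (hW : 2 ≤ W)
    (ha : 1 ≤ a) (hdvd : a ^ h ∣ W)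
    (d : List Bool → List Bool → ℕ)
    (e : (List Bool → ℕ) → List Bool → List Bool)
    (he : ∀ x : List Bool → ℕ, IsConfig h W a x →
      ∀ u v : List Bool, u.length = h → v.length = h →
        d (e x u) (e x v) = leafDist h W a x u v) :
    ∃ x : List Bool → ℕ, IsConfig h W a x ∧
      ∃ u : List Bool, u.length = h ∧
        ((e x u).length : ℝ) ≥
          (h : ℝ) / 2 * Real.logb 2 W -
            (h : ℝ) * ((h : ℝ) - 1) / 4 * Real.logb 2 a - 1 :=
  hWa_label_length_lower_bound_general h W a hW hdvd d e he
end

section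
/- For every real ε > 0 there exists a constant C > 0 such that for every integer n ≥ 2 there is a (1+ε)-stretch distance labeling scheme for trees on n vertices with all labels of length at most C·log₂ n. Precisely: there exists a decoder d : List Bool → List Bool → ℕ such that for every simple graph G : SimpleGraph (Fin n) with G.IsTree there exists an encoder e : Fin n → List Bool with (e u).length ≤ C·log₂ n for all u, and G.dist u v ≤ d (e u) (e v) and (d (e u) (e v) : ℝ) ≤ (1+ε)·(G.dist u v : ℝ) for all u, v. -/
/-!
Root the tree and split it into heavy paths, the heavy child of a vertex being a child with the
largest subtree. The path from the root to `u` takes at most `log₂ n` light edges, and if each light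
vertex is ranked by size among the light vertices hanging off the same heavy path, the ranks along
a root path multiply to at most `n`; so the sequence of ranks identifies the light ancestors of `u`
in `O(log n)` bits. Two rank sequences agree exactly as far as the light ancestors of `u` and `v`
do, and the lowest common ancestor is then the higher of the two points where `u` and `v` leave
the last heavy path they share.

The label only knows the depths of these exit points approximately: the distance from `u` up to
each exit point is rounded up to a grid growing geometrically with ratio about `1 + 1/M`. The grid
indices decrease along the root path, so their differences add up to `O(M log n)` and take
`O(M log n)` bits in all. The estimated lowest common ancestor then lies above the true one by
at most a `1/M` fraction of the distance, which gives stretch `(M + 2) / M ≤ 1 + ε`.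
-/

namespace SimpleGraph

variable {V : Type*} {G : SimpleGraph V}

lemma Connected.exists_adj_dist_add_one (hG : G.Connected) {u r : V} (hu : u ≠ r) :
    ∃ y, G.Adj u y ∧ G.dist y r + 1 = G.dist u r := by
  obtain ⟨p, hp⟩ := hG.exists_walk_length_eq_dist u r
  cases p with
  | nil => exact absurd rfl hu
  | @cons _ y _ hadj q =>
    refine ⟨y, hadj, le_antisymm ?_ ?_⟩
    · simpa [← hp] using dist_le q
    · have := hG.dist_triangle (u := u) (w := r) (v := y)
      rw [dist_eq_one_iff_adj.mpr hadj] at this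
      omega

lemma IsTree.eq_of_adj_of_dist_add_one (hG : G.IsTree) {u r y₁ y₂ : V} (h₁ : G.Adj u y₁)
    (h₂ : G.Adj u y₂) (hd₁ : G.dist y₁ r + 1 = G.dist u r) (hd₂ : G.dist y₂ r + 1 = G.dist u r) :
    y₁ = y₂ := by
  classical
  have path_through {y : V} (h : G.Adj u y) (hd : G.dist y r + 1 = G.dist u r) :
      ∃ q : G.Walk y r, (Walk.cons h q).IsPath := by
    obtain ⟨q, hq, hlen⟩ := hG.connected.exists_path_of_dist y r
    refine ⟨q, hq.cons fun hu => ?_⟩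
    have := dist_le (q.dropUntil u hu)
    have := q.length_dropUntil_le_length hu
    omega
  obtain ⟨q₁, hq₁⟩ := path_through h₁ hd₁
  obtain ⟨q₂, hq₂⟩ := path_through h₂ hd₂
  have := congrArg (fun p : G.Path u r => p.1.snd)
    ((hG.isAcyclic.subsingleton_path u r).elim ⟨_, hq₁⟩ ⟨_, hq₂⟩)
  simpa using this

end SimpleGraph

namespace TreeLabeling

section Encoding

open List

def binaryDigits (x : ℕ) : List Bool := (Nat.digits 2 x).map (· == 1)

lemma map_toNat_binaryDigits (x : ℕ) : (binaryDigits x).map Bool.toNat = Nat.digits 2 x := by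
  rw [binaryDigits, map_map]
  conv_rhs => rw [← map_id (Nat.digits 2 x)]
  refine map_congr_left fun d hd => ?_
  have : d < 2 := Nat.digits_lt_base one_lt_two hd
  interval_cases d <;> rfl

lemma binaryDigits_injective : Function.Injective binaryDigits := fun x y h =>
  Nat.digits.injective 2 <| by rw [← map_toNat_binaryDigits, h, map_toNat_binaryDigits]

lemma length_binaryDigits_le (x : ℕ) : (binaryDigits x).length ≤ Nat.log 2 x + 1 := by
  rw [binaryDigits, length_map, Nat.digits_length_le_iff one_lt_two]
  exact Nat.lt_pow_succ_log_self one_lt_two x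

/-- Elias-gamma style self-delimiting code. -/
def encodeNat (x : ℕ) : List Bool :=
  replicate (binaryDigits x).length true ++ false :: binaryDigits x

lemma replicate_true_append_false_inj :
    ∀ {k₁ k₂ : ℕ} {r₁ r₂ : List Bool},
      replicate k₁ true ++ false :: r₁ = replicate k₂ true ++ false :: r₂ → k₁ = k₂ ∧ r₁ = r₂
  | 0, 0, _, _, h => by simpa using h
  | 0, _ + 1, _, _, h => by simp [replicate_succ] at h
  | _ + 1, 0, _, _, h => by simp [replicate_succ] at h
  | _ + 1, _ + 1, _, _, h => by
    simp only [replicate_succ, cons_append, cons.injEq, true_and] at h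
    exact (replicate_true_append_false_inj h).imp (congrArg (· + 1)) id

lemma encodeNat_append_inj {a b : ℕ} {s t : List Bool}
    (h : encodeNat a ++ s = encodeNat b ++ t) : a = b ∧ s = t := by
  simp only [encodeNat, append_assoc, cons_append] at h
  obtain ⟨hlen, hrest⟩ := replicate_true_append_false_inj h
  obtain ⟨hdig, hst⟩ := append_inj hrest hlen
  exact ⟨binaryDigits_injective hdig, hst⟩

lemma length_encodeNat_le (x : ℕ) : (encodeNat x).length ≤ 2 * Nat.log 2 x + 3 := by
  have := length_binaryDigits_le x
  simp only [encodeNat, length_append, length_replicate, length_cons]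
  omega

lemma sum_length_encodeNat_le (l : List ℕ) :
    (l.map (encodeNat · |>.length)).sum ≤ 2 * (l.map (Nat.log 2)).sum + 3 * l.length := by
  induction l with
  | nil => simp
  | cons x l ih =>
    have := length_encodeNat_le x
    simp only [map_cons, sum_cons, length_cons]
    omega

def encodeList (l : List ℕ) : List Bool := encodeNat l.length ++ l.flatMap encodeNat

lemma flatMap_encodeNat_append_inj :
    ∀ {l₁ l₂ : List ℕ} {s t : List Bool}, l₁.length = l₂.length →
      l₁.flatMap encodeNat ++ s = l₂.flatMap encodeNat ++ t → l₁ = l₂ ∧ s = t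
  | [], [], _, _, _, h => by simpa using h
  | a :: l₁, b :: l₂, _, _, hlen, h => by
    simp only [flatMap_cons, append_assoc] at h
    obtain ⟨rfl, hrest⟩ := encodeNat_append_inj h
    obtain ⟨rfl, rfl⟩ := flatMap_encodeNat_append_inj (by simpa using hlen) hrest
    exact ⟨rfl, rfl⟩

lemma encodeList_append_inj {l₁ l₂ : List ℕ} {s t : List Bool}
    (h : encodeList l₁ ++ s = encodeList l₂ ++ t) : l₁ = l₂ ∧ s = t := by
  simp only [encodeList, append_assoc] at h
  obtain ⟨hlen, hrest⟩ := encodeNat_append_inj h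
  exact flatMap_encodeNat_append_inj hlen hrest

lemma length_encodeList (l : List ℕ) :
    (encodeList l).length = (encodeNat l.length).length + (l.map (encodeNat · |>.length)).sum := by
  simp [encodeList, length_flatMap]

end Encoding

section Grid

/-- Grid points growing geometrically with ratio about `1 + 1/M`. -/
def geomGrid (M : ℕ) : ℕ → ℕ
  | 0 => 0
  | τ + 1 => geomGrid M τ + geomGrid M τ / M + 1

variable (M : ℕ)

lemma geomGrid_succ (τ : ℕ) : geomGrid M (τ + 1) = geomGrid M τ + geomGrid M τ / M + 1 := rfl

lemma geomGrid_strictMono : StrictMono (geomGrid M) :=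
  strictMono_nat_of_lt_succ fun τ => by
    rw [geomGrid_succ]; exact Nat.lt_add_one_of_le (Nat.le_add_right _ _)

lemma le_geomGrid (τ : ℕ) : τ ≤ geomGrid M τ := (geomGrid_strictMono M).le_apply

def gridIndex (r : ℕ) : ℕ := Nat.find (p := fun τ => r ≤ geomGrid M τ) ⟨r, le_geomGrid M r⟩

lemma le_geomGrid_gridIndex (r : ℕ) : r ≤ geomGrid M (gridIndex M r) :=
  Nat.find_spec (p := fun τ => r ≤ geomGrid M τ) ⟨r, le_geomGrid M r⟩

lemma gridIndex_le_of_le {r τ : ℕ} (h : r ≤ geomGrid M τ) : gridIndex M r ≤ τ :=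
  Nat.find_min' _ h

@[simp] lemma gridIndex_zero : gridIndex M 0 = 0 :=
  Nat.le_zero.mp (gridIndex_le_of_le M (Nat.zero_le _))

lemma gridIndex_mono : Monotone (gridIndex M) := fun _ _ h =>
  gridIndex_le_of_le M (h.trans (le_geomGrid_gridIndex M _))

lemma mul_geomGrid_gridIndex_le (r : ℕ) : M * geomGrid M (gridIndex M r) ≤ (M + 1) * r := by
  rcases h : gridIndex M r with _ | τ
  · simp [geomGrid]
  have hlt : geomGrid M τ < r := by
    by_contra! hle
    have := gridIndex_le_of_le M hle
    omega
  have := Nat.mul_div_le (geomGrid M τ) M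
  rw [geomGrid_succ]
  nlinarith

lemma geomGrid_add_mul_le (τ j : ℕ) :
    geomGrid M τ + j * (geomGrid M τ / M + 1) ≤ geomGrid M (τ + j) := by
  induction j with
  | zero => simp
  | succ j ih =>
    have hmono : geomGrid M τ ≤ geomGrid M (τ + j) := (geomGrid_strictMono M).monotone (by omega)
    have := Nat.div_le_div_right (c := M) hmono
    rw [← add_assoc, geomGrid_succ]
    nlinarith

lemma two_mul_geomGrid_lt (hM : 1 ≤ M) (τ : ℕ) : 2 * geomGrid M τ < geomGrid M (τ + M) := by
  have := geomGrid_add_mul_le M τ M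
  have := Nat.div_add_mod (geomGrid M τ) M
  have := Nat.mod_lt (geomGrid M τ) hM
  nlinarith

lemma two_pow_le_geomGrid (hM : 1 ≤ M) (j : ℕ) : 2 ^ j ≤ geomGrid M (M * j) + 1 := by
  induction j with
  | zero => simp
  | succ j ih =>
    have := two_mul_geomGrid_lt M hM (M * j)
    rw [pow_succ, mul_add_one]
    omega

lemma gridIndex_le_log (hM : 1 ≤ M) (r : ℕ) : gridIndex M r ≤ M * (Nat.log 2 r + 1) := by
  apply gridIndex_le_of_le
  have := Nat.lt_pow_succ_log_self one_lt_two r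
  have := two_pow_le_geomGrid M hM (Nat.log 2 r + 1)
  omega

/-- Rounding the gap `D - d` up to a grid point underestimates `d` with relative error `1/M`. -/
lemma sub_geomGrid_gridIndex_le {d D : ℕ} (h : d ≤ D) :
    D - geomGrid M (gridIndex M (D - d)) ≤ d := by
  have := le_geomGrid_gridIndex M (D - d)
  omega

lemma mul_sub_sub_geomGrid_gridIndex_le {d D : ℕ} (h : d ≤ D) :
    M * (d - (D - geomGrid M (gridIndex M (D - d)))) ≤ D - d := by
  have hle := le_geomGrid_gridIndex M (D - d)
  have hmul := mul_geomGrid_gridIndex_le M (D - d)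
  set f := geomGrid M (gridIndex M (D - d))
  calc M * (d - (D - f)) ≤ M * (f - (D - d)) := Nat.mul_le_mul_left _ (by omega)
    _ = M * f - M * (D - d) := Nat.mul_sub _ _ _
    _ ≤ D - d := by rw [add_one_mul] at hmul; omega

end Grid

section Stretch

lemma le_estimate_and_mul_estimate_le {M du dv eu ev au av : ℕ} (heu : eu ≤ du) (hev : ev ≤ dv)
    (hau : au ≤ eu) (hav : av ≤ ev) (hMu : M * (eu - au) ≤ du - eu)
    (hMv : M * (ev - av) ≤ dv - ev) :
    du + dv - 2 * min eu ev ≤ du + dv - 2 * min au av ∧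
      M * (du + dv - 2 * min au av) ≤ (M + 2) * (du + dv - 2 * min eu ev) := by
  set l := min eu ev
  set A := min au av
  have hA : M * (l - A) ≤ du + dv - 2 * l := by
    rcases min_choice au av with h | h <;> simp only [A, h]
    · calc M * (l - au) ≤ M * (eu - au) := Nat.mul_le_mul_left _ (by omega)
        _ ≤ du + dv - 2 * l := by omega
    · calc M * (l - av) ≤ M * (ev - av) := Nat.mul_le_mul_left _ (by omega)
        _ ≤ du + dv - 2 * l := by omega
  have hsplit : du + dv - 2 * A = (du + dv - 2 * l) + 2 * (l - A) := by omega
  refine ⟨by omega, ?_⟩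
  calc M * (du + dv - 2 * A) = M * (du + dv - 2 * l) + 2 * (M * (l - A)) := by rw [hsplit]; ring
    _ ≤ M * (du + dv - 2 * l) + 2 * (du + dv - 2 * l) := by omega
    _ = (M + 2) * (du + dv - 2 * l) := by ring

lemma exists_nat_two_le_mul {ε : ℝ} (hε : 0 < ε) : ∃ M : ℕ, 1 ≤ M ∧ 2 ≤ ε * M := by
  refine ⟨⌈2 / ε⌉₊ + 1, le_add_self, ?_⟩
  have := Nat.le_ceil (2 / ε)
  rw [div_le_iff₀' hε] at this
  push_cast
  nlinarith

lemma le_one_add_mul_of_mul_le {M a d : ℕ} {ε : ℝ} (hM : 1 ≤ M) (hεM : 2 ≤ ε * M)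
    (h : M * a ≤ (M + 2) * d) : (a : ℝ) ≤ (1 + ε) * d := by
  have hMpos : (0 : ℝ) < M := by exact_mod_cast hM
  have h' : (M : ℝ) * a ≤ (M + 2) * d := by exact_mod_cast h
  refine le_of_mul_le_mul_left (h'.trans ?_) hMpos
  nlinarith [d.cast_nonneg (α := ℝ)]

end Stretch

section Lists

open List

def diffs : List ℕ → List ℕ
  | a :: b :: l => (a - b) :: diffs (b :: l)
  | l => l

@[simp] lemma length_diffs : ∀ l : List ℕ, (diffs l).length = l.length
  | [] | [_] => rfl
  | _ :: b :: l => by simp [diffs, length_diffs (b :: l)]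

lemma sum_drop_diffs :
    ∀ {l : List ℕ}, l.Pairwise (· ≥ ·) → ∀ m, ((diffs l).drop m).sum = l.getD m 0
  | [], _, m => by simp [diffs]
  | [a], _, m => by cases m <;> simp [diffs]
  | a :: b :: l, h, m => by
    have ih := sum_drop_diffs h.of_cons
    cases m with
    | zero =>
      have hab : b ≤ a := rel_of_pairwise_cons h mem_cons_self
      have := ih 0
      simp only [drop_zero, getD_cons_zero] at this
      simp [diffs, this, Nat.sub_add_cancel hab]
    | succ m => simpa [diffs] using ih m

def agreeLength (a b : List ℕ) : ℕ := (zip a b).findIdx fun p => p.1 != p.2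

lemma agreeLength_le_left (a b : List ℕ) : agreeLength a b ≤ a.length :=
  findIdx_le_length.trans (by simp)

lemma agreeLength_le_right (a b : List ℕ) : agreeLength a b ≤ b.length :=
  findIdx_le_length.trans (by simp)

lemma getElem_eq_of_lt_agreeLength {a b : List ℕ} {j : ℕ} (hj : j < agreeLength a b)
    (ha : j < a.length) (hb : j < b.length) : a[j] = b[j] := by
  simpa using not_of_lt_findIdx hj

lemma getElem_agreeLength_ne {a b : List ℕ} (ha : agreeLength a b < a.length)
    (hb : agreeLength a b < b.length) : a[agreeLength a b] ≠ b[agreeLength a b] := by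
  have := findIdx_getElem (p := fun p : ℕ × ℕ => p.1 != p.2) (xs := zip a b)
    (w := by simpa [agreeLength] using And.intro ha hb)
  simpa [agreeLength] using this

lemma sum_log_le_log_prod (l : List ℕ) (hl : ∀ x ∈ l, x ≠ 0) :
    (l.map (Nat.log 2)).sum ≤ Nat.log 2 l.prod := by
  refine Nat.le_log_of_pow_le one_lt_two ?_
  induction l with
  | nil => simp
  | cons x l ih =>
    simp only [List.map_cons, List.sum_cons, List.prod_cons, pow_add]
    exact Nat.mul_le_mul (Nat.pow_log_le_self 2 (hl x (by simp)))
      (ih fun y hy => hl y (by simp [hy]))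

lemma injOn_card_filter_le {α β : Type*} [LinearOrder β] (s : Finset α) {f : α → β}
    (hf : Set.InjOn f s) : Set.InjOn (fun a => (s.filter (f · ≤ f a)).card) s := by
  have strict {a b : α} (hb : b ∈ s) (hab : f a < f b) :
      (s.filter (f · ≤ f a)).card < (s.filter (f · ≤ f b)).card :=
    Finset.card_lt_card <| (Finset.ssubset_iff_of_subset fun x hx => by
      simp only [Finset.mem_filter] at hx ⊢; exact ⟨hx.1, hx.2.trans hab.le⟩).mpr
      ⟨b, by simp [hb], by simp [hab]⟩
  intro a ha b hb h
  by_contra hne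
  rcases (hf.ne ha hb hne).lt_or_gt with hab | hab
  · exact (strict hb hab).ne h
  · exact (strict ha hab).ne' h

end Lists

/-- The label of `u`: its depth, the ranks of its light ancestors, and the differences of the grid
indices of the distances from `u` up to its exit points. -/
structure Label where
  depth : ℕ
  ranks : List ℕ
  gaps : List ℕ

instance : Nonempty Label := ⟨⟨0, [], []⟩⟩

namespace Label

def encode (L : Label) : List Bool := encodeNat L.depth ++ encodeList L.ranks ++ encodeList L.gaps

lemma encode_injective : Function.Injective encode := by
  intro ⟨d₁, r₁, g₁⟩ ⟨d₂, r₂, g₂⟩ h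
  simp only [encode, List.append_assoc] at h
  obtain ⟨rfl, h₁⟩ := encodeNat_append_inj h
  obtain ⟨rfl, h₂⟩ := encodeList_append_inj h₁
  obtain ⟨rfl, -⟩ := encodeList_append_inj (s := []) (t := []) (by simpa using h₂)
  rfl

noncomputable def decode : List Bool → Label := Function.invFun encode

lemma decode_encode (L : Label) : decode L.encode = L :=
  Function.leftInverse_invFun encode_injective L

/-- The decoder's estimate of the depth of the `m`-th exit point. -/
def approxExitDepth (M : ℕ) (L : Label) (m : ℕ) : ℕ := L.depth - geomGrid M (L.gaps.drop m).sum

def estimate (M : ℕ) (a b : Label) : ℕ :=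
  let m := agreeLength a.ranks b.ranks
  a.depth + b.depth - 2 * min (a.approxExitDepth M m) (b.approxExitDepth M m)

end Label

/-- A rooted tree given by its parent map. Carrying the depth as data forces the parent map to
reach the root. -/
structure ParentTree (V : Type*) where
  parent : V → V
  root : V
  depth : V → ℕ
  parent_root : parent root = root
  depth_root : depth root = 0
  depth_parent : ∀ u, u ≠ root → depth (parent u) + 1 = depth u

namespace ParentTree

open Function

variable {V : Type*}

section Basic

variable (T : ParentTree V)

lemma depth_eq_zero_iff {u : V} : T.depth u = 0 ↔ u = T.root := by
  refine ⟨fun h => ?_, fun h => h ▸ T.depth_root⟩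
  by_contra hu
  have := T.depth_parent u hu
  omega

lemma depth_parent_eq (u : V) : T.depth (T.parent u) = T.depth u - 1 := by
  by_cases hu : u = T.root
  · simp [hu, T.parent_root, T.depth_root]
  · have := T.depth_parent u hu
    omega

theorem induction_on {P : V → Prop} (root : P T.root)
    (step : ∀ x, x ≠ T.root → P (T.parent x) → P x) (x : V) : P x := by
  induction h : T.depth x using Nat.strong_induction_on generalizing x with
  | _ d ih =>
    by_cases hx : x = T.root
    · exact hx ▸ root
    · exact step x hx (ih _ (h ▸ T.depth_parent x hx ▸ Nat.lt_succ_self _) _ rfl)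

lemma iterate_parent_root (k : ℕ) : T.parent^[k] T.root = T.root :=
  iterate_fixed T.parent_root k

lemma depth_iterate_parent (k : ℕ) (u : V) : T.depth (T.parent^[k] u) = T.depth u - k := by
  induction k with
  | zero => rfl
  | succ k ih => rw [iterate_succ_apply', depth_parent_eq, ih, Nat.sub_sub]

lemma iterate_parent_depth (u : V) : T.parent^[T.depth u] u = T.root :=
  T.depth_eq_zero_iff.mp (by rw [depth_iterate_parent, Nat.sub_self])

lemma depth_lt_card [Fintype V] (u : V) : T.depth u < Fintype.card V := by
  have hinj : Injective fun k : Fin (T.depth u + 1) => T.parent^[k] u := fun i j h => by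
    have := congrArg T.depth h
    simp only [depth_iterate_parent] at this
    omega
  simpa using Fintype.card_le_of_injective _ hinj

def IsAncestor (a b : V) : Prop := ∃ k, T.parent^[k] b = a

variable {T}

namespace IsAncestor

@[refl] lemma refl (a : V) : T.IsAncestor a a := ⟨0, rfl⟩

@[trans] lemma trans {a b c : V} (hab : T.IsAncestor a b) (hbc : T.IsAncestor b c) :
    T.IsAncestor a c := by
  obtain ⟨k, rfl⟩ := hab
  obtain ⟨l, rfl⟩ := hbc
  exact ⟨k + l, iterate_add_apply _ _ _ _⟩

lemma of_parent {a b : V} (h : T.IsAncestor a (T.parent b)) : T.IsAncestor a b := by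
  obtain ⟨k, rfl⟩ := h
  exact ⟨k + 1, rfl⟩

lemma parent_of_ne {a b : V} (h : T.IsAncestor a b) (hne : a ≠ b) :
    T.IsAncestor a (T.parent b) := by
  obtain ⟨_ | k, rfl⟩ := h
  · exact absurd rfl hne
  · exact ⟨k, rfl⟩

lemma depth_le {a b : V} (h : T.IsAncestor a b) : T.depth a ≤ T.depth b := by
  obtain ⟨k, rfl⟩ := h
  rw [depth_iterate_parent]
  omega

lemma iterate_parent_sub_depth {a b : V} (h : T.IsAncestor a b) :
    T.parent^[T.depth b - T.depth a] b = a := by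
  obtain ⟨k, rfl⟩ := h
  rw [depth_iterate_parent]
  rcases le_or_gt k (T.depth b) with hk | hk
  · rw [Nat.sub_sub_self hk]
  · rw [Nat.sub_eq_zero_of_le hk.le, Nat.sub_zero, iterate_parent_depth,
      ← Nat.sub_add_cancel hk.le, iterate_add_apply, iterate_parent_depth, iterate_parent_root]

lemma eq_of_depth_eq {a b : V} (h : T.IsAncestor a b) (hd : T.depth a = T.depth b) : a = b := by
  simpa [hd] using h.iterate_parent_sub_depth.symm

lemma antisymm {a b : V} (hab : T.IsAncestor a b) (hba : T.IsAncestor b a) : a = b :=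
  hab.eq_of_depth_eq (hab.depth_le.antisymm hba.depth_le)

lemma of_depth_le {a b c : V} (hac : T.IsAncestor a c) (hbc : T.IsAncestor b c)
    (hd : T.depth a ≤ T.depth b) : T.IsAncestor a b := by
  have := hbc.depth_le
  refine ⟨T.depth b - T.depth a, ?_⟩
  calc T.parent^[T.depth b - T.depth a] b
      = T.parent^[T.depth b - T.depth a] (T.parent^[T.depth c - T.depth b] c) := by
        rw [hbc.iterate_parent_sub_depth]
    _ = T.parent^[T.depth c - T.depth a] c := by rw [← iterate_add_apply]; congr 1; omega
    _ = a := hac.iterate_parent_sub_depth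

lemma total {a b c : V} (hac : T.IsAncestor a c) (hbc : T.IsAncestor b c) :
    T.IsAncestor a b ∨ T.IsAncestor b a :=
  (le_total (T.depth a) (T.depth b)).imp (of_depth_le hac hbc) (of_depth_le hbc hac)

end IsAncestor

lemma isAncestor_root (b : V) : T.IsAncestor T.root b := ⟨_, T.iterate_parent_depth b⟩

lemma isAncestor_parent (b : V) : T.IsAncestor (T.parent b) b := ⟨1, rfl⟩

lemma eq_of_isAncestor_of_depth_eq {a b c : V} (hac : T.IsAncestor a c)
    (hbc : T.IsAncestor b c) (hd : T.depth a = T.depth b) : a = b :=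
  (hac.of_depth_le hbc hd.le).eq_of_depth_eq hd

lemma exists_isAncestor_depth_eq {b : V} {j : ℕ} (hj : j ≤ T.depth b) :
    ∃ a, T.IsAncestor a b ∧ T.depth a = j :=
  ⟨_, ⟨T.depth b - j, rfl⟩, by rw [depth_iterate_parent]; omega⟩

variable (T)

lemma exists_iterate_parent_isAncestor (u v : V) : ∃ k, T.IsAncestor (T.parent^[k] u) v :=
  ⟨T.depth u, by rw [iterate_parent_depth]; exact isAncestor_root v⟩

open scoped Classical in
noncomputable def lca (u v : V) : V :=
  T.parent^[Nat.find (T.exists_iterate_parent_isAncestor u v)] u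

variable {T}

lemma lca_isAncestor_left (u v : V) : T.IsAncestor (T.lca u v) u := ⟨_, rfl⟩

lemma lca_isAncestor_right (u v : V) : T.IsAncestor (T.lca u v) v := by
  classical
  exact Nat.find_spec (T.exists_iterate_parent_isAncestor u v)

lemma isAncestor_lca {u v w : V} (hu : T.IsAncestor w u) (hv : T.IsAncestor w v) :
    T.IsAncestor w (T.lca u v) := by
  classical
  have hk : Nat.find (T.exists_iterate_parent_isAncestor u v) ≤ T.depth u - T.depth w :=
    Nat.find_min' _ (by rwa [hu.iterate_parent_sub_depth])
  refine ⟨T.depth u - T.depth w - Nat.find (T.exists_iterate_parent_isAncestor u v), ?_⟩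
  rw [lca, ← iterate_add_apply, Nat.sub_add_cancel hk, hu.iterate_parent_sub_depth]

lemma lca_eq_of_depth_le {u v w : V} (hu : T.IsAncestor w u) (hv : T.IsAncestor w v)
    (hdeep : ∀ z, T.IsAncestor z u → T.IsAncestor z v → T.depth z ≤ T.depth w) :
    T.lca u v = w :=
  ((isAncestor_lca hu hv).eq_of_depth_eq ((isAncestor_lca hu hv).depth_le.antisymm
    (hdeep _ (lca_isAncestor_left u v) (lca_isAncestor_right u v)))).symm

lemma lca_comm (u v : V) : T.lca u v = T.lca v u :=
  lca_eq_of_depth_le (lca_isAncestor_right v u) (lca_isAncestor_left v u)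
    fun _ hu hv => (isAncestor_lca hv hu).depth_le

lemma lca_eq_left {u v : V} (h : T.IsAncestor u v) : T.lca u v = u :=
  lca_eq_of_depth_le (.refl u) h fun _ hu _ => hu.depth_le

lemma lca_eq_right {u v : V} (h : T.IsAncestor v u) : T.lca u v = v := by
  rw [lca_comm, lca_eq_left h]

lemma lca_parent {u a : V} (h : ¬ T.IsAncestor a u) : T.lca u (T.parent a) = T.lca u a := by
  have hne : T.lca u a ≠ a := fun heq => h (heq ▸ lca_isAncestor_left u a)
  exact lca_eq_of_depth_le (lca_isAncestor_left u a)
    ((lca_isAncestor_right u a).parent_of_ne hne)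
    fun _ hu hv => (isAncestor_lca hu hv.of_parent).depth_le

lemma lca_eq_of_forall_depth_ne {u v a : V} (hu : T.IsAncestor a u) (hv : T.IsAncestor a v)
    (h : ∀ c, T.IsAncestor c u → T.IsAncestor c v → T.depth c ≠ T.depth a + 1) :
    T.lca u v = a := by
  refine lca_eq_of_depth_le hu hv fun z hzu hzv => ?_
  by_contra! hz
  obtain ⟨c, hcz, hc⟩ := exists_isAncestor_depth_eq (T := T) (b := z) (j := T.depth a + 1) hz
  exact h c (hcz.trans hzu) (hcz.trans hzv) hc

variable (T)

noncomputable def treeDist (u v : V) : ℕ := T.depth u + T.depth v - 2 * T.depth (T.lca u v)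

lemma treeDist_self (u : V) : T.treeDist u u = 0 := by
  simp only [treeDist, lca_eq_left (IsAncestor.refl u)]
  omega

lemma treeDist_le_treeDist_parent (u a : V) :
    T.treeDist u a ≤ T.treeDist u (T.parent a) + 1 ∧
      T.treeDist u (T.parent a) ≤ T.treeDist u a + 1 := by
  have hd := T.depth_parent_eq a
  by_cases ha : T.IsAncestor a u
  · have hpa := (isAncestor_parent a).trans ha
    simp only [treeDist, lca_eq_right ha, lca_eq_right hpa]
    omega
  · simp only [treeDist, lca_parent ha]
    have := (lca_isAncestor_right (T := T) u a).depth_le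
    omega

end Basic

section Graph

open SimpleGraph

variable {T : ParentTree V} {G : SimpleGraph V}

lemma exists_walk_to_ancestor (hadj : ∀ u, u ≠ T.root → G.Adj u (T.parent u)) (u : V) :
    ∀ a, T.IsAncestor a u → ∃ p : G.Walk u a, p.length ≤ T.depth u - T.depth a := by
  induction u using T.induction_on with
  | root =>
    intro a ha
    obtain rfl := ha.antisymm (isAncestor_root a)
    exact ⟨.nil, by simp⟩
  | step u hu ih =>
    intro a ha
    by_cases hau : a = u
    · subst hau
      exact ⟨.nil, by simp⟩
    · obtain ⟨p, hp⟩ := ih a (ha.parent_of_ne hau)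
      have := T.depth_parent u hu
      have := (ha.parent_of_ne hau).depth_le
      exact ⟨.cons (hadj u hu) p, by simp; omega⟩

lemma exists_walk_treeDist (hadj : ∀ u, u ≠ T.root → G.Adj u (T.parent u)) (u v : V) :
    ∃ p : G.Walk u v, p.length ≤ T.treeDist u v := by
  obtain ⟨p, hp⟩ := exists_walk_to_ancestor hadj u _ (lca_isAncestor_left u v)
  obtain ⟨q, hq⟩ := exists_walk_to_ancestor hadj v _ (lca_isAncestor_right u v)
  have := (lca_isAncestor_left (T := T) u v).depth_le
  have := (lca_isAncestor_right (T := T) u v).depth_le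
  exact ⟨p.append q.reverse, by simp [treeDist]; omega⟩

lemma treeDist_le_treeDist_add_length (hpar : ∀ x y, G.Adj x y → T.parent x = y ∨ T.parent y = x)
    (u : V) {x v : V} (p : G.Walk x v) : T.treeDist u v ≤ T.treeDist u x + p.length := by
  induction p with
  | nil => simp
  | @cons x y _ hxy _ ih =>
    have : T.treeDist u y ≤ T.treeDist u x + 1 := by
      rcases hpar x y hxy with rfl | rfl
      · exact (T.treeDist_le_treeDist_parent u x).2
      · exact (T.treeDist_le_treeDist_parent u y).1
    simp only [Walk.length_cons]
    omega

theorem dist_eq_treeDist (hadj : ∀ u, u ≠ T.root → G.Adj u (T.parent u))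
    (hpar : ∀ x y, G.Adj x y → T.parent x = y ∨ T.parent y = x) (u v : V) :
    G.dist u v = T.treeDist u v := by
  obtain ⟨p, hp⟩ := exists_walk_treeDist hadj u v
  obtain ⟨q, hq⟩ := p.reachable.exists_walk_length_eq_dist
  have := treeDist_le_treeDist_add_length hpar u q
  rw [treeDist_self] at this
  have := dist_le p
  omega

end Graph

section HeavyPath

open Finset
open scoped Classical

variable [Fintype V] (T : ParentTree V)

noncomputable def subtree (w : V) : Finset V := {x | T.IsAncestor w x}

noncomputable def size (w : V) : ℕ := #(T.subtree w)

noncomputable def children (w : V) : Finset V := {c | T.parent c = w ∧ c ≠ w}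

noncomputable def heavyChild (w : V) : V :=
  if h : (T.children w).Nonempty then (exists_max_image _ T.size h).choose else w

def IsLight (x : V) : Prop := x ≠ T.root ∧ x ≠ T.heavyChild (T.parent x)

variable {T}

@[simp] lemma mem_subtree {w x : V} : x ∈ T.subtree w ↔ T.IsAncestor w x := by simp [subtree]

lemma size_pos (w : V) : 0 < T.size w := card_pos.mpr ⟨w, mem_subtree.mpr (.refl w)⟩

lemma size_le_card (w : V) : T.size w ≤ Fintype.card V := card_le_univ _

lemma subtree_subset {a b : V} (h : T.IsAncestor a b) : T.subtree b ⊆ T.subtree a :=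
  fun _ hx => mem_subtree.mpr (h.trans (mem_subtree.mp hx))

lemma size_le_size {a b : V} (h : T.IsAncestor a b) : T.size b ≤ T.size a :=
  card_le_card (subtree_subset h)

lemma disjoint_subtree {a b : V} (hab : ¬ T.IsAncestor a b) (hba : ¬ T.IsAncestor b a) :
    Disjoint (T.subtree a) (T.subtree b) :=
  disjoint_left.mpr fun _ ha hb =>
    ((mem_subtree.mp ha).total (mem_subtree.mp hb)).elim hab hba

lemma mem_children {w c : V} : c ∈ T.children w ↔ T.parent c = w ∧ c ≠ w := by simp [children]

lemma depth_of_mem_children {w c : V} (h : c ∈ T.children w) : T.depth c = T.depth w + 1 := by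
  obtain ⟨rfl, hne⟩ := mem_children.mp h
  exact (T.depth_parent c fun hr => hne (by rw [hr, T.parent_root])).symm

lemma mem_children_parent {c : V} (hc : c ≠ T.root) : c ∈ T.children (T.parent c) :=
  mem_children.mpr ⟨rfl, fun h => by have := T.depth_parent c hc; rw [← h] at this; omega⟩

lemma not_isAncestor_of_mem_children {w c₁ c₂ : V} (h₁ : c₁ ∈ T.children w)
    (h₂ : c₂ ∈ T.children w) (hne : c₁ ≠ c₂) : ¬ T.IsAncestor c₁ c₂ := fun h =>
  hne (h.eq_of_depth_eq (by rw [depth_of_mem_children h₁, depth_of_mem_children h₂]))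

lemma heavyChild_mem {w : V} (h : (T.children w).Nonempty) : T.heavyChild w ∈ T.children w := by
  rw [heavyChild, dif_pos h]
  exact (exists_max_image _ T.size h).choose_spec.1

lemma size_le_size_heavyChild {w c : V} (hc : c ∈ T.children w) :
    T.size c ≤ T.size (T.heavyChild w) := by
  rw [heavyChild, dif_pos ⟨c, hc⟩]
  exact (exists_max_image _ T.size ⟨c, hc⟩).choose_spec.2 c hc

lemma isAncestor_heavyChild (w : V) : T.IsAncestor w (T.heavyChild w) := by
  by_cases h : (T.children w).Nonempty
  · exact ⟨1, (mem_children.mp (heavyChild_mem h)).1⟩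
  · rw [heavyChild, dif_neg h]

lemma two_mul_size_le_of_isLight {c : V} (hc : T.IsLight c) :
    2 * T.size c ≤ T.size (T.parent c) := by
  have hmem := mem_children_parent hc.1
  have hheavy := heavyChild_mem ⟨c, hmem⟩
  have hdisj := disjoint_subtree (not_isAncestor_of_mem_children hmem hheavy hc.2)
    (not_isAncestor_of_mem_children hheavy hmem (Ne.symm hc.2))
  have hsub : T.subtree c ∪ T.subtree (T.heavyChild (T.parent c)) ⊆ T.subtree (T.parent c) :=
    union_subset (subtree_subset (isAncestor_parent c))
      (subtree_subset (isAncestor_heavyChild _))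
  have := card_le_card hsub
  rw [card_union_of_disjoint hdisj] at this
  have := size_le_size_heavyChild hmem
  simp only [size] at *
  omega

variable (T)

noncomputable def lightAncestors (x : V) : List V :=
  if _ : x = T.root then []
  else if T.IsLight x then lightAncestors (T.parent x) ++ [x]
  else lightAncestors (T.parent x)
termination_by T.depth x
decreasing_by all_goals have := T.depth_parent x ‹_›; omega

/-- The top of the heavy path through `x`. -/
noncomputable def top (x : V) : V := (T.root :: T.lightAncestors x).getLast (List.cons_ne_nil _ _)

variable {T}

@[simp] lemma lightAncestors_root : T.lightAncestors T.root = [] := by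
  rw [lightAncestors, dif_pos rfl]

lemma lightAncestors_of_isLight {x : V} (hx : T.IsLight x) :
    T.lightAncestors x = T.lightAncestors (T.parent x) ++ [x] := by
  rw [lightAncestors, dif_neg hx.1, if_pos hx]

lemma lightAncestors_of_not_isLight {x : V} (hr : x ≠ T.root) (hx : ¬ T.IsLight x) :
    T.lightAncestors x = T.lightAncestors (T.parent x) := by
  rw [lightAncestors, dif_neg hr, if_neg hx]

lemma top_eq_getElem (x : V) :
    T.top x = (T.root :: T.lightAncestors x)[(T.lightAncestors x).length]'(by simp) := by
  simp [top, List.getLast_eq_getElem]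

@[simp] lemma top_root : T.top T.root = T.root := by simp [top]

lemma top_of_isLight {x : V} (hx : T.IsLight x) : T.top x = x := by
  simp [top, lightAncestors_of_isLight hx]

lemma top_of_not_isLight {x : V} (hr : x ≠ T.root) (hx : ¬ T.IsLight x) :
    T.top x = T.top (T.parent x) := by
  simp only [top, lightAncestors_of_not_isLight hr hx]

lemma isLight_and_isAncestor_of_mem_lightAncestors {x c : V} (hc : c ∈ T.lightAncestors x) :
    T.IsLight c ∧ T.IsAncestor c x := by
  induction x using T.induction_on with
  | root => simp at hc
  | step x hr ih =>
    by_cases hx : T.IsLight x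
    · rw [lightAncestors_of_isLight hx, List.mem_append, List.mem_singleton] at hc
      rcases hc with hc | rfl
      · exact (ih hc).imp_right .of_parent
      · exact ⟨hx, .refl c⟩
    · rw [lightAncestors_of_not_isLight hr hx] at hc
      exact (ih hc).imp_right .of_parent

lemma pairwise_depth_lightAncestors (x : V) :
    (T.lightAncestors x).Pairwise fun a b => T.depth a < T.depth b := by
  induction x using T.induction_on with
  | root => simp
  | step x hr ih =>
    by_cases hx : T.IsLight x
    · rw [lightAncestors_of_isLight hx, List.pairwise_append]
      refine ⟨ih, by simp, fun a ha b hb => ?_⟩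
      rw [List.mem_singleton.mp hb]
      have := (isLight_and_isAncestor_of_mem_lightAncestors ha).2.depth_le
      have := T.depth_parent x hr
      omega
    · rwa [lightAncestors_of_not_isLight hr hx]

lemma top_isAncestor (x : V) : T.IsAncestor (T.top x) x := by
  rcases List.mem_cons.mp (List.getLast_mem (List.cons_ne_nil T.root (T.lightAncestors x)))
    with h | h
  · exact (show T.top x = T.root from h) ▸ isAncestor_root x
  · exact (isLight_and_isAncestor_of_mem_lightAncestors h).2

lemma not_isLight_of_depth_top_lt {x c : V} (hc : T.IsAncestor c x)
    (hd : T.depth (T.top x) < T.depth c) : ¬ T.IsLight c := by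
  induction x using T.induction_on with
  | root => exact absurd hc.depth_le (by rw [T.depth_root]; omega)
  | step x hr ih =>
    by_cases hx : T.IsLight x
    · rw [top_of_isLight hx] at hd
      exact absurd hc.depth_le (by omega)
    · rw [top_of_not_isLight hr hx] at hd
      by_cases hcx : c = x
      · exact hcx ▸ hx
      · exact ih (hc.parent_of_ne hcx) hd

lemma exists_iterate_heavyChild_top (x : V) : ∃ i, T.heavyChild^[i] (T.top x) = x := by
  induction x using T.induction_on with
  | root => exact ⟨0, top_root⟩
  | step x hr ih =>
    by_cases hx : T.IsLight x
    · exact ⟨0, top_of_isLight hx⟩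
    · obtain ⟨i, hi⟩ := ih
      refine ⟨i + 1, ?_⟩
      rw [top_of_not_isLight hr hx, Function.iterate_succ_apply', hi]
      exact (not_not.mp (not_and.mp hx hr)).symm

lemma isAncestor_total_of_top_eq {u v : V} (h : T.top u = T.top v) :
    T.IsAncestor u v ∨ T.IsAncestor v u := by
  have chain (w : V) (i k : ℕ) : T.IsAncestor (T.heavyChild^[i] w) (T.heavyChild^[i + k] w) := by
    induction k with
    | zero => rfl
    | succ k ih =>
      rw [← add_assoc, Function.iterate_succ_apply']
      exact ih.trans (isAncestor_heavyChild _)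
  obtain ⟨i, hi⟩ := exists_iterate_heavyChild_top u
  obtain ⟨j, hj⟩ := exists_iterate_heavyChild_top v
  rw [← hi, ← hj, h]
  rcases le_total i j with hij | hij
  · exact .inl (Nat.add_sub_cancel' hij ▸ chain _ i (j - i))
  · exact .inr (Nat.add_sub_cancel' hij ▸ chain _ j (i - j))

/-- `(root :: lightAncestors x)[j]` is the top of the `j`-th heavy path met on the way down to
`x`. -/
lemma top_parent_getElem_lightAncestors (x : V) {j : ℕ} (hj : j < (T.lightAncestors x).length) :
    T.top (T.parent (T.lightAncestors x)[j]) =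
      (T.root :: T.lightAncestors x)[j]'(by simp; omega) := by
  induction x using T.induction_on generalizing j with
  | root => simp at hj
  | step x hr ih =>
    by_cases hx : T.IsLight x
    · simp only [lightAncestors_of_isLight hx, List.length_append, List.length_singleton] at hj ⊢
      rcases (Nat.lt_succ_iff.mp hj).lt_or_eq with hj | rfl
      · rw [List.getElem_append_left hj, ih hj]
        grind
      · simp only [List.getElem_concat_length, top_eq_getElem]
        grind
    · simp only [lightAncestors_of_not_isLight hr hx] at hj ⊢
      exact ih hj

variable (T)

noncomputable def branches (t : V) : Finset V := {c | T.IsLight c ∧ T.top (T.parent c) = t}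

variable {T}

lemma mem_branches {t c : V} : c ∈ T.branches t ↔ T.IsLight c ∧ T.top (T.parent c) = t := by
  simp [branches]

lemma isAncestor_and_depth_lt_of_mem_branches {t c : V} (hc : c ∈ T.branches t) :
    T.IsAncestor t c ∧ T.depth t < T.depth c := by
  obtain ⟨hl, rfl⟩ := mem_branches.mp hc
  have := T.depth_parent c hl.1
  have := (top_isAncestor (T := T) (T.parent c)).depth_le
  exact ⟨(top_isAncestor _).of_parent, by omega⟩

lemma not_isAncestor_of_mem_branches {t c₁ c₂ : V} (h₁ : c₁ ∈ T.branches t)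
    (h₂ : c₂ ∈ T.branches t) (hne : c₁ ≠ c₂) : ¬ T.IsAncestor c₁ c₂ := fun h => by
  have := (isAncestor_and_depth_lt_of_mem_branches h₁).2
  refine not_isLight_of_depth_top_lt (h.parent_of_ne hne) ?_ (mem_branches.mp h₁).1
  rwa [(mem_branches.mp h₂).2]

lemma two_pow_length_mul_size_le (x : V) :
    2 ^ (T.lightAncestors x).length * T.size x ≤ Fintype.card V := by
  induction x using T.induction_on with
  | root => simpa using size_le_card T.root
  | step x hr ih =>
    by_cases hx : T.IsLight x
    · rw [lightAncestors_of_isLight hx, List.length_append, List.length_singleton, pow_succ,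
        mul_assoc]
      exact (Nat.mul_le_mul_left _ (two_mul_size_le_of_isLight hx)).trans ih
    · rw [lightAncestors_of_not_isLight hr hx]
      exact (Nat.mul_le_mul_left _ (size_le_size (isAncestor_parent x))).trans ih

lemma length_lightAncestors_le_log (u : V) :
    (T.lightAncestors u).length ≤ Nat.log 2 (Fintype.card V) :=
  Nat.le_log_of_pow_le one_lt_two
    ((Nat.le_mul_of_pos_right _ (size_pos u)).trans (two_pow_length_mul_size_le u))

/-- Two vertices leaving a common heavy path at `eu` and `ev` branch off at the higher of the
two, provided `u` leaves through a light edge and the two exits differ when `eu = ev`. -/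
lemma lca_eq_of_top_eq {u v eu ev : V} (heu : T.IsAncestor eu u) (hev : T.IsAncestor ev v)
    (htop : T.top eu = T.top ev) (hd : T.depth eu ≤ T.depth ev)
    (hu : ∀ c, T.IsAncestor c u → T.depth c = T.depth eu + 1 → T.IsLight c)
    (hsplit : T.depth eu < T.depth ev ∨
      ∀ c, T.IsAncestor c u → T.IsAncestor c v → T.depth c ≠ T.depth eu + 1) :
    T.lca u v = eu := by
  have heuv : T.IsAncestor eu ev := (isAncestor_total_of_top_eq htop).elim id fun h =>
    (h.eq_of_depth_eq (h.depth_le.antisymm hd)) ▸ .refl _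
  refine lca_eq_of_forall_depth_ne heu (heuv.trans hev) fun c hcu hcv hc => ?_
  rcases hsplit with hlt | hne
  · have htop_le : T.depth (T.top ev) ≤ T.depth eu := htop ▸ (top_isAncestor eu).depth_le
    exact not_isLight_of_depth_top_lt (hcv.of_depth_le hev (by omega)) (by omega) (hu c hcu hc)
  · exact hne c hcu hcv hc

variable (T)

/-- Where the path from the root to `u` leaves the heavy path of its `m`-th light ancestor
(counting the root as the `0`-th). -/
noncomputable def exitPoint (u : V) (m : ℕ) : V := ((T.lightAncestors u).map T.parent).getD m u

variable {T}

lemma exitPoint_of_lt {u : V} {m : ℕ} (hm : m < (T.lightAncestors u).length) :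
    T.exitPoint u m = T.parent (T.lightAncestors u)[m] := by
  simp [exitPoint, List.getD_eq_getElem?_getD, hm]

lemma exitPoint_of_le {u : V} {m : ℕ} (hm : (T.lightAncestors u).length ≤ m) :
    T.exitPoint u m = u := by
  simp [exitPoint, List.getD_eq_getElem?_getD, hm]

lemma exitPoint_isAncestor (u : V) (m : ℕ) : T.IsAncestor (T.exitPoint u m) u := by
  rcases lt_or_ge m (T.lightAncestors u).length with hm | hm
  · rw [exitPoint_of_lt hm]
    exact (isAncestor_parent _).trans
      (isLight_and_isAncestor_of_mem_lightAncestors (List.getElem_mem hm)).2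
  · rw [exitPoint_of_le hm]

lemma top_exitPoint {u : V} {m : ℕ} (hm : m ≤ (T.lightAncestors u).length) :
    T.top (T.exitPoint u m) = (T.root :: T.lightAncestors u)[m]'(by simp; omega) := by
  rcases hm.lt_or_eq with hm | rfl
  · rw [exitPoint_of_lt hm, top_parent_getElem_lightAncestors]
  · rw [exitPoint_of_le le_rfl, top_eq_getElem]

lemma exists_eq_getElem_of_depth_exitPoint {u c : V} {m : ℕ} (hc : T.IsAncestor c u)
    (hd : T.depth c = T.depth (T.exitPoint u m) + 1) :
    ∃ hm : m < (T.lightAncestors u).length, c = (T.lightAncestors u)[m] := by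
  rcases lt_or_ge m (T.lightAncestors u).length with hm | hm
  · have hmem := isLight_and_isAncestor_of_mem_lightAncestors (List.getElem_mem hm)
    rw [exitPoint_of_lt hm, T.depth_parent _ hmem.1.1] at hd
    exact ⟨hm, eq_of_isAncestor_of_depth_eq hc hmem.2 hd⟩
  · rw [exitPoint_of_le hm] at hd
    exact absurd hc.depth_le (by omega)

end HeavyPath

section Rank

open Finset
open scoped Classical

variable [Fintype V] [LinearOrder V] (T : ParentTree V)

/-- Decreasing subtree size, ties broken by the order of `V`. -/
noncomputable def sizeKey (c : V) : ℕᵒᵈ ×ₗ V := toLex (OrderDual.toDual (T.size c), c)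

noncomputable def rank (c : V) : ℕ :=
  #{c' ∈ T.branches (T.top (T.parent c)) | T.sizeKey c' ≤ T.sizeKey c}

variable {T}

lemma rank_injOn (t : V) : Set.InjOn T.rank (T.branches t) := by
  have hrank : ∀ c ∈ T.branches t, T.rank c = #{x ∈ T.branches t | T.sizeKey x ≤ T.sizeKey c} :=
    fun c hc => by rw [rank, (mem_branches.mp hc).2]
  intro a ha b hb h
  refine injOn_card_filter_le (f := T.sizeKey) _ (fun x _ y _ hxy => ?_) ha hb ?_
  · simpa [sizeKey] using congrArg (fun p => (ofLex p).2) hxy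
  · simpa [← hrank a ha, ← hrank b hb] using h

lemma one_le_rank {c : V} (hc : T.IsLight c) : 1 ≤ T.rank c :=
  card_pos.mpr ⟨c, by simp [mem_branches, hc]⟩

lemma rank_mul_size_le (c : V) :
    T.rank c * T.size c ≤ T.size (T.top (T.parent c)) := by
  set t := T.top (T.parent c)
  set S : Finset V := {c' ∈ T.branches t | T.sizeKey c' ≤ T.sizeKey c}
  have hsize : ∀ c' ∈ S, T.size c ≤ T.size c' := fun c' hc' =>
    Prod.Lex.monotone_fst _ _ (mem_filter.mp hc').2
  have hdisj : (S : Set V).PairwiseDisjoint T.subtree := fun a ha b hb hne =>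
    disjoint_subtree
      (not_isAncestor_of_mem_branches (mem_filter.mp ha).1 (mem_filter.mp hb).1 hne)
      (not_isAncestor_of_mem_branches (mem_filter.mp hb).1 (mem_filter.mp ha).1 (Ne.symm hne))
  have hunion : S.biUnion T.subtree ⊆ T.subtree t := biUnion_subset.mpr fun a ha =>
    subtree_subset (isAncestor_and_depth_lt_of_mem_branches (mem_filter.mp ha).1).1
  calc T.rank c * T.size c = #S * T.size c := rfl
    _ ≤ ∑ c' ∈ S, T.size c' := by simpa using card_nsmul_le_sum S _ _ hsize
    _ = #(S.biUnion T.subtree) := (card_biUnion hdisj).symm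
    _ ≤ T.size t := card_le_card hunion

lemma prod_rank_mul_size_top_le (x : V) :
    ((T.lightAncestors x).map T.rank).prod * T.size (T.top x) ≤ Fintype.card V := by
  induction x using T.induction_on with
  | root => simpa using size_le_card T.root
  | step x hr ih =>
    by_cases hx : T.IsLight x
    · rw [lightAncestors_of_isLight hx, top_of_isLight hx, List.map_append, List.prod_append,
        List.map_singleton, List.prod_singleton, mul_assoc]
      exact (Nat.mul_le_mul_left _ (rank_mul_size_le x)).trans ih
    · rwa [lightAncestors_of_not_isLight hr hx, top_of_not_isLight hr hx]

variable (T)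

noncomputable def label (M : ℕ) (u : V) : Label where
  depth := T.depth u
  ranks := (T.lightAncestors u).map T.rank
  gaps := diffs (((T.lightAncestors u).map T.parent).map
    fun e => gridIndex M (T.depth u - T.depth e))

variable {T}

lemma sum_drop_gaps_label (M : ℕ) (u : V) (m : ℕ) :
    ((T.label M u).gaps.drop m).sum = gridIndex M (T.depth u - T.depth (T.exitPoint u m)) := by
  have hanti : (((T.lightAncestors u).map T.parent).map
      fun e => gridIndex M (T.depth u - T.depth e)).Pairwise (· ≥ ·) := by
    simp only [List.pairwise_map]
    refine (pairwise_depth_lightAncestors u).imp fun {a b} hab => gridIndex_mono M ?_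
    simp only [depth_parent_eq]
    omega
  -- past the last light ancestor the exit point is `u`, with grid index `0` = the empty sum
  have hgetD := List.getD_map ((T.lightAncestors u).map T.parent) u (n := m)
    fun e => gridIndex M (T.depth u - T.depth e)
  simp only [Nat.sub_self, gridIndex_zero] at hgetD
  rw [label, sum_drop_diffs hanti, hgetD, exitPoint]

lemma approxExitDepth_label (M : ℕ) (u : V) (m : ℕ) :
    (T.label M u).approxExitDepth M m =
      T.depth u - geomGrid M (gridIndex M (T.depth u - T.depth (T.exitPoint u m))) := by
  rw [Label.approxExitDepth, sum_drop_gaps_label, label]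

lemma getElem_cons_lightAncestors_eq {u v : V} {m : ℕ}
    (hm : m ≤ agreeLength ((T.lightAncestors u).map T.rank) ((T.lightAncestors v).map T.rank))
    (hmu : m ≤ (T.lightAncestors u).length) (hmv : m ≤ (T.lightAncestors v).length) :
    (T.root :: T.lightAncestors u)[m]'(by simp; omega) =
      (T.root :: T.lightAncestors v)[m]'(by simp; omega) := by
  induction m with
  | zero => rfl
  | succ m ih =>
    have heq := ih (by omega) (by omega) (by omega)
    have hrank := getElem_eq_of_lt_agreeLength (Nat.lt_of_succ_le hm)
      (by simp; omega) (by simp; omega)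
    simp only [List.getElem_map] at hrank
    simp only [List.getElem_cons_succ]
    refine rank_injOn (T.top (T.parent (T.lightAncestors u)[m])) ?_ ?_ hrank
    · exact mem_branches.mpr ⟨(isLight_and_isAncestor_of_mem_lightAncestors
        (List.getElem_mem _)).1, rfl⟩
    · refine mem_branches.mpr ⟨(isLight_and_isAncestor_of_mem_lightAncestors
        (List.getElem_mem _)).1, ?_⟩
      rw [top_parent_getElem_lightAncestors v, top_parent_getElem_lightAncestors u, heq]

variable (T)

/-- Number of light ancestors shared by `u` and `v`, read off their rank lists. -/
noncomputable def lightPrefixLength (u v : V) : ℕ :=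
  agreeLength ((T.lightAncestors u).map T.rank) ((T.lightAncestors v).map T.rank)

variable {T}

theorem depth_lca_eq_min_exitPoint (u v : V) :
    T.depth (T.lca u v) = min (T.depth (T.exitPoint u (T.lightPrefixLength u v)))
      (T.depth (T.exitPoint v (T.lightPrefixLength u v))) := by
  set m := T.lightPrefixLength u v
  have hmu : m ≤ (T.lightAncestors u).length := (agreeLength_le_left _ _).trans (by simp)
  have hmv : m ≤ (T.lightAncestors v).length := (agreeLength_le_right _ _).trans (by simp)
  have htop : T.top (T.exitPoint u m) = T.top (T.exitPoint v m) := by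
    rw [top_exitPoint hmu, top_exitPoint hmv]
    exact getElem_cons_lightAncestors_eq le_rfl hmu hmv
  have hlight (w : V) : ∀ c, T.IsAncestor c w → T.depth c = T.depth (T.exitPoint w m) + 1 →
      T.IsLight c := fun c hc hd => by
    obtain ⟨hm, rfl⟩ := exists_eq_getElem_of_depth_exitPoint hc hd
    exact (isLight_and_isAncestor_of_mem_lightAncestors (List.getElem_mem hm)).1
  have hsplit (hd : T.depth (T.exitPoint u m) = T.depth (T.exitPoint v m)) :
      ∀ c, T.IsAncestor c u → T.IsAncestor c v → T.depth c ≠ T.depth (T.exitPoint u m) + 1 := by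
    intro c hcu hcv hc
    obtain ⟨hmu', rfl⟩ := exists_eq_getElem_of_depth_exitPoint hcu hc
    obtain ⟨hmv', hcv'⟩ := exists_eq_getElem_of_depth_exitPoint hcv (hd ▸ hc)
    have := getElem_agreeLength_ne (a := (T.lightAncestors u).map T.rank)
      (b := (T.lightAncestors v).map T.rank) (by simp only [List.length_map]; exact hmu')
      (by simp only [List.length_map]; exact hmv')
    simp only [List.getElem_map] at this
    exact this (congrArg T.rank hcv')
  rcases lt_trichotomy (T.depth (T.exitPoint u m)) (T.depth (T.exitPoint v m)) with h | h | h
  · rw [lca_eq_of_top_eq (exitPoint_isAncestor u m) (exitPoint_isAncestor v m) htop h.le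
      (hlight u) (.inl h)]
    omega
  · rw [lca_eq_of_top_eq (exitPoint_isAncestor u m) (exitPoint_isAncestor v m) htop h.le
      (hlight u) (.inr (hsplit h))]
    omega
  · rw [lca_comm, lca_eq_of_top_eq (exitPoint_isAncestor v m) (exitPoint_isAncestor u m)
      htop.symm h.le (hlight v) (.inl h)]
    omega

theorem treeDist_le_estimate (M : ℕ) (u v : V) :
    T.treeDist u v ≤ Label.estimate M (T.label M u) (T.label M v) ∧
      M * Label.estimate M (T.label M u) (T.label M v) ≤ (M + 2) * T.treeDist u v := by
  have hu := (exitPoint_isAncestor (T := T) u (T.lightPrefixLength u v)).depth_le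
  have hv := (exitPoint_isAncestor (T := T) v (T.lightPrefixLength u v)).depth_le
  have hest : Label.estimate M (T.label M u) (T.label M v) =
      T.depth u + T.depth v - 2 * min ((T.label M u).approxExitDepth M (T.lightPrefixLength u v))
        ((T.label M v).approxExitDepth M (T.lightPrefixLength u v)) := rfl
  rw [hest, treeDist, depth_lca_eq_min_exitPoint, approxExitDepth_label, approxExitDepth_label]
  exact le_estimate_and_mul_estimate_le hu hv (sub_geomGrid_gridIndex_le M hu)
    (sub_geomGrid_gridIndex_le M hv) (mul_sub_sub_geomGrid_gridIndex_le M hu)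
    (mul_sub_sub_geomGrid_gridIndex_le M hv)

lemma sum_log_rank_le_log (u : V) :
    (((T.lightAncestors u).map T.rank).map (Nat.log 2)).sum ≤ Nat.log 2 (Fintype.card V) := by
  refine (sum_log_le_log_prod _ fun r hr => ?_).trans (Nat.log_mono_right ?_)
  · obtain ⟨c, hc, rfl⟩ := List.mem_map.mp hr
    exact Nat.one_le_iff_ne_zero.mp
      (one_le_rank (isLight_and_isAncestor_of_mem_lightAncestors hc).1)
  · exact (Nat.le_mul_of_pos_right _ (size_pos _)).trans (prod_rank_mul_size_top_le u)

lemma sum_gaps_label_le {M : ℕ} (hM : 1 ≤ M) (u : V) :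
    (T.label M u).gaps.sum ≤ M * (Nat.log 2 (Fintype.card V) + 1) := by
  have hsum := sum_drop_gaps_label (T := T) M u 0
  rw [List.drop_zero] at hsum
  rw [hsum]
  exact (gridIndex_mono M (by have := T.depth_lt_card u; omega)).trans
    (gridIndex_le_log M hM _)

/-- Labels have `O(M log n)` bits: ranks multiply to at most `n`, there are at most `log n`
of them, and the gaps add up to the first grid index. -/
theorem length_encode_label_le {M : ℕ} (hM : 1 ≤ M) (hV : 2 ≤ Fintype.card V) (u : V) :
    (T.label M u).encode.length ≤ (4 * M + 23) * Nat.log 2 (Fintype.card V) := by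
  set N := Fintype.card V
  set k := (T.lightAncestors u).length
  have hN : 1 ≤ Nat.log 2 N := Nat.le_log_of_pow_le one_lt_two (by simpa using hV)
  have hk : k ≤ Nat.log 2 N := length_lightAncestors_le_log u
  have hlogk : Nat.log 2 k ≤ Nat.log 2 N := Nat.log_mono_right (hk.trans (Nat.log_le_self 2 N))
  have hdepth : Nat.log 2 (T.depth u) ≤ Nat.log 2 N := Nat.log_mono_right (T.depth_lt_card u).le
  have hgaps : ((T.label M u).gaps.map (Nat.log 2)).sum ≤ M * (Nat.log 2 N + 1) :=
    (List.sum_le_sum fun g _ => Nat.log_le_self 2 g).trans (by simpa using sum_gaps_label_le hM u)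
  have hlen : (T.label M u).encode.length = (encodeNat (T.depth u)).length +
      ((encodeNat k).length + (((T.lightAncestors u).map T.rank).map (encodeNat · |>.length)).sum) +
      ((encodeNat k).length + ((T.label M u).gaps.map (encodeNat · |>.length)).sum) := by
    simp [Label.encode, length_encodeList, label, k, add_assoc]
  have hranks_len := sum_length_encodeNat_le ((T.lightAncestors u).map T.rank)
  have hgaps_len := sum_length_encodeNat_le (T.label M u).gaps
  rw [List.length_map] at hranks_len
  rw [show (T.label M u).gaps.length = k by simp [label, k]] at hgaps_len
  have := sum_log_rank_le_log (T := T) u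
  have := length_encodeNat_le (T.depth u)
  have := length_encodeNat_le k
  rw [hlen]
  nlinarith

end Rank

end ParentTree

section BFS

open SimpleGraph

variable {V : Type*} {G : SimpleGraph V}

open scoped Classical in
noncomputable def bfsTree (hG : G.Connected) (r : V) : ParentTree V where
  parent u := if hu : u = r then r else (hG.exists_adj_dist_add_one hu).choose
  root := r
  depth u := G.dist u r
  parent_root := by simp
  depth_root := dist_self
  depth_parent u hu := by simpa [hu] using (hG.exists_adj_dist_add_one hu).choose_spec.2

lemma bfsTree_adj_parent (hG : G.Connected) (r : V) {u : V} (hu : u ≠ (bfsTree hG r).root) :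
    G.Adj u ((bfsTree hG r).parent u) := by
  have hu : u ≠ r := hu
  simpa [bfsTree, hu] using (hG.exists_adj_dist_add_one hu).choose_spec.1

lemma bfsTree_parent_of_adj (hG : G.IsTree) (r : V) {x y : V} (hxy : G.Adj x y) :
    (bfsTree hG.connected r).parent x = y ∨ (bfsTree hG.connected r).parent y = x := by
  set T := bfsTree hG.connected r
  have parent_eq {a b : V} (hab : G.Adj a b) (hd : G.dist b r + 1 = G.dist a r) :
      T.parent a = b := by
    have ha : a ≠ T.root := fun h => by
      simp only [T, bfsTree] at h
      subst h
      simp at hd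
    exact hG.eq_of_adj_of_dist_add_one (bfsTree_adj_parent _ r ha) hab
      (T.depth_parent a ha) hd
  have hx := G.dist_comm (u := x) (v := r)
  have hy := G.dist_comm (u := y) (v := r)
  rcases hG.dist_eq_dist_add_one_of_adj r hxy with h | h
  · exact .inl (parent_eq hxy (by omega))
  · exact .inr (parent_eq hxy.symm (by omega))

theorem dist_eq_treeDist_bfsTree (hG : G.IsTree) (r u v : V) :
    G.dist u v = (bfsTree hG.connected r).treeDist u v :=
  ParentTree.dist_eq_treeDist (fun _ => bfsTree_adj_parent _ r)
    (fun _ _ => bfsTree_parent_of_adj hG r) u v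

end BFS

end TreeLabeling

theorem approximate_tree_distance_upper_bound (ε : ℝ) (hε : 0 < ε) :
    ∃ C : ℝ, 0 < C ∧ ∀ n : ℕ, 2 ≤ n →
      ∃ d : List Bool → List Bool → ℕ,
        ∀ G : SimpleGraph (Fin n), G.IsTree →
          ∃ e : Fin n → List Bool,
            (∀ u : Fin n, ((e u).length : ℝ) ≤ C * Real.logb 2 n) ∧
            ∀ u v : Fin n,
              G.dist u v ≤ d (e u) (e v) ∧
              (d (e u) (e v) : ℝ) ≤ (1 + ε) * (G.dist u v : ℝ) := by
  obtain ⟨M, hM, hεM⟩ := TreeLabeling.exists_nat_two_le_mul hε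
  refine ⟨4 * M + 23, by positivity, fun n hn => ⟨fun x y =>
    TreeLabeling.Label.estimate M (.decode x) (.decode y), fun G hG => ?_⟩⟩
  set T := TreeLabeling.bfsTree hG.connected (⟨0, by omega⟩ : Fin n)
  refine ⟨fun u => (T.label M u).encode, fun u => ?_, fun u v => ?_⟩
  · have hlen := T.length_encode_label_le hM (by simpa using hn) u
    rw [Fintype.card_fin] at hlen
    calc ((T.label M u).encode.length : ℝ) ≤ (4 * M + 23) * (Nat.log 2 n : ℕ) := by
          exact_mod_cast hlen
      _ ≤ (4 * M + 23) * Real.logb 2 n := by gcongr; exact Real.natLog_le_logb n 2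
  · simp only [TreeLabeling.Label.decode_encode]
    rw [TreeLabeling.dist_eq_treeDist_bfsTree hG]
    obtain ⟨hlow, hup⟩ := T.treeDist_le_estimate M u v
    exact ⟨hlow, TreeLabeling.le_one_add_mul_of_mul_le hM hεM hup⟩
end
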